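/- arXiv:1904.01343 — 3 statements merged into one kernel-verified Lean document; each statement's English description precedes it below -/
import Mathlib

section
/- Let P₁, …, Pₖ and Q₁, …, Qₖ be k-tuples of n-dimensional lattice polytopes in ℝⁿ, and assume there is no lattice projection φ: ℝⁿ → ℝᵏ⁻¹ mapping each Pᵢ onto a translate of Δₖ₋₁. Then the tuples P₁, …, Pₖ and Q₁, …, Qₖ are equivalent (up to a common affine unimodular transformation, individual lattice translations, and permutation of the tuple) if and only if their Cayley sums P₁ * ⋯ * Pₖ and Q₁ * ⋯ * Qₖ are equivalent as lattice polytopes. -/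
open Set Pointwise Function

/-- The lattice points of `ℝⁿ` (points with integer coordinates). -/
def intLat (n : ℕ) : Set (Fin n → ℝ) := {x | ∀ i, ∃ m : ℤ, x i = (m : ℝ)}

/-- A lattice polytope: the convex hull of finitely many lattice points. -/
def IsLatticePolytope {n : ℕ} (P : Set (Fin n → ℝ)) : Prop :=
  ∃ V : Finset (Fin n → ℝ), (V : Set (Fin n → ℝ)) ⊆ intLat n ∧
    P = convexHull ℝ (V : Set (Fin n → ℝ))

/-- The standard unimodular simplex `Δₘ = conv(0, e₁, …, eₘ) ⊂ ℝᵐ`. -/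
def unimodSimplex (m : ℕ) : Set (Fin m → ℝ) :=
  convexHull ℝ (insert 0 (Set.range fun i : Fin m => Pi.single i (1 : ℝ)))

/-- The `i`-th Cayley height vector in `ℝ^{k-1}`: `0` for `i = 0`, `e_{i}` otherwise. -/
def cayleyHeight {k : ℕ} (i : Fin k) : Fin (k - 1) → ℝ :=
  fun j => if (j : ℕ) + 1 = (i : ℕ) then 1 else 0

/-- The Cayley sum `P₁ * ⋯ * Pₖ ⊂ ℝᵐ × ℝ^{k-1}`. -/
def cayley {m k : ℕ} (P : Fin k → Set (Fin m → ℝ)) :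
    Set ((Fin m → ℝ) × (Fin (k - 1) → ℝ)) :=
  convexHull ℝ (⋃ i : Fin k, (fun x => (x, cayleyHeight i)) '' P i)

/-- Lattice points of the product space `ℝᵐ × ℝʳ`. -/
def prodLat (m r : ℕ) : Set ((Fin m → ℝ) × (Fin r → ℝ)) :=
  {p | p.1 ∈ intLat m ∧ p.2 ∈ intLat r}

/-- Equivalence of `k`-tuples of lattice polytopes: a permutation, a common affine
lattice-preserving transformation and individual lattice translations. -/
def TupleEquiv {n k : ℕ} (P Q : Fin k → Set (Fin n → ℝ)) : Prop :=
  ∃ σ : Equiv.Perm (Fin k), ∃ U : (Fin n → ℝ) ≃ᵃ[ℝ] (Fin n → ℝ),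
    (U : (Fin n → ℝ) → (Fin n → ℝ)) '' intLat n = intLat n ∧
    ∃ t : Fin k → (Fin n → ℤ),
      ∀ i, P i = (fun x => U x + fun j => ((t i j : ℝ))) '' Q (σ i)

-- ====== auxiliary development ======
namespace CayleyAux

variable {n m : ℕ}

lemma intLat_iff {x : Fin m → ℝ} : x ∈ intLat m ↔ ∃ g : Fin m → ℤ, x = fun i => (g i : ℝ) := by
  constructor
  · intro h
    choose g hg using h
    exact ⟨g, funext hg⟩
  · rintro ⟨g, rfl⟩ i; exact ⟨g i, rfl⟩

lemma intLat_zero : (0 : Fin m → ℝ) ∈ intLat m := fun i => ⟨0, by simp⟩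

lemma intLat_add {x y : Fin m → ℝ} (hx : x ∈ intLat m) (hy : y ∈ intLat m) :
    x + y ∈ intLat m := by
  intro i
  obtain ⟨a, ha⟩ := hx i; obtain ⟨b, hb⟩ := hy i
  exact ⟨a + b, by simp [ha, hb]⟩

lemma intLat_sub {x y : Fin m → ℝ} (hx : x ∈ intLat m) (hy : y ∈ intLat m) :
    x - y ∈ intLat m := by
  intro i
  obtain ⟨a, ha⟩ := hx i; obtain ⟨b, hb⟩ := hy i
  exact ⟨a - b, by simp [ha, hb]⟩

lemma intLat_neg {x : Fin m → ℝ} (hx : x ∈ intLat m) : -x ∈ intLat m := by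
  intro i; obtain ⟨a, ha⟩ := hx i; exact ⟨-a, by simp [ha]⟩

lemma intLat_zsmul {x : Fin m → ℝ} (g : ℤ) (hx : x ∈ intLat m) :
    (g : ℝ) • x ∈ intLat m := by
  intro i; obtain ⟨a, ha⟩ := hx i
  exact ⟨g * a, by simp [ha]⟩

lemma intLat_sum {α : Type*} {t : Finset α} {f : α → Fin m → ℝ}
    (h : ∀ a ∈ t, f a ∈ intLat m) : (∑ a ∈ t, f a) ∈ intLat m := by
  classical
  exact Finset.sum_induction f (· ∈ intLat m) (fun a b ha hb => intLat_add ha hb) intLat_zero h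

/-- barycentric coordinate functions on `ℝᵐ` w.r.t. the unimodular simplex. -/
noncomputable def bary (i : Fin (m + 1)) (y : Fin m → ℝ) : ℝ :=
  if h : i = 0 then 1 - ∑ j, y j else y (i.pred h)

lemma bary_zero_left (y : Fin m → ℝ) : bary 0 y = 1 - ∑ j, y j := by simp [bary]

lemma bary_succ (j : Fin m) (y : Fin m → ℝ) : bary j.succ y = y j := by
  simp [bary, Fin.succ_ne_zero]

lemma sum_bary (y : Fin m → ℝ) : ∑ i : Fin (m + 1), bary i y = 1 := by
  rw [Fin.sum_univ_succ]
  simp [bary_zero_left, bary_succ]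

lemma ch_zero : cayleyHeight (0 : Fin (m + 1)) = (0 : Fin m → ℝ) := by
  funext j
  simp [cayleyHeight]

lemma ch_succ (j : Fin m) : cayleyHeight (j.succ : Fin (m+1)) = Pi.single j (1 : ℝ) := by
  funext j'
  simp only [cayleyHeight, Fin.val_succ, Pi.single_apply]
  by_cases h : j' = j <;> simp [h, Fin.val_eq_val]

lemma bary_ch (i i' : Fin (m + 1)) :
    bary i (cayleyHeight i') = if i = i' then 1 else 0 := by
  induction i using Fin.cases with
  | zero =>
    rw [bary_zero_left]
    induction i' using Fin.cases with
    | zero => simp [ch_zero]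
    | succ j' => simp [ch_succ, Finset.sum_pi_single, (Fin.succ_ne_zero j').symm]
  | succ j =>
    rw [bary_succ]
    induction i' using Fin.cases with
    | zero => simp [ch_zero, Fin.succ_ne_zero j]
    | succ j' =>
      by_cases h : j = j' <;> simp [ch_succ, Pi.single_apply, Fin.succ_inj, h]

lemma ch_injective : Injective (cayleyHeight (k := m + 1)) := by
  intro a b hab
  have h := bary_ch a b
  rw [← hab, bary_ch a a] at h
  simp only [if_pos rfl] at h
  by_contra hne
  rw [if_neg hne] at h
  norm_num at h

lemma range_ch :
    Set.range (cayleyHeight (k := m + 1)) =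
      insert 0 (Set.range fun j : Fin m => Pi.single j (1 : ℝ)) := by
  ext y
  constructor
  · rintro ⟨i, rfl⟩
    induction i using Fin.cases with
    | zero => left; exact ch_zero
    | succ j => right; exact ⟨j, (ch_succ j).symm⟩
  · rintro (rfl | ⟨j, rfl⟩)
    · exact ⟨0, ch_zero⟩
    · exact ⟨j.succ, ch_succ j⟩

lemma unimod_eq_ch :
    unimodSimplex m = convexHull ℝ (Set.range (cayleyHeight (k := m + 1))) := by
  rw [range_ch]; rfl

lemma ch_mem_intLat (i : Fin (m + 1)) : cayleyHeight i ∈ intLat m := by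
  intro j
  by_cases h : (j : ℕ) + 1 = (i : ℕ)
  · exact ⟨1, by simp [cayleyHeight, h]⟩
  · exact ⟨0, by simp [cayleyHeight, h]⟩

lemma ch_mem_unimod (i : Fin (m + 1)) : cayleyHeight i ∈ unimodSimplex m := by
  rw [unimod_eq_ch]
  exact subset_convexHull ℝ _ ⟨i, rfl⟩

lemma mem_unimod_bounds {y : Fin m → ℝ} (hy : y ∈ unimodSimplex m) :
    (∀ j, 0 ≤ y j) ∧ ∑ j, y j ≤ 1 := by
  have hconv : Convex ℝ {y : Fin m → ℝ | (∀ j, 0 ≤ y j) ∧ ∑ j, y j ≤ 1} := by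
    intro a ha b hb s t hs ht hst
    constructor
    · intro j
      have := add_nonneg (mul_nonneg hs (ha.1 j)) (mul_nonneg ht (hb.1 j))
      simpa using this
    · have : ∑ j, (s * a j + t * b j) = s * ∑ j, a j + t * ∑ j, b j := by
        rw [Finset.sum_add_distrib, ← Finset.mul_sum, ← Finset.mul_sum]
      calc ∑ j, (s • a + t • b) j = ∑ j, (s * a j + t * b j) := by simp
        _ = s * ∑ j, a j + t * ∑ j, b j := this
        _ ≤ s * 1 + t * 1 := by
            gcongr
            exacts [ha.2, hb.2]
        _ = 1 := by linarith
  have hsub : unimodSimplex m ⊆ {y : Fin m → ℝ | (∀ j, 0 ≤ y j) ∧ ∑ j, y j ≤ 1} := by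
    apply convexHull_min _ hconv
    rintro z (rfl | ⟨j, rfl⟩)
    · exact ⟨fun j => le_refl 0, by simp⟩
    · constructor
      · intro j'
        simp only [Pi.single_apply]
        split <;> norm_num
      · simp [Finset.sum_pi_single]
  exact hsub hy

lemma lat_unimod {y : Fin m → ℝ} (hy : y ∈ unimodSimplex m) (hlat : y ∈ intLat m) :
    ∃ i : Fin (m + 1), y = cayleyHeight i := by
  obtain ⟨g, rfl⟩ := intLat_iff.1 hlat
  obtain ⟨hpos, hsum⟩ := mem_unimod_bounds hy
  by_cases hz : ∀ j, g j = 0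
  · refine ⟨0, ?_⟩
    rw [ch_zero]
    funext j
    simp [hz j]
  · push_neg at hz
    obtain ⟨j, hj⟩ := hz
    have hgpos : ∀ j', (0 : ℤ) ≤ g j' := by
      intro j'
      have := hpos j'
      exact_mod_cast this
    have hj1 : (1 : ℤ) ≤ g j := lt_of_le_of_ne (hgpos j) (Ne.symm hj)
    -- the rest of the sum is zero
    have hsplit : (g j : ℝ) + ∑ j' ∈ Finset.univ.erase j, (g j' : ℝ) = ∑ j', (g j' : ℝ) :=
      Finset.add_sum_erase Finset.univ (fun j' => (g j' : ℝ)) (Finset.mem_univ j)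
    have herased : ∑ j' ∈ Finset.univ.erase j, (g j' : ℝ) = 0 := by
      have h1 : ∑ j' ∈ Finset.univ.erase j, (g j' : ℝ) ≤ 1 - (g j : ℝ) := by linarith
      have h2 : (1 : ℝ) ≤ (g j : ℝ) := by exact_mod_cast hj1
      have h3 : (0 : ℝ) ≤ ∑ j' ∈ Finset.univ.erase j, (g j' : ℝ) :=
        Finset.sum_nonneg fun j' _ => hpos j'
      linarith
    have hzero : ∀ j' ∈ Finset.univ.erase j, (g j' : ℝ) = 0 := by
      rw [← Finset.sum_eq_zero_iff_of_nonneg (fun j' _ => hpos j')]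
      exact herased
    have hgj : (g j : ℝ) = 1 := by
      have h2 : (1 : ℝ) ≤ (g j : ℝ) := by exact_mod_cast hj1
      have := hsum
      rw [← hsplit, herased] at this
      linarith
    refine ⟨j.succ, ?_⟩
    rw [ch_succ]
    funext j'
    rw [Pi.single_apply]
    by_cases h : j' = j
    · simp [h, hgj]
    · simp only [if_neg h]
      exact hzero j' (Finset.mem_erase.2 ⟨h, Finset.mem_univ j'⟩)

end CayleyAux
namespace CayleyAux

variable {n m : ℕ}

lemma bary_sum {α : Type*} (i : Fin (m + 1)) (t : Finset α) (w : α → ℝ) (z : α → Fin m → ℝ)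
    (hw : ∑ a ∈ t, w a = 1) :
    bary i (∑ a ∈ t, w a • z a) = ∑ a ∈ t, w a * bary i (z a) := by
  induction i using Fin.cases with
  | zero =>
    rw [bary_zero_left]
    have h1 : ∑ j, (∑ a ∈ t, w a • z a) j = ∑ a ∈ t, w a * ∑ j, z a j := by
      simp only [Finset.sum_apply, Pi.smul_apply, smul_eq_mul, Finset.mul_sum]
      exact Finset.sum_comm
    have h2 : ∑ a ∈ t, w a * bary 0 (z a) = ∑ a ∈ t, (w a - w a * ∑ j, z a j) := by
      apply Finset.sum_congr rfl
      intro a _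
      rw [bary_zero_left]; ring
    rw [h1, h2, Finset.sum_sub_distrib, hw]
  | succ j =>
    rw [bary_succ]
    have : (∑ a ∈ t, w a • z a) j = ∑ a ∈ t, w a * z a j := by
      rw [Finset.sum_apply]; rfl
    rw [this]
    apply Finset.sum_congr rfl
    intro a _
    rw [bary_succ]

-- bound on bary over the simplex, and extremality
lemma bary_le_one {y : Fin m → ℝ} (hy : y ∈ unimodSimplex m) (i : Fin (m + 1)) :
    bary i y ≤ 1 ∧ 0 ≤ bary i y ∧ (bary i y = 1 → y = cayleyHeight i) := by
  obtain ⟨hpos, hsum⟩ := mem_unimod_bounds hy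
  induction i using Fin.cases with
  | zero =>
    rw [bary_zero_left, ch_zero]
    have h0 : 0 ≤ ∑ j, y j := Finset.sum_nonneg fun j _ => hpos j
    refine ⟨by linarith, by linarith, ?_⟩
    intro h1
    have hs0 : ∑ j, y j = 0 := by linarith
    have := (Finset.sum_eq_zero_iff_of_nonneg (fun j _ => hpos j)).1 hs0
    funext j
    simpa using this j (Finset.mem_univ j)
  | succ j =>
    rw [bary_succ, ch_succ]
    have hsplit : y j + ∑ j' ∈ Finset.univ.erase j, y j' = ∑ j', y j' :=
      Finset.add_sum_erase Finset.univ y (Finset.mem_univ j)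
    have h3 : (0 : ℝ) ≤ ∑ j' ∈ Finset.univ.erase j, y j' :=
      Finset.sum_nonneg fun j' _ => hpos j'
    refine ⟨by linarith, hpos j, ?_⟩
    intro h1
    have herased : ∑ j' ∈ Finset.univ.erase j, y j' = 0 := by linarith
    have hzero := (Finset.sum_eq_zero_iff_of_nonneg (fun j' _ => hpos j')).1 herased
    funext j'
    rw [Pi.single_apply]
    by_cases h : j' = j
    · rw [if_pos h, h, h1]
    · rw [if_neg h]
      exact hzero j' (Finset.mem_erase.2 ⟨h, Finset.mem_univ j'⟩)

/-- if the convex hull of `B` is the unimodular simplex then `B` contains all its vertices. -/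
lemma vertex_extract {B : Set (Fin m → ℝ)} (hB : convexHull ℝ B = unimodSimplex m) :
    Set.range (cayleyHeight (k := m + 1)) ⊆ B := by
  rintro - ⟨i, rfl⟩
  have hmem : cayleyHeight i ∈ convexHull ℝ B := by rw [hB]; exact ch_mem_unimod i
  rw [convexHull_eq] at hmem
  obtain ⟨ι, t, w, z, hw0, hw1, hz, hcm⟩ := hmem
  rw [Finset.centerMass_eq_of_sum_1 _ _ hw1] at hcm
  have hBsub : B ⊆ unimodSimplex m := by
    rw [← hB]; exact subset_convexHull ℝ B
  have key : ∑ a ∈ t, w a * (1 - bary i (z a)) = 0 := by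
    have h1 : bary i (cayleyHeight i) = 1 := by rw [bary_ch]; simp
    have h2 : bary i (∑ a ∈ t, w a • z a) = ∑ a ∈ t, w a * bary i (z a) :=
      bary_sum i t w z hw1
    rw [hcm, h1] at h2
    have : ∑ a ∈ t, w a * (1 - bary i (z a)) = (∑ a ∈ t, w a) - ∑ a ∈ t, w a * bary i (z a) := by
      rw [← Finset.sum_sub_distrib]
      apply Finset.sum_congr rfl
      intro a _; ring
    rw [this, hw1, ← h2]
    ring
  have hterms : ∀ a ∈ t, w a * (1 - bary i (z a)) = 0 := by
    rw [← Finset.sum_eq_zero_iff_of_nonneg]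
    · exact key
    · intro a ha
      have := (bary_le_one (hBsub (hz a ha)) i).1
      have hw := hw0 a ha
      nlinarith
  obtain ⟨a, ha, hwa⟩ : ∃ a ∈ t, w a ≠ 0 := by
    apply Finset.exists_ne_zero_of_sum_ne_zero
    rw [hw1]; norm_num
  have : bary i (z a) = 1 := by
    have := hterms a ha
    rcases mul_eq_zero.1 this with h | h
    · exact absurd h hwa
    · linarith
  have := (bary_le_one (hBsub (hz a ha)) i).2.2 this
  rw [← this]
  exact hz a ha

end CayleyAux
namespace CayleyAux

variable {n m : ℕ}

lemma mem_cayley {P : Fin (m+1) → Set (Fin n → ℝ)} {x : Fin n → ℝ} {i : Fin (m+1)}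
    (hx : x ∈ P i) : ((x, cayleyHeight i) : (Fin n → ℝ) × (Fin m → ℝ)) ∈ cayley P :=
  subset_convexHull ℝ _ (Set.mem_iUnion.2 ⟨i, ⟨x, hx, rfl⟩⟩)

lemma cayley_snd {P : Fin (m+1) → Set (Fin n → ℝ)}
    {p : (Fin n → ℝ) × (Fin m → ℝ)} (hp : p ∈ cayley P) : p.2 ∈ unimodSimplex m := by
  have : cayley P ⊆ {p : (Fin n → ℝ) × (Fin m → ℝ) | p.2 ∈ unimodSimplex m} := by
    apply convexHull_min
    · rintro q hq
      rw [Set.mem_iUnion] at hq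
      obtain ⟨i, x, hx, rfl⟩ := hq
      exact ch_mem_unimod i
    · intro q hq r hr a b ha hb hab
      show (a • q + b • r).2 ∈ unimodSimplex m
      have : (a • q + b • r).2 = a • q.2 + b • r.2 := rfl
      rw [this]
      exact (convex_convexHull ℝ _) hq hr ha hb hab
  exact this hp

lemma cayley_fiber {P : Fin (m+1) → Set (Fin n → ℝ)} (hconv : ∀ i, Convex ℝ (P i))
    {x : Fin n → ℝ} {i₀ : Fin (m+1)}
    (hx : ((x, cayleyHeight i₀) : (Fin n → ℝ) × (Fin m → ℝ)) ∈ cayley P) : x ∈ P i₀ := by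
  classical
  rw [cayley, convexHull_eq] at hx
  obtain ⟨ι, t, w, z, hw0, hw1, hz, hcm⟩ := hx
  rw [Finset.centerMass_eq_of_sum_1 _ _ hw1] at hcm
  have hdec : ∀ a ∈ t, ∃ i : Fin (m+1), ∃ p ∈ P i, z a = (p, cayleyHeight i) := by
    intro a ha
    obtain ⟨s, hs⟩ := Set.mem_iUnion.1 (hz a ha)
    obtain ⟨p, hp, hpe⟩ := hs
    exact ⟨s, p, hp, hpe.symm⟩
  choose g p hp hz2 using hdec
  -- second coordinate analysis
  have hsnd : cayleyHeight i₀ = ∑ a ∈ t.attach, w a.1 • cayleyHeight (g a.1 a.2) := by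
    have h1 : cayleyHeight (k := m+1) i₀ = ∑ c ∈ t, (w c • z c).2 := by
      rw [← Prod.snd_sum, hcm]
    rw [h1, ← Finset.sum_attach t (fun a => (w a • z a).2)]
    apply Finset.sum_congr rfl
    intro a _
    rw [hz2 a.1 a.2]
    rfl
  have hw1' : ∑ a ∈ t.attach, w a.1 = 1 := by rw [Finset.sum_attach]; exact hw1
  have hbar : (1 : ℝ) = ∑ a ∈ t.attach, w a.1 * bary i₀ (cayleyHeight (g a.1 a.2)) := by
    have := bary_sum i₀ t.attach (fun a => w a.1) (fun a => cayleyHeight (g a.1 a.2)) hw1'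
    rw [← hsnd] at this
    rw [← this, bary_ch]
    simp
  have hterms : ∀ a ∈ t.attach, w a.1 * (1 - bary i₀ (cayleyHeight (g a.1 a.2))) = 0 := by
    rw [← Finset.sum_eq_zero_iff_of_nonneg]
    · have : ∑ a ∈ t.attach, w a.1 * (1 - bary i₀ (cayleyHeight (g a.1 a.2)))
          = (∑ a ∈ t.attach, w a.1) - ∑ a ∈ t.attach, w a.1 * bary i₀ (cayleyHeight (g a.1 a.2)) := by
        rw [← Finset.sum_sub_distrib]
        apply Finset.sum_congr rfl
        intro a _; ring
      rw [this, hw1', ← hbar]; ring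
    · intro a _
      have hwa := hw0 a.1 a.2
      have : bary i₀ (cayleyHeight (g a.1 a.2)) ≤ 1 := by
        rw [bary_ch]; split <;> norm_num
      nlinarith
  have hkey : ∀ a : {x // x ∈ t}, w a.1 ≠ 0 → g a.1 a.2 = i₀ := by
    intro a hwa
    have := hterms a (Finset.mem_attach t a)
    rcases mul_eq_zero.1 this with h | h
    · exact absurd h hwa
    · rw [bary_ch] at h
      by_contra hne
      rw [if_neg (Ne.symm hne)] at h
      norm_num at h
  -- first coordinate
  have hfst : x = ∑ a ∈ t.attach, w a.1 • p a.1 a.2 := by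
    have h1 : x = ∑ c ∈ t, (w c • z c).1 := by
      rw [← Prod.fst_sum, hcm]
    rw [h1, ← Finset.sum_attach t (fun a => (w a • z a).1)]
    apply Finset.sum_congr rfl
    intro a _
    rw [hz2 a.1 a.2]
    rfl
  set t' := t.attach.filter (fun a => w a.1 ≠ 0) with ht'
  have hsum_t' : ∑ a ∈ t', w a.1 = 1 := by
    rw [ht', Finset.sum_filter_of_ne (by intro a _ h; exact h), hw1']
  have hx_t' : x = ∑ a ∈ t', w a.1 • p a.1 a.2 := by
    rw [hfst, ht', Finset.sum_filter_of_ne]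
    intro a _ h
    intro hw
    apply h
    rw [hw, zero_smul]
  rw [hx_t']
  apply (hconv i₀).sum_mem
  · intro a ha; exact hw0 a.1 a.2
  · exact hsum_t'
  · intro a ha
    have hwa : w a.1 ≠ 0 := (Finset.mem_filter.1 ha).2
    rw [← hkey a hwa]
    exact hp a.1 a.2

/-- the affine embedding `x ↦ (x, c)`. -/
noncomputable def embA (c : Fin m → ℝ) : (Fin n → ℝ) →ᵃ[ℝ] ((Fin n → ℝ) × (Fin m → ℝ)) where
  toFun := fun x => (x, c)
  linear := LinearMap.inl ℝ _ _
  map_vadd' := by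
    intro p v
    apply Prod.ext <;> simp

/-- second projection as affine map. -/
noncomputable def sndA : ((Fin n → ℝ) × (Fin m → ℝ)) →ᵃ[ℝ] (Fin m → ℝ) :=
  (LinearMap.snd ℝ (Fin n → ℝ) (Fin m → ℝ)).toAffineMap

@[simp] lemma sndA_apply (p : (Fin n → ℝ) × (Fin m → ℝ)) : sndA p = p.2 := rfl

@[simp] lemma embA_apply (c : Fin m → ℝ) (x : Fin n → ℝ) : embA (n := n) c x = (x, c) := rfl

lemma image_cayley {P : Fin (m+1) → Set (Fin n → ℝ)} {N : Type*} [AddCommGroup N] [Module ℝ N]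
    (f : ((Fin n → ℝ) × (Fin m → ℝ)) →ᵃ[ℝ] N) :
    f '' cayley P = convexHull ℝ (⋃ i, (fun x => f (x, cayleyHeight (k := m+1) i)) '' P i) := by
  rw [cayley]
  have h := AffineMap.image_convexHull f
    (⋃ i, (fun x => ((x, cayleyHeight (k := m+1) i) : (Fin n → ℝ) × (Fin m → ℝ))) '' P i)
  simp only [Set.image_iUnion, Set.image_image] at h
  exact h

end CayleyAux
namespace CayleyAux

variable {n m : ℕ}

/-- linear part of the barycentric coordinate. -/
noncomputable def baryL (i : Fin (m + 1)) : (Fin m → ℝ) →ₗ[ℝ] ℝ :=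
  if h : i = 0 then -(∑ j, LinearMap.proj j) else LinearMap.proj (i.pred h)

lemma baryL_zero_left (y : Fin m → ℝ) : baryL 0 y = -(∑ j, y j) := by
  simp [baryL, LinearMap.sum_apply]

lemma baryL_succ (j : Fin m) (y : Fin m → ℝ) : baryL j.succ y = y j := by
  simp [baryL, Fin.succ_ne_zero]

lemma bary_add (i : Fin (m + 1)) (v p : Fin m → ℝ) :
    bary i (v + p) = baryL i v + bary i p := by
  induction i using Fin.cases with
  | zero => rw [bary_zero_left, bary_zero_left, baryL_zero_left]
            simp only [Pi.add_apply, Finset.sum_add_distrib]; ring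
  | succ j => rw [bary_succ, bary_succ, baryL_succ]; rfl

lemma sum_baryL (y : Fin m → ℝ) : ∑ i : Fin (m + 1), baryL i y = 0 := by
  rw [Fin.sum_univ_succ]
  simp [baryL_zero_left, baryL_succ]

lemma bary_int {y : Fin m → ℝ} (hy : y ∈ intLat m) (i : Fin (m + 1)) :
    ∃ c : ℤ, bary i y = (c : ℝ) := by
  obtain ⟨g, rfl⟩ := intLat_iff.1 hy
  induction i using Fin.cases with
  | zero =>
    refine ⟨1 - ∑ j, g j, ?_⟩
    rw [bary_zero_left]
    push_cast
    ring
  | succ j => exact ⟨g j, bary_succ j _⟩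

/-- the affine change of coordinates permuting the vertices of the simplex. -/
noncomputable def permFun (ρ : Equiv.Perm (Fin (m + 1))) (y : Fin m → ℝ) : Fin m → ℝ :=
  fun j => bary (ρ.symm j.succ) y

noncomputable def permL (ρ : Equiv.Perm (Fin (m + 1))) : (Fin m → ℝ) →ₗ[ℝ] (Fin m → ℝ) :=
  LinearMap.pi (fun j => baryL (ρ.symm j.succ))

@[simp] lemma permL_apply (ρ : Equiv.Perm (Fin (m + 1))) (y : Fin m → ℝ) (j : Fin m) :
    permL ρ y j = baryL (ρ.symm j.succ) y := rfl

lemma baryL_perm (ρ : Equiv.Perm (Fin (m + 1))) (i : Fin (m + 1)) (y : Fin m → ℝ) :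
    baryL i (permL ρ y) = baryL (ρ.symm i) y := by
  induction i using Fin.cases with
  | zero =>
    rw [baryL_zero_left]
    have h1 : ∑ j : Fin m, permL ρ y j = ∑ j : Fin m, baryL (ρ.symm j.succ) y := rfl
    have h2 : ∑ i : Fin (m+1), baryL (ρ.symm i) y = 0 := by
      rw [Equiv.sum_comp ρ.symm (fun i => baryL i y)]
      exact sum_baryL y
    have h3 : baryL (ρ.symm 0) y + ∑ j : Fin m, baryL (ρ.symm j.succ) y = 0 := by
      rw [← h2, Fin.sum_univ_succ]
    rw [h1]
    linarith
  | succ j => rw [baryL_succ]; rfl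

lemma bary_perm (ρ : Equiv.Perm (Fin (m + 1))) (i : Fin (m + 1)) (y : Fin m → ℝ) :
    bary i (permFun ρ y) = bary (ρ.symm i) y := by
  induction i using Fin.cases with
  | zero =>
    rw [bary_zero_left]
    have h2 : ∑ i : Fin (m+1), bary (ρ.symm i) y = 1 := by
      rw [Equiv.sum_comp ρ.symm (fun i => bary i y)]
      exact sum_bary y
    have h3 : bary (ρ.symm 0) y + ∑ j : Fin m, bary (ρ.symm j.succ) y = 1 := by
      rw [← h2, Fin.sum_univ_succ]
    have h1 : ∑ j : Fin m, permFun ρ y j = ∑ j : Fin m, bary (ρ.symm j.succ) y := rfl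
    rw [h1]
    linarith
  | succ j => rw [bary_succ]; rfl

lemma permFun_comp (ρ ρ' : Equiv.Perm (Fin (m + 1))) (y : Fin m → ℝ) :
    permFun ρ (permFun ρ' y) = permFun (ρ'.trans ρ) y := by
  funext j
  show bary (ρ.symm j.succ) (permFun ρ' y) = bary ((ρ'.trans ρ).symm j.succ) y
  rw [bary_perm]
  rfl

lemma permFun_id (y : Fin m → ℝ) : permFun (Equiv.refl (Fin (m+1))) y = y := by
  funext j
  show bary j.succ y = y j
  exact bary_succ j y

lemma permFun_inv (ρ : Equiv.Perm (Fin (m + 1))) (y : Fin m → ℝ) :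
    permFun ρ (permFun ρ.symm y) = y := by
  rw [permFun_comp]
  have : (ρ.symm.trans ρ) = Equiv.refl (Fin (m+1)) := by
    ext x; simp
  rw [this, permFun_id]

lemma permL_comp (ρ ρ' : Equiv.Perm (Fin (m + 1))) (y : Fin m → ℝ) :
    permL ρ (permL ρ' y) = permL (ρ'.trans ρ) y := by
  funext j
  show baryL (ρ.symm j.succ) (permL ρ' y) = baryL ((ρ'.trans ρ).symm j.succ) y
  rw [baryL_perm]
  rfl

lemma permL_id (y : Fin m → ℝ) : permL (Equiv.refl (Fin (m+1))) y = y := by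
  funext j
  exact baryL_succ j y

lemma permL_inv (ρ : Equiv.Perm (Fin (m + 1))) (y : Fin m → ℝ) :
    permL ρ (permL ρ.symm y) = y := by
  rw [permL_comp]
  have : (ρ.symm.trans ρ) = Equiv.refl (Fin (m+1)) := by ext x; simp
  rw [this, permL_id]

lemma permFun_vadd (ρ : Equiv.Perm (Fin (m + 1))) (v p : Fin m → ℝ) :
    permFun ρ (v + p) = permL ρ v + permFun ρ p := by
  funext j
  show bary (ρ.symm j.succ) (v + p) = baryL (ρ.symm j.succ) v + bary (ρ.symm j.succ) p
  exact bary_add _ v p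

lemma ch_apply (i : Fin (m+1)) (j : Fin m) :
    cayleyHeight i j = if j.succ = i then 1 else 0 := by
  have : ((j.succ : Fin (m+1)) = i) ↔ ((j : ℕ) + 1 = (i : ℕ)) := by
    rw [Fin.ext_iff, Fin.val_succ]
  simp only [cayleyHeight, this]

lemma permFun_ch (ρ : Equiv.Perm (Fin (m + 1))) (i : Fin (m+1)) :
    permFun ρ (cayleyHeight i) = cayleyHeight (ρ i) := by
  funext j
  show bary (ρ.symm j.succ) (cayleyHeight i) = _
  rw [bary_ch, ch_apply]
  by_cases h : j.succ = ρ i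
  · rw [if_pos h, if_pos]
    rw [h]; simp
  · rw [if_neg h, if_neg]
    intro hc
    apply h
    rw [← hc]; simp

lemma permFun_int (ρ : Equiv.Perm (Fin (m + 1))) {y : Fin m → ℝ} (hy : y ∈ intLat m) :
    permFun ρ y ∈ intLat m := by
  intro j
  exact bary_int hy _

/-- affine combination map sending simplex vertices to prescribed vectors. -/
noncomputable def combFun (tt : Fin (m+1) → Fin n → ℝ) (y : Fin m → ℝ) : Fin n → ℝ :=
  ∑ i, bary i y • tt i

noncomputable def combL (tt : Fin (m+1) → Fin n → ℝ) : (Fin m → ℝ) →ₗ[ℝ] (Fin n → ℝ) where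
  toFun y := ∑ i, baryL i y • tt i
  map_add' y z := by
    show (∑ i, baryL i (y + z) • tt i) = (∑ i, baryL i y • tt i) + ∑ i, baryL i z • tt i
    rw [← Finset.sum_add_distrib]
    apply Finset.sum_congr rfl
    intro i _
    rw [map_add, add_smul]
  map_smul' c y := by
    show (∑ i, baryL i (c • y) • tt i) = c • ∑ i, baryL i y • tt i
    rw [Finset.smul_sum]
    apply Finset.sum_congr rfl
    intro i _
    rw [map_smul, smul_eq_mul, smul_smul]

lemma combFun_vadd (tt : Fin (m+1) → Fin n → ℝ) (v p : Fin m → ℝ) :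
    combFun tt (v + p) = combL tt v + combFun tt p := by
  show (∑ i, bary i (v + p) • tt i) = (∑ i, baryL i v • tt i) + ∑ i, bary i p • tt i
  rw [← Finset.sum_add_distrib]
  apply Finset.sum_congr rfl
  intro i _
  rw [bary_add, add_smul]

lemma combFun_ch (tt : Fin (m+1) → Fin n → ℝ) (i : Fin (m+1)) :
    combFun tt (cayleyHeight i) = tt i := by
  show (∑ i', bary i' (cayleyHeight i) • tt i') = tt i
  have : ∀ i', bary i' (cayleyHeight i) • tt i' = if i' = i then tt i' else 0 := by
    intro i'
    rw [bary_ch]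
    split <;> simp
  rw [Finset.sum_congr rfl (fun i' _ => this i')]
  simp

lemma combFun_int (tt : Fin (m+1) → Fin n → ℝ) (htt : ∀ i, tt i ∈ intLat n)
    {y : Fin m → ℝ} (hy : y ∈ intLat m) : combFun tt y ∈ intLat n := by
  apply intLat_sum
  intro i _
  obtain ⟨c, hc⟩ := bary_int hy i
  rw [hc]
  exact intLat_zsmul c (htt i)

/-- helper: value of affine equivalence via its linear part. -/
lemma affine_apply_eq (U : (Fin n → ℝ) ≃ᵃ[ℝ] (Fin n → ℝ)) (x : Fin n → ℝ) :
    U x = U.linear x + U 0 := by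
  have := U.toAffineMap.map_vadd 0 x
  simpa using this

/-- the master equivalence `(x, y) ↦ (U x + comb tt y, perm ρ y)`. -/
noncomputable def masterL (U : (Fin n → ℝ) ≃ᵃ[ℝ] (Fin n → ℝ)) (ρ : Equiv.Perm (Fin (m+1)))
    (tt : Fin (m+1) → Fin n → ℝ) :
    ((Fin n → ℝ) × (Fin m → ℝ)) ≃ₗ[ℝ] ((Fin n → ℝ) × (Fin m → ℝ)) :=
  LinearEquiv.ofLinear
    (LinearMap.prod
      (U.linear.toLinearMap.comp (LinearMap.fst ℝ _ _) + (combL tt).comp (LinearMap.snd ℝ _ _))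
      ((permL ρ).comp (LinearMap.snd ℝ _ _)))
    (LinearMap.prod
      (U.linear.symm.toLinearMap.comp
        ((LinearMap.fst ℝ _ _) - (combL tt).comp ((permL ρ.symm).comp (LinearMap.snd ℝ _ _))))
      ((permL ρ.symm).comp (LinearMap.snd ℝ _ _)))
    (by
      apply LinearMap.ext
      intro p
      apply Prod.ext
      · show U.linear (U.linear.symm (p.1 - combL tt (permL ρ.symm p.2))) + combL tt (permL ρ.symm p.2) = p.1
        rw [LinearEquiv.apply_symm_apply]
        abel
      · show permL ρ (permL ρ.symm p.2) = p.2
        exact permL_inv ρ p.2)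
    (by
      apply LinearMap.ext
      intro p
      apply Prod.ext
      · show U.linear.symm ((U.linear p.1 + combL tt p.2) - combL tt (permL ρ.symm (permL ρ p.2))) = p.1
        have : permL ρ.symm (permL ρ p.2) = p.2 := by
          have := permL_inv ρ.symm p.2
          simpa using this
        rw [this, add_sub_cancel_right]
        exact U.linear.symm_apply_apply p.1
      · show permL ρ.symm (permL ρ p.2) = p.2
        have := permL_inv ρ.symm p.2
        simpa using this)

noncomputable def master (U : (Fin n → ℝ) ≃ᵃ[ℝ] (Fin n → ℝ)) (ρ : Equiv.Perm (Fin (m+1)))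
    (tt : Fin (m+1) → Fin n → ℝ) :
    ((Fin n → ℝ) × (Fin m → ℝ)) ≃ᵃ[ℝ] ((Fin n → ℝ) × (Fin m → ℝ)) :=
  AffineEquiv.mk' (fun p => (U p.1 + combFun tt p.2, permFun ρ p.2)) (masterL U ρ tt) 0
    (by
      intro p
      apply Prod.ext
      · show U p.1 + combFun tt p.2
            = (U.linear (p.1 - 0) + combL tt (p.2 - 0)) + (U 0 + combFun tt 0)
        rw [sub_zero, sub_zero]
        have h1 : U p.1 = U.linear p.1 + U 0 := affine_apply_eq U p.1
        have h2 : combFun tt p.2 = combL tt p.2 + combFun tt 0 := by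
          have := combFun_vadd tt p.2 0
          rw [add_zero] at this
          rw [this]
        rw [h1, h2]
        abel
      · show permFun ρ p.2 = permL ρ (p.2 - 0) + permFun ρ 0
        rw [sub_zero]
        have := permFun_vadd ρ p.2 0
        rw [add_zero] at this
        rw [this])

@[simp] lemma master_apply (U : (Fin n → ℝ) ≃ᵃ[ℝ] (Fin n → ℝ)) (ρ : Equiv.Perm (Fin (m+1)))
    (tt : Fin (m+1) → Fin n → ℝ) (p : (Fin n → ℝ) × (Fin m → ℝ)) :
    master U ρ tt p = (U p.1 + combFun tt p.2, permFun ρ p.2) := rfl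

end CayleyAux
namespace CayleyAux

variable {n m : ℕ}

lemma image_symm_of_image {E F : Type*} [AddCommGroup E] [Module ℝ E]
    [AddCommGroup F] [Module ℝ F]
    (e : E ≃ᵃ[ℝ] F) {A : Set E} {B : Set F} (h : e '' A = B) : e.symm '' B = A := by
  rw [← h, Set.image_image]
  simp

lemma master_symm_apply (U : (Fin n → ℝ) ≃ᵃ[ℝ] (Fin n → ℝ)) (ρ : Equiv.Perm (Fin (m+1)))
    (tt : Fin (m+1) → Fin n → ℝ) (r : (Fin n → ℝ) × (Fin m → ℝ)) :
    (master U ρ tt).symm r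
      = (U.symm (r.1 - combFun tt (permFun ρ.symm r.2)), permFun ρ.symm r.2) := by
  have key : master U ρ tt (U.symm (r.1 - combFun tt (permFun ρ.symm r.2)), permFun ρ.symm r.2) = r := by
    rw [master_apply]
    apply Prod.ext
    · show U (U.symm (r.1 - combFun tt (permFun ρ.symm r.2))) + combFun tt (permFun ρ.symm r.2) = r.1
      rw [AffineEquiv.apply_symm_apply, sub_add_cancel]
    · exact permFun_inv ρ r.2
  conv_lhs => rw [← key]
  rw [AffineEquiv.symm_apply_apply]

lemma hU_symm {U : (Fin n → ℝ) ≃ᵃ[ℝ] (Fin n → ℝ)}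
    (hU : (U : (Fin n → ℝ) → (Fin n → ℝ)) '' intLat n = intLat n)
    {w : Fin n → ℝ} (hw : w ∈ intLat n) : U.symm w ∈ intLat n := by
  rw [← hU] at hw
  obtain ⟨z, hz, rfl⟩ := hw
  rw [AffineEquiv.symm_apply_apply]
  exact hz

lemma master_lat {U : (Fin n → ℝ) ≃ᵃ[ℝ] (Fin n → ℝ)} {ρ : Equiv.Perm (Fin (m+1))}
    {tt : Fin (m+1) → Fin n → ℝ}
    (hU : (U : (Fin n → ℝ) → (Fin n → ℝ)) '' intLat n = intLat n)
    (htt : ∀ i, tt i ∈ intLat n) :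
    (master U ρ tt : _ → _) '' prodLat n m = prodLat n m := by
  apply Set.Subset.antisymm
  · rintro - ⟨p, hp, rfl⟩
    rw [master_apply]
    constructor
    · apply intLat_add
      · rw [← hU]; exact Set.mem_image_of_mem _ hp.1
      · exact combFun_int tt htt hp.2
    · exact permFun_int ρ hp.2
  · intro r hr
    refine ⟨(master U ρ tt).symm r, ?_, by simp⟩
    rw [master_symm_apply]
    have h2 : permFun ρ.symm r.2 ∈ intLat m := permFun_int _ hr.2
    constructor
    · exact hU_symm hU (intLat_sub hr.1 (combFun_int tt htt h2))
    · exact h2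

theorem forward_dir (P Q : Fin (m+1) → Set (Fin n → ℝ)) (h : TupleEquiv P Q) :
    ∃ T : ((Fin n → ℝ) × (Fin m → ℝ)) ≃ᵃ[ℝ] ((Fin n → ℝ) × (Fin m → ℝ)),
      (T : _ → _) '' prodLat n m = prodLat n m ∧ (T : _ → _) '' cayley P = cayley Q := by
  obtain ⟨σ, U, hU, t, ht⟩ := h
  set tt : Fin (m+1) → Fin n → ℝ := fun i' j => (t (σ.symm i') j : ℝ) with htt
  have htti : ∀ i', tt i' ∈ intLat n := fun i' j => ⟨t (σ.symm i') j, rfl⟩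
  set S := master U σ.symm tt with hS
  have hSlat : (S : _ → _) '' prodLat n m = prodLat n m := master_lat hU htti
  have hScay : (S : _ → _) '' cayley Q = cayley P := by
    have him := image_cayley (P := Q) S.toAffineMap
    simp only [AffineEquiv.coe_toAffineMap] at him
    rw [him, cayley]
    congr 1
    have hre : ∀ i : Fin (m+1),
        (fun x => S (x, cayleyHeight (k := m+1) (σ i))) '' Q (σ i)
          = (fun x => (x, cayleyHeight (k := m+1) i)) '' P i := by
      intro i
      have hcomp : ∀ q : Fin n → ℝ,
          S (q, cayleyHeight (k := m+1) (σ i))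
            = ((U q + fun j => (t i j : ℝ)), cayleyHeight (k := m+1) i) := by
        intro q
        rw [hS, master_apply]
        apply Prod.ext
        · show U q + combFun tt (cayleyHeight (σ i)) = U q + fun j => (t i j : ℝ)
          rw [combFun_ch]
          congr 1
          rw [htt]
          simp
        · show permFun σ.symm (cayleyHeight (σ i)) = cayleyHeight i
          rw [permFun_ch]
          simp
      rw [Set.image_congr (fun q _ => hcomp q), ht i, Set.image_image]
    calc (⋃ i', (fun x => S (x, cayleyHeight (k := m+1) i')) '' Q i')
        = ⋃ i, (fun x => S (x, cayleyHeight (k := m+1) (σ i))) '' Q (σ i) :=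
          (σ.surjective.iUnion_comp _).symm
      _ = ⋃ i, (fun x => (x, cayleyHeight (k := m+1) i)) '' P i := Set.iUnion_congr hre
  exact ⟨S.symm, image_symm_of_image S hSlat, image_symm_of_image S hScay⟩

end CayleyAux
namespace CayleyAux

variable {n m : ℕ}

lemma affine_apply_eq' {E F : Type*} [AddCommGroup E] [Module ℝ E]
    [AddCommGroup F] [Module ℝ F] (f : E ≃ᵃ[ℝ] F) (x : E) :
    f x = f.linear x + f 0 := by
  have := f.toAffineMap.map_vadd 0 x
  simpa using this

lemma affine_sub {E F : Type*} [AddCommGroup E] [Module ℝ E]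
    [AddCommGroup F] [Module ℝ F] (f : E ≃ᵃ[ℝ] F) (p q : E) :
    f p - f q = f.linear (p - q) := by
  rw [affine_apply_eq' f p, affine_apply_eq' f q, map_sub]
  abel

lemma linear_symm_apply {E F : Type*} [AddCommGroup E] [Module ℝ E]
    [AddCommGroup F] [Module ℝ F] (e : E ≃ᵃ[ℝ] F) (w : F) :
    e.symm.linear w = e.linear.symm w := by
  have h1 : e.symm w - e.symm 0 = e.symm.linear w := by
    have := affine_sub e.symm w 0
    rwa [sub_zero] at this
  have h2 : e (e.symm w) - e (e.symm 0) = e.linear (e.symm w - e.symm 0) := affine_sub e _ _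
  rw [AffineEquiv.apply_symm_apply, AffineEquiv.apply_symm_apply, h1, sub_zero] at h2
  exact ((LinearEquiv.symm_apply_eq e.linear).2 h2).symm

lemma prodLat_sub {p q : (Fin n → ℝ) × (Fin m → ℝ)} (hp : p ∈ prodLat n m)
    (hq : q ∈ prodLat n m) : p - q ∈ prodLat n m :=
  ⟨intLat_sub hp.1 hq.1, intLat_sub hp.2 hq.2⟩

lemma prodLat_zero : (0 : (Fin n → ℝ) × (Fin m → ℝ)) ∈ prodLat n m :=
  ⟨intLat_zero, intLat_zero⟩

lemma mem_prodLat_mk {x : Fin n → ℝ} {y : Fin m → ℝ} (hx : x ∈ intLat n) (hy : y ∈ intLat m) :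
    ((x, y) : (Fin n → ℝ) × (Fin m → ℝ)) ∈ prodLat n m := ⟨hx, hy⟩

/-- image of the cayley sum under `snd ∘ T` is the simplex. -/
lemma snd_T_cayley {P Q : Fin (m+1) → Set (Fin n → ℝ)}
    (T : ((Fin n → ℝ) × (Fin m → ℝ)) ≃ᵃ[ℝ] ((Fin n → ℝ) × (Fin m → ℝ)))
    (hcay : (T : _ → _) '' cayley P = cayley Q) (hQne : ∀ i, (Q i).Nonempty) :
    convexHull ℝ (⋃ i, (fun x => (T (x, cayleyHeight (k := m+1) i)).2) '' P i)
      = unimodSimplex m := by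
  have h1' : (sndA.comp T.toAffineMap : _ → _) '' cayley P
      = (sndA : _ → _) '' ((T : _ → _) '' cayley P) := by
    rw [AffineMap.coe_comp, Set.image_comp]
    simp
  have h4 : (⋃ i, (fun x => (T (x, cayleyHeight (k := m+1) i)).2) '' P i)
      = ⋃ i, (fun x => (sndA.comp T.toAffineMap) ((x : Fin n → ℝ), cayleyHeight (k := m+1) i)) '' P i := by
    apply Set.iUnion_congr
    intro i
    apply Set.image_congr
    intro x _
    simp
  calc convexHull ℝ (⋃ i, (fun x => (T (x, cayleyHeight (k := m+1) i)).2) '' P i)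
      = (sndA.comp T.toAffineMap : _ → _) '' cayley P := by
        rw [h4, ← image_cayley]
    _ = (sndA : _ → _) '' ((T : _ → _) '' cayley P) := h1'
    _ = (sndA : _ → _) '' cayley Q := congrArg (Set.image (sndA : _ → _)) hcay
    _ = convexHull ℝ (⋃ i, (fun x => sndA ((x : Fin n → ℝ), cayleyHeight (k := m+1) i)) '' Q i) :=
        image_cayley _
    _ = convexHull ℝ (Set.range (cayleyHeight (k := m+1))) := by
        have h3 : ∀ i : Fin (m+1),
            (fun x => sndA ((x : Fin n → ℝ), cayleyHeight (k := m+1) i)) '' Q i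
              = {cayleyHeight (k := m+1) i} := fun i => (hQne i).image_const _
        rw [Set.iUnion_congr h3, Set.iUnion_singleton_eq_range]
    _ = unimodSimplex m := unimod_eq_ch.symm

lemma V_nonempty {W : Finset (Fin n → ℝ)} {S : Set (Fin n → ℝ)}
    (hS : S = convexHull ℝ (W : Set (Fin n → ℝ))) (hne : S.Nonempty) :
    (W : Set (Fin n → ℝ)).Nonempty := by
  by_contra h
  rw [Set.not_nonempty_iff_eq_empty] at h
  rw [hS, h, convexHull_empty] at hne
  exact Set.not_nonempty_empty hne

/-- Case `C = 0`: `T` maps fibers to fibers. -/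
lemma case0 {P Q : Fin (m+1) → Set (Fin n → ℝ)}
    (T : ((Fin n → ℝ) × (Fin m → ℝ)) ≃ᵃ[ℝ] ((Fin n → ℝ) × (Fin m → ℝ)))
    (hT_lat : (T : _ → _) '' prodLat n m = prodLat n m)
    (hcay : (T : _ → _) '' cayley P = cayley Q)
    (hPlat : ∀ i, IsLatticePolytope (P i)) (hPne : ∀ i, (P i).Nonempty)
    (hQne : ∀ i, (Q i).Nonempty) (hQconv : ∀ i, Convex ℝ (Q i))
    (hC : ∀ x : Fin n → ℝ, (T.linear (x, (0 : Fin m → ℝ))).2 = 0) :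
    ∃ τ : Fin (m+1) → Fin (m+1), Surjective τ ∧
      ∀ i x, x ∈ P i → (T (x, cayleyHeight (k := m+1) i)).2 = cayleyHeight (τ i)
        ∧ (T (x, cayleyHeight (k := m+1) i)).1 ∈ Q (τ i) := by
  classical
  have hTfwd : ∀ p ∈ prodLat n m, T p ∈ prodLat n m := by
    intro p hp
    rw [← hT_lat]
    exact Set.mem_image_of_mem _ hp
  have hconst : ∀ (i : Fin (m+1)) (x y : Fin n → ℝ),
      (T (x, cayleyHeight (k := m+1) i)).2 = (T (y, cayleyHeight (k := m+1) i)).2 := by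
    intro i x y
    have h := affine_sub T (x, cayleyHeight (k := m+1) i) (y, cayleyHeight (k := m+1) i)
    have h2 : ((x, cayleyHeight (k := m+1) i) : (Fin n → ℝ) × (Fin m → ℝ))
        - ((y, cayleyHeight (k := m+1) i) : (Fin n → ℝ) × (Fin m → ℝ)) = (x - y, 0) := by
      apply Prod.ext <;> simp
    rw [h2] at h
    have h3 := congrArg Prod.snd h
    rw [Prod.snd_sub] at h3
    have := hC (x - y)
    rw [this] at h3
    exact sub_eq_zero.1 h3
  -- choose the image vertex for each fiber
  have hval : ∀ i : Fin (m+1), ∃ i' : Fin (m+1), ∀ x ∈ P i,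
      (T (x, cayleyHeight (k := m+1) i)).2 = cayleyHeight i' := by
    intro i
    obtain ⟨W, hWlat, hWP⟩ := hPlat i
    obtain ⟨v, hv⟩ := V_nonempty hWP (hPne i)
    have hvP : v ∈ P i := by
      rw [hWP]; exact subset_convexHull ℝ _ hv
    have hvlat : ((v, cayleyHeight (k := m+1) i) : (Fin n → ℝ) × (Fin m → ℝ)) ∈ prodLat n m :=
      mem_prodLat_mk (hWlat hv) (ch_mem_intLat i)
    have hmemc : T (v, cayleyHeight (k := m+1) i) ∈ cayley Q := by
      rw [← hcay]
      exact Set.mem_image_of_mem _ (mem_cayley hvP)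
    have hsimplex : (T (v, cayleyHeight (k := m+1) i)).2 ∈ unimodSimplex m := cayley_snd hmemc
    have hlat2 : (T (v, cayleyHeight (k := m+1) i)).2 ∈ intLat m := (hTfwd _ hvlat).2
    obtain ⟨i', hi'⟩ := lat_unimod hsimplex hlat2
    refine ⟨i', ?_⟩
    intro x _
    rw [hconst i x v, hi']
  choose τ hτ using hval
  refine ⟨τ, ?_, ?_⟩
  · -- surjectivity
    have hmain := snd_T_cayley T hcay hQne
    have himgs : ∀ i : Fin (m+1),
        (fun x => (T (x, cayleyHeight (k := m+1) i)).2) '' P i = {cayleyHeight (τ i)} := by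
      intro i
      apply Set.Subset.antisymm
      · rintro - ⟨x, hx, rfl⟩
        exact hτ i x hx
      · rintro - rfl
        obtain ⟨x, hx⟩ := hPne i
        exact ⟨x, hx, hτ i x hx⟩
    rw [Set.iUnion_congr himgs, Set.iUnion_singleton_eq_range] at hmain
    have hvert := vertex_extract (B := Set.range fun i => cayleyHeight (k := m+1) (τ i)) hmain
    intro i₀
    obtain ⟨i, hi⟩ := hvert ⟨i₀, rfl⟩
    exact ⟨i, ch_injective hi⟩
  · intro i x hx
    refine ⟨hτ i x hx, ?_⟩
    have hmemc : T (x, cayleyHeight (k := m+1) i) ∈ cayley Q := by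
      rw [← hcay]
      exact Set.mem_image_of_mem _ (mem_cayley hx)
    have heq : T (x, cayleyHeight (k := m+1) i)
        = ((T (x, cayleyHeight (k := m+1) i)).1, cayleyHeight (τ i)) := by
      apply Prod.ext
      · rfl
      · exact hτ i x hx
    rw [heq] at hmemc
    exact cayley_fiber hQconv hmemc

end CayleyAux
namespace CayleyAux

variable {n m : ℕ}

lemma bary_zero_right (i : Fin (m+1)) : bary i (0 : Fin m → ℝ) = if i = 0 then 1 else 0 := by
  induction i using Fin.cases with
  | zero => simp [bary_zero_left]
  | succ j => simp [bary_succ, Fin.succ_ne_zero]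

lemma baryL_eq (i : Fin (m+1)) (y : Fin m → ℝ) : baryL i y = bary i y - bary i 0 := by
  have h := bary_add i y 0
  rw [add_zero] at h
  linarith

lemma baryL_ch (i i' : Fin (m+1)) :
    baryL i (cayleyHeight i') = (if i = i' then (1:ℝ) else 0) - (if i = 0 then 1 else 0) := by
  rw [baryL_eq, bary_ch, bary_zero_right]

lemma mem_vectorSpan_pair {B : Set (Fin m → ℝ)} {b b' : Fin m → ℝ} (hb : b ∈ B) (hb' : b' ∈ B) :
    b - b' ∈ vectorSpan ℝ B := by
  have := vsub_mem_vectorSpan ℝ hb hb'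
  simpa using this

lemma mem_iff_baryL {B : Set (Fin m → ℝ)} (hB : B ⊆ Set.range (cayleyHeight (k := m+1)))
    (hne : vectorSpan ℝ B ≠ ⊥) (i : Fin (m+1)) :
    cayleyHeight (k := m+1) i ∈ B ↔ ∃ w ∈ vectorSpan ℝ B, baryL i w ≠ 0 := by
  constructor
  · intro hi
    have hex : ¬ B ⊆ {(cayleyHeight (k := m+1) i : Fin m → ℝ)} := by
      intro hsub
      apply hne
      rw [(Set.Nonempty.subset_singleton_iff ⟨_, hi⟩).1 hsub]
      exact vectorSpan_singleton ℝ _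
    rw [Set.not_subset] at hex
    obtain ⟨b, hb, hbne⟩ := hex
    rw [Set.mem_singleton_iff] at hbne
    obtain ⟨a, rfl⟩ := hB hb
    refine ⟨(cayleyHeight (k := m+1) i : Fin m → ℝ) - cayleyHeight a,
      mem_vectorSpan_pair hi hb, ?_⟩
    have ha : i ≠ a := by
      intro h
      exact hbne (by rw [h])
    rw [map_sub, baryL_ch, baryL_ch, if_pos rfl, if_neg ha]
    by_cases h0 : i = 0 <;> simp [h0]
  · rintro ⟨w, hw, hwne⟩
    by_contra hi
    apply hwne
    clear hwne
    rw [vectorSpan_def] at hw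
    induction hw using Submodule.span_induction with
    | mem x hx =>
      rw [Set.mem_vsub] at hx
      obtain ⟨b, hb, b', hb', rfl⟩ := hx
      obtain ⟨a, rfl⟩ := hB hb
      obtain ⟨a', rfl⟩ := hB hb'
      have ha : a ≠ i := by rintro rfl; exact hi hb
      have ha' : a' ≠ i := by rintro rfl; exact hi hb'
      show baryL i (cayleyHeight a - cayleyHeight a') = 0
      rw [map_sub, baryL_ch, baryL_ch, if_neg (Ne.symm ha), if_neg (Ne.symm ha')]
      ring
    | zero => exact map_zero _
    | add x y hx hy ihx ihy => rw [map_add, ihx, ihy, add_zero]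
    | smul c x hx ih => rw [map_smul, ih, smul_zero]

lemma face_determined {B B' : Set (Fin m → ℝ)}
    (hB : B ⊆ Set.range (cayleyHeight (k := m+1)))
    (hB' : B' ⊆ Set.range (cayleyHeight (k := m+1)))
    (hspan : vectorSpan ℝ B = vectorSpan ℝ B') (hne : vectorSpan ℝ B ≠ ⊥) : B = B' := by
  have hne' : vectorSpan ℝ B' ≠ ⊥ := by rw [← hspan]; exact hne
  ext b
  constructor
  · intro hb
    obtain ⟨a, rfl⟩ := hB hb
    rw [mem_iff_baryL hB' hne' a, ← hspan]
    exact (mem_iff_baryL hB hne a).1 hb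
  · intro hb
    obtain ⟨a, rfl⟩ := hB' hb
    rw [mem_iff_baryL hB hne a, hspan]
    exact (mem_iff_baryL hB' hne' a).1 hb

lemma vs_insert_top :
    vectorSpan ℝ (insert (0 : Fin m → ℝ) (Set.range fun j : Fin m => Pi.single j (1:ℝ))) = ⊤ := by
  rw [eq_top_iff]
  intro y _
  have hy : ∀ j', (∑ j : Fin m, y j • (Pi.single j (1:ℝ) : Fin m → ℝ)) j' = y j' := by
    intro j'
    rw [Finset.sum_apply]
    have h : ∀ j : Fin m, (y j • (Pi.single j (1:ℝ) : Fin m → ℝ)) j' = y j * (if j' = j then 1 else 0) := by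
      intro j
      simp [Pi.single_apply]
    rw [Finset.sum_congr rfl (fun j _ => h j)]
    simp
  have hy' : y = ∑ j : Fin m, y j • (Pi.single j (1:ℝ) : Fin m → ℝ) := funext (fun j' => (hy j').symm)
  rw [hy']
  apply Submodule.sum_mem
  intro j _
  apply Submodule.smul_mem
  have := mem_vectorSpan_pair
    (B := insert (0 : Fin m → ℝ) (Set.range fun j : Fin m => Pi.single j (1:ℝ)))
    (Set.mem_insert_iff.2 (Or.inr ⟨j, rfl⟩)) (Set.mem_insert _ _)
  simpa using this

/-- Case `C ≠ 0`: every fiber projects onto the simplex, producing a forbidden projection. -/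
lemma case_ne {P Q : Fin (m+1) → Set (Fin n → ℝ)}
    (T : ((Fin n → ℝ) × (Fin m → ℝ)) ≃ᵃ[ℝ] ((Fin n → ℝ) × (Fin m → ℝ)))
    (hT_lat : (T : _ → _) '' prodLat n m = prodLat n m)
    (hcay : (T : _ → _) '' cayley P = cayley Q)
    (hP : ∀ i, IsLatticePolytope (P i) ∧ affineSpan ℝ (P i) = ⊤)
    (hQne : ∀ i, (Q i).Nonempty)
    (hC : ¬ ∀ x : Fin n → ℝ, (T.linear (x, (0 : Fin m → ℝ))).2 = 0) :
    ∃ φ : (Fin n → ℝ) →ᵃ[ℝ] (Fin m → ℝ), Surjective φ ∧ (φ : _ → _) '' intLat n = intLat m ∧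
      ∀ i, ∃ t : Fin m → ℤ,
        (φ : _ → _) '' P i = (fun x => x + fun j => ((t j : ℝ))) '' unimodSimplex m := by
  classical
  have hTfwd : ∀ p ∈ prodLat n m, T p ∈ prodLat n m := by
    intro p hp
    rw [← hT_lat]
    exact Set.mem_image_of_mem _ hp
  set Clin : (Fin n → ℝ) →ₗ[ℝ] (Fin m → ℝ) :=
    (LinearMap.snd ℝ (Fin n → ℝ) (Fin m → ℝ)).comp
      ((T.linear : ((Fin n → ℝ) × (Fin m → ℝ)) ≃ₗ[ℝ] _).toLinearMap.comp
        (LinearMap.inl ℝ (Fin n → ℝ) (Fin m → ℝ))) with hClin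
  have hClin_apply : ∀ x, Clin x = (T.linear (x, 0)).2 := fun x => rfl
  have hCne : Clin ≠ 0 := by
    intro h0
    apply hC
    intro x
    rw [← hClin_apply x, h0]
    rfl
  set rho : Fin (m+1) → ((Fin n → ℝ) →ᵃ[ℝ] (Fin m → ℝ)) :=
    fun i => sndA.comp (T.toAffineMap.comp (embA (cayleyHeight (k := m+1) i))) with hrho
  have hrho_apply : ∀ i x, rho i x = (T (x, cayleyHeight (k := m+1) i)).2 := fun i x => rfl
  have hrho_sub : ∀ (i : Fin (m+1)) (x y : Fin n → ℝ), rho i x - rho i y = Clin (x - y) := by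
    intro i x y
    rw [hrho_apply, hrho_apply, hClin_apply]
    have h := affine_sub T (x, cayleyHeight (k := m+1) i) (y, cayleyHeight (k := m+1) i)
    have h2 : ((x, cayleyHeight (k := m+1) i) : (Fin n → ℝ) × (Fin m → ℝ))
        - ((y, cayleyHeight (k := m+1) i) : (Fin n → ℝ) × (Fin m → ℝ)) = (x - y, 0) := by
      apply Prod.ext <;> simp
    rw [h2] at h
    have h3 := congrArg Prod.snd h
    rw [Prod.snd_sub] at h3
    exact h3
  choose V hVlat hVP using fun i => (hP i).1
  have hPne : ∀ i, (P i).Nonempty := by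
    intro i
    have h2 : ((affineSpan ℝ (P i) : AffineSubspace ℝ (Fin n → ℝ)) : Set (Fin n → ℝ)).Nonempty := by
      rw [(hP i).2]
      exact ⟨0, AffineSubspace.mem_top ℝ _ 0⟩
    rwa [affineSpan_nonempty] at h2
  set B : Fin (m+1) → Set (Fin m → ℝ) := fun i => (rho i) '' (V i : Set (Fin n → ℝ)) with hB
  have hBrange : ∀ i, B i ⊆ Set.range (cayleyHeight (k := m+1)) := by
    rintro i - ⟨v, hv, rfl⟩
    have hvP : v ∈ P i := by rw [hVP i]; exact subset_convexHull ℝ _ hv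
    have hmemc : T (v, cayleyHeight (k := m+1) i) ∈ cayley Q := by
      rw [← hcay]; exact Set.mem_image_of_mem _ (mem_cayley hvP)
    have hlat : T (v, cayleyHeight (k := m+1) i) ∈ prodLat n m :=
      hTfwd _ (mem_prodLat_mk (hVlat i hv) (ch_mem_intLat i))
    obtain ⟨i', hi'⟩ := lat_unimod (cayley_snd hmemc) hlat.2
    exact ⟨i', hi'.symm⟩
  have hFi : ∀ i, (rho i : _ → _) '' P i = convexHull ℝ (B i) := by
    intro i
    rw [hVP i, AffineMap.image_convexHull]
  have hvsB : ∀ i, vectorSpan ℝ (B i) = LinearMap.range Clin := by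
    intro i
    apply le_antisymm
    · rw [vectorSpan_def, Submodule.span_le]
      intro d hd
      rw [Set.mem_vsub] at hd
      obtain ⟨b, hb, b', hb', rfl⟩ := hd
      obtain ⟨v, hv, rfl⟩ := hb
      obtain ⟨v', hv', rfl⟩ := hb'
      show rho i v -ᵥ rho i v' ∈ _
      rw [vsub_eq_sub, hrho_sub]
      exact LinearMap.mem_range_self _ _
    · rintro - ⟨x, rfl⟩
      have hxtop : x ∈ vectorSpan ℝ (P i) := by
        rw [← direction_affineSpan, (hP i).2, AffineSubspace.direction_top]
        exact Submodule.mem_top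
      have hmap : Submodule.map Clin (vectorSpan ℝ (P i)) ≤ vectorSpan ℝ (B i) := by
        rw [vectorSpan_def ℝ (P i), Submodule.map_span, Submodule.span_le]
        rintro x ⟨d, hd, rfl⟩
        rw [Set.mem_vsub] at hd
        obtain ⟨p, hp, q, hq, rfl⟩ := hd
        have h1 : Clin (p -ᵥ q) = rho i p - rho i q := by rw [vsub_eq_sub, hrho_sub]
        rw [h1]
        have hvsc : vectorSpan ℝ (convexHull ℝ (B i)) = vectorSpan ℝ (B i) := by
          rw [← direction_affineSpan, affineSpan_convexHull, direction_affineSpan]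
        rw [← hvsc]
        apply mem_vectorSpan_pair
        · rw [← hFi i]; exact Set.mem_image_of_mem _ hp
        · rw [← hFi i]; exact Set.mem_image_of_mem _ hq
      exact hmap (Submodule.mem_map_of_mem hxtop)
  have hWne : vectorSpan ℝ (B 0) ≠ ⊥ := by
    rw [hvsB 0, Ne, LinearMap.range_eq_bot]
    exact hCne
  have hBeq : ∀ i, B i = B 0 := by
    intro i
    apply face_determined (hBrange i) (hBrange 0)
    · rw [hvsB i, hvsB 0]
    · rw [hvsB i, Ne, LinearMap.range_eq_bot]; exact hCne
  have hmain := snd_T_cayley T hcay hQne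
  have himg : ∀ i : Fin (m+1),
      (fun x => (T (x, cayleyHeight (k := m+1) i)).2) '' P i = convexHull ℝ (B i) := by
    intro i
    rw [← hFi i]
    apply Set.image_congr
    intro x _
    rfl
  rw [Set.iUnion_congr himg] at hmain
  have hcollapse : convexHull ℝ (⋃ i, convexHull ℝ (B i)) = convexHull ℝ (⋃ i, B i) := by
    apply Set.Subset.antisymm
    · apply convexHull_min
      · rintro x hx
        rw [Set.mem_iUnion] at hx
        obtain ⟨i, hi⟩ := hx
        exact convexHull_mono (Set.subset_iUnion B i) hi
      · exact convex_convexHull ℝ _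
    · apply convexHull_mono
      apply Set.iUnion_mono
      intro i
      exact subset_convexHull ℝ _
  rw [hcollapse] at hmain
  have hUB : (⋃ i, B i) = B 0 := by
    rw [Set.iUnion_congr hBeq]
    exact Set.iUnion_const _
  rw [hUB] at hmain
  have hB0 : B 0 = Set.range (cayleyHeight (k := m+1)) :=
    Set.Subset.antisymm (hBrange 0) (vertex_extract hmain)
  have hFiΔ : ∀ i, (rho i : _ → _) '' P i = unimodSimplex m := by
    intro i
    rw [hFi i, hBeq i, hB0]
    exact unimod_eq_ch.symm
  have hCsurj : Surjective Clin := by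
    rw [← LinearMap.range_eq_top, ← hvsB 0, hB0, range_ch]
    exact vs_insert_top
  -- surjectivity of φ = rho 0
  have hφsurj : Surjective (rho 0 : _ → _) := by
    intro y
    obtain ⟨x, hx⟩ := hCsurj (y - rho 0 0)
    refine ⟨x, ?_⟩
    have h := hrho_sub 0 x 0
    rw [sub_zero, hx] at h
    exact sub_left_inj.1 h
  -- lattice image
  have hφlat : (rho 0 : _ → _) '' intLat n = intLat m := by
    apply Set.Subset.antisymm
    · rintro - ⟨x, hx, rfl⟩
      exact (hTfwd _ (mem_prodLat_mk hx (ch_mem_intLat 0))).2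
    · intro y hy
      obtain ⟨g, hg⟩ := intLat_iff.1 hy
      have hv : ∀ i' : Fin (m+1), ∃ v ∈ (V 0 : Set (Fin n → ℝ)), rho 0 v = cayleyHeight i' := by
        intro i'
        have hmem : cayleyHeight (k := m+1) i' ∈ B 0 := by
          rw [hB0]; exact ⟨i', rfl⟩
        obtain ⟨v, hv, hveq⟩ := hmem
        exact ⟨v, hv, hveq⟩
      choose v hvV hvch using hv
      refine ⟨v 0 + ∑ j, (g j : ℝ) • (v j.succ - v 0), ?_, ?_⟩
      · apply intLat_add (hVlat 0 (hvV 0))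
        apply intLat_sum
        intro j _
        exact intLat_zsmul (g j) (intLat_sub (hVlat 0 (hvV j.succ)) (hVlat 0 (hvV 0)))
      · have h1 : rho 0 (v 0 + ∑ j, (g j : ℝ) • (v j.succ - v 0)) - rho 0 (v 0)
            = Clin (∑ j, (g j:ℝ) • (v j.succ - v 0)) := by
          rw [hrho_sub]
          congr 1
          abel
        have h2 : Clin (∑ j, (g j:ℝ) • (v j.succ - v 0))
            = ∑ j : Fin m, (g j:ℝ) • (Pi.single j (1:ℝ) : Fin m → ℝ) := by
          rw [map_sum]
          apply Finset.sum_congr rfl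
          intro j _
          rw [map_smul]
          congr 1
          rw [← hrho_sub 0 (v j.succ) (v 0), hvch, hvch, ch_succ, ch_zero, sub_zero]
        have hrv0 : rho 0 (v 0) = 0 := by
          rw [hvch 0, ch_zero]
        have h4 : rho 0 (v 0 + ∑ j, (g j : ℝ) • (v j.succ - v 0))
            = ∑ j : Fin m, (g j:ℝ) • (Pi.single j (1:ℝ) : Fin m → ℝ) := by
          calc rho 0 (v 0 + ∑ j, (g j : ℝ) • (v j.succ - v 0))
              = (rho 0 (v 0 + ∑ j, (g j : ℝ) • (v j.succ - v 0)) - rho 0 (v 0)) + rho 0 (v 0) := by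
                abel
            _ = _ := by rw [h1, h2, hrv0, add_zero]
        rw [h4, hg]
        funext j'
        rw [Finset.sum_apply]
        have h5 : ∀ j : Fin m, ((g j:ℝ) • (Pi.single j (1:ℝ) : Fin m → ℝ)) j'
            = (g j:ℝ) * (if j' = j then 1 else 0) := by
          intro j
          simp [Pi.single_apply]
        rw [Finset.sum_congr rfl (fun j _ => h5 j)]
        simp
  -- translations
  refine ⟨rho 0, hφsurj, hφlat, ?_⟩
  intro i
  have hdlat : -(rho i 0 - rho 0 0) ∈ intLat m := by
    apply intLat_neg
    apply intLat_sub
    · exact (hTfwd _ (mem_prodLat_mk intLat_zero (ch_mem_intLat i))).2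
    · exact (hTfwd _ (mem_prodLat_mk intLat_zero (ch_mem_intLat 0))).2
  obtain ⟨t, ht⟩ := intLat_iff.1 hdlat
  refine ⟨t, ?_⟩
  have hpt : ∀ x, rho 0 x = rho i x + -(rho i 0 - rho 0 0) := by
    intro x
    have h1 : rho 0 x - rho 0 0 = Clin (x - 0) := hrho_sub 0 x 0
    have h2 : rho i x - rho i 0 = Clin (x - 0) := hrho_sub i x 0
    have h3 : rho 0 x - rho 0 0 = rho i x - rho i 0 := h1.trans h2.symm
    calc rho 0 x = (rho 0 x - rho 0 0) + rho 0 0 := by abel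
      _ = (rho i x - rho i 0) + rho 0 0 := by rw [h3]
      _ = rho i x + -(rho i 0 - rho 0 0) := by abel
  have himgc : (rho 0 : _ → _) '' P i
      = (fun z => z + -(rho i 0 - rho 0 0)) '' ((rho i : _ → _) '' P i) := by
    rw [Set.image_image]
    apply Set.image_congr
    intro x _
    exact hpt x
  rw [himgc, hFiΔ i]
  funext z
  rw [ht]

end CayleyAux
namespace CayleyAux

variable {n m : ℕ}

lemma nonempty_of_affineSpan_top {S : Set (Fin n → ℝ)} (h : affineSpan ℝ S = ⊤) :
    S.Nonempty := by
  have h2 : ((affineSpan ℝ S : AffineSubspace ℝ (Fin n → ℝ)) : Set (Fin n → ℝ)).Nonempty := by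
    rw [h]
    exact ⟨0, AffineSubspace.mem_top ℝ _ 0⟩
  rwa [affineSpan_nonempty] at h2

lemma convex_of_latticePolytope {S : Set (Fin n → ℝ)} (h : IsLatticePolytope S) :
    Convex ℝ S := by
  obtain ⟨V, _, hV⟩ := h
  rw [hV]
  exact convex_convexHull ℝ _

theorem backward_dir {P Q : Fin (m+1) → Set (Fin n → ℝ)}
    (hP : ∀ i, IsLatticePolytope (P i) ∧ affineSpan ℝ (P i) = ⊤)
    (hQ : ∀ i, IsLatticePolytope (Q i) ∧ affineSpan ℝ (Q i) = ⊤)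
    (hnoproj : ¬ ∃ φ : (Fin n → ℝ) →ᵃ[ℝ] (Fin m → ℝ),
        Surjective φ ∧ (φ : _ → _) '' intLat n = intLat m ∧
        ∀ i, ∃ t : Fin m → ℤ,
          (φ : _ → _) '' P i = (fun x => x + fun j => ((t j : ℝ))) '' unimodSimplex m)
    (T : ((Fin n → ℝ) × (Fin m → ℝ)) ≃ᵃ[ℝ] ((Fin n → ℝ) × (Fin m → ℝ)))
    (hT_lat : (T : _ → _) '' prodLat n m = prodLat n m)
    (hcay : (T : _ → _) '' cayley P = cayley Q) :
    TupleEquiv P Q := by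
  classical
  have hPne : ∀ i, (P i).Nonempty := fun i => nonempty_of_affineSpan_top (hP i).2
  have hQne : ∀ i, (Q i).Nonempty := fun i => nonempty_of_affineSpan_top (hQ i).2
  have hPconv : ∀ i, Convex ℝ (P i) := fun i => convex_of_latticePolytope (hP i).1
  have hQconv : ∀ i, Convex ℝ (Q i) := fun i => convex_of_latticePolytope (hQ i).1
  by_cases hC : ∀ x : Fin n → ℝ, (T.linear (x, (0 : Fin m → ℝ))).2 = 0
  swap
  · exact absurd (case_ne T hT_lat hcay hP hQne hC) hnoproj
  -- the fiber-preserving case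
  set Al : (Fin n → ℝ) →ₗ[ℝ] (Fin n → ℝ) :=
    (LinearMap.fst ℝ (Fin n → ℝ) (Fin m → ℝ)).comp
      ((T.linear : ((Fin n → ℝ) × (Fin m → ℝ)) ≃ₗ[ℝ] _).toLinearMap.comp
        (LinearMap.inl ℝ (Fin n → ℝ) (Fin m → ℝ))) with hAl
  have hTl0 : ∀ x : Fin n → ℝ, T.linear (x, (0:Fin m → ℝ)) = (Al x, (0:Fin m → ℝ)) := by
    intro x
    exact Prod.ext_iff.2 ⟨rfl, hC x⟩
  have hAlinj : Injective Al := by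
    intro a b hab
    have h1 : T.linear (a, (0:Fin m → ℝ)) = T.linear (b, (0:Fin m → ℝ))  := by
      rw [hTl0, hTl0, hab]
    have h2 := T.linear.injective h1
    exact congrArg Prod.fst h2
  have hC' : ∀ y : Fin n → ℝ, (T.symm.linear (y, (0 : Fin m → ℝ))).2 = 0 := by
    intro y
    obtain ⟨x, hx⟩ := LinearMap.injective_iff_surjective.1 hAlinj y
    have h3 : T.linear (x, (0:Fin m → ℝ)) = (y, 0) := by rw [hTl0, hx]
    have h4 : T.symm.linear (y, (0:Fin m → ℝ)) = (x, 0) := by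
      rw [linear_symm_apply, ← h3, LinearEquiv.symm_apply_apply]
    rw [h4]
  obtain ⟨τ, hτsurj, hτmem⟩ :=
    case0 T hT_lat hcay (fun i => (hP i).1) hPne hQne hQconv hC
  obtain ⟨τ', hτ'surj, hτ'mem⟩ :=
    case0 T.symm (image_symm_of_image T hT_lat) (image_symm_of_image T hcay)
      (fun i => (hQ i).1) hQne hPne hPconv hC'
  have hττ' : ∀ i, τ' (τ i) = i := by
    intro i
    obtain ⟨x, hx⟩ := hPne i
    obtain ⟨h2, h1⟩ := hτmem i x hx
    have hTeq : T (x, cayleyHeight (k := m+1) i)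
        = ((T (x, cayleyHeight (k := m+1) i)).1, cayleyHeight (τ i)) :=
      Prod.ext_iff.2 ⟨rfl, h2⟩
    have h3 := (hτ'mem (τ i) _ h1).1
    have h4 : T.symm ((T (x, cayleyHeight (k := m+1) i)).1, cayleyHeight (τ i))
        = (x, cayleyHeight (k := m+1) i) := by
      rw [← hTeq, AffineEquiv.symm_apply_apply]
    rw [h4] at h3
    exact (ch_injective h3).symm
  -- building U
  set Tl' := T.symm.linear with hTl'
  set Al' : (Fin n → ℝ) →ₗ[ℝ] (Fin n → ℝ) :=
    (LinearMap.fst ℝ (Fin n → ℝ) (Fin m → ℝ)).comp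
      ((Tl' : ((Fin n → ℝ) × (Fin m → ℝ)) ≃ₗ[ℝ] _).toLinearMap.comp
        (LinearMap.inl ℝ (Fin n → ℝ) (Fin m → ℝ))) with hAl'
  have hTl0' : ∀ q : Fin n → ℝ, Tl' (q, (0:Fin m → ℝ)) = (Al' q, (0:Fin m → ℝ)) := by
    intro q
    exact Prod.ext_iff.2 ⟨rfl, hC' q⟩
  have hAl'inj : Injective Al' := by
    intro a b hab
    have h1 : Tl' (a, (0:Fin m → ℝ)) = Tl' (b, (0:Fin m → ℝ)) := by
      rw [hTl0', hTl0', hab]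
    have h2 := Tl'.injective h1
    exact congrArg Prod.fst h2
  have hAl'bij : Bijective Al' := ⟨hAl'inj, LinearMap.injective_iff_surjective.1 hAl'inj⟩
  set Ueq : (Fin n → ℝ) ≃ₗ[ℝ] (Fin n → ℝ) := LinearEquiv.ofBijective Al' hAl'bij with hUeq
  have hsub0 : ∀ q : Fin n → ℝ,
      T.symm (q, (0:Fin m → ℝ)) - T.symm ((0:Fin n → ℝ), (0:Fin m → ℝ)) = (Al' q, 0) := by
    intro q
    have h1 := affine_sub T.symm (q, (0:Fin m → ℝ)) ((0:Fin n → ℝ), (0:Fin m → ℝ))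
    have h2 : ((q, (0:Fin m → ℝ)) : (Fin n → ℝ) × (Fin m → ℝ))
        - ((0:Fin n → ℝ), (0:Fin m → ℝ)) = (q, 0) := by
      apply Prod.ext <;> simp
    rw [h2] at h1
    rw [h1, hTl0']
  set U : (Fin n → ℝ) ≃ᵃ[ℝ] (Fin n → ℝ) :=
    AffineEquiv.mk' (fun q => (T.symm (q, (0:Fin m → ℝ))).1) Ueq 0
      (by
        intro q
        have h1 := congrArg Prod.fst (hsub0 q)
        rw [Prod.fst_sub] at h1
        show (T.symm (q, (0:Fin m → ℝ))).1
          = Ueq (q - 0) +ᵥ (T.symm ((0:Fin n → ℝ), (0:Fin m → ℝ))).1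
        rw [sub_zero, vadd_eq_add]
        have h2 : Ueq q = Al' q := rfl
        rw [h2]
        have := sub_eq_iff_eq_add.1 h1
        rw [this]) with hU
  have hUapply : ∀ q, U q = (T.symm (q, (0:Fin m → ℝ))).1 := fun q => rfl
  have hTsymm_lat :
      (T.symm : _ → _) '' prodLat n m = prodLat n m := image_symm_of_image T hT_lat
  have hTsfwd : ∀ p ∈ prodLat n m, T.symm p ∈ prodLat n m := by
    intro p hp
    rw [← hTsymm_lat]
    exact Set.mem_image_of_mem _ hp
  have hTfwd : ∀ p ∈ prodLat n m, T p ∈ prodLat n m := by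
    intro p hp
    rw [← hT_lat]
    exact Set.mem_image_of_mem _ hp
  have hUlat : (U : (Fin n → ℝ) → (Fin n → ℝ)) '' intLat n = intLat n := by
    apply Set.Subset.antisymm
    · rintro - ⟨q, hq, rfl⟩
      rw [hUapply]
      exact (hTsfwd _ (mem_prodLat_mk hq intLat_zero)).1
    · intro y hy
      set d : Fin m → ℝ := (T.symm ((0:Fin n → ℝ), (0:Fin m → ℝ))).2 with hd
      have hdlat : d ∈ intLat m := (hTsfwd _ prodLat_zero).2
      have hTc : T ((T.symm ((0:Fin n → ℝ), (0:Fin m → ℝ))).1, d) = 0 := by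
        rw [hd]
        have : ((T.symm ((0:Fin n → ℝ), (0:Fin m → ℝ))).1,
            (T.symm ((0:Fin n → ℝ), (0:Fin m → ℝ))).2) = T.symm ((0:Fin n → ℝ), (0:Fin m → ℝ)) := rfl
        rw [this, AffineEquiv.apply_symm_apply]
        rfl
      have hp2 : (T (y, d)).2 = 0 := by
        have h1 := affine_sub T (y, d) ((T.symm ((0:Fin n → ℝ), (0:Fin m → ℝ))).1, d)
        have h2 : ((y, d) : (Fin n → ℝ) × (Fin m → ℝ))
            - ((T.symm ((0:Fin n → ℝ), (0:Fin m → ℝ))).1, d)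
            = (y - (T.symm ((0:Fin n → ℝ), (0:Fin m → ℝ))).1, 0) := by
          apply Prod.ext <;> simp
        rw [h2, hTc] at h1
        have h3 := congrArg Prod.snd h1
        rw [Prod.snd_sub] at h3
        have h4 := hC (y - (T.symm ((0:Fin n → ℝ), (0:Fin m → ℝ))).1)
        rw [h4] at h3
        have h5 : (T (y, d)).2 - (0 : (Fin n → ℝ) × (Fin m → ℝ)).2 = 0 := h3
        rw [Prod.snd_zero, sub_zero] at h5
        exact h5
      have hydlat : ((y, d) : (Fin n → ℝ) × (Fin m → ℝ)) ∈ prodLat n m := mem_prodLat_mk hy hdlat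
      refine ⟨(T (y, d)).1, (hTfwd _ hydlat).1, ?_⟩
      rw [hUapply]
      have h6 : ((T (y, d)).1, (0:Fin m → ℝ)) = T (y, d) := by
        apply Prod.ext
        · rfl
        · exact hp2.symm
      rw [h6, AffineEquiv.symm_apply_apply]
  -- translation vectors
  set tvec : Fin (m+1) → (Fin n → ℝ) :=
    fun m' => (T.symm ((0:Fin n → ℝ), cayleyHeight (k := m+1) m')).1
      - (T.symm ((0:Fin n → ℝ), (0:Fin m → ℝ))).1 with htvec
  have htvec_lat : ∀ m', tvec m' ∈ intLat n := by
    intro m'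
    apply intLat_sub
    · exact (hTsfwd _ (mem_prodLat_mk intLat_zero (ch_mem_intLat m'))).1
    · exact (hTsfwd _ prodLat_zero).1
  have hdecomp : ∀ (q : Fin n → ℝ) (m' : Fin (m+1)),
      (T.symm (q, cayleyHeight (k := m+1) m')).1 = U q + tvec m' := by
    intro q m'
    have h1 := affine_sub T.symm (q, cayleyHeight (k := m+1) m') (q, (0:Fin m → ℝ))
    have h1' : ((q, cayleyHeight (k := m+1) m') : (Fin n → ℝ) × (Fin m → ℝ))
        - ((q, (0:Fin m → ℝ)) : (Fin n → ℝ) × (Fin m → ℝ)) = (0, cayleyHeight (k := m+1) m') := by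
      apply Prod.ext <;> simp
    rw [h1'] at h1
    have h2 := affine_sub T.symm ((0:Fin n → ℝ), cayleyHeight (k := m+1) m')
      ((0:Fin n → ℝ), (0:Fin m → ℝ))
    have h2' : (((0:Fin n → ℝ), cayleyHeight (k := m+1) m') : (Fin n → ℝ) × (Fin m → ℝ))
        - (((0:Fin n → ℝ), (0:Fin m → ℝ)) : (Fin n → ℝ) × (Fin m → ℝ))
        = (0, cayleyHeight (k := m+1) m') := by
      apply Prod.ext <;> simp
    rw [h2'] at h2
    have h3 := congrArg Prod.fst (h1.trans h2.symm)
    rw [Prod.fst_sub, Prod.fst_sub] at h3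
    rw [hUapply, htvec]
    have h4 := sub_eq_iff_eq_add.1 h3
    rw [h4]
    exact add_comm _ _
  -- permutation
  have hτbij : Bijective τ := (Fintype.bijective_iff_surjective_and_card τ).2 ⟨hτsurj, rfl⟩
  set σ : Equiv.Perm (Fin (m+1)) := Equiv.ofBijective τ hτbij with hσ
  have hσapp : ∀ i, σ i = τ i := fun i => rfl
  have htv : ∀ i, ∃ t : Fin n → ℤ, tvec (τ i) = fun j => (t j : ℝ) := by
    intro i
    exact intLat_iff.1 (htvec_lat (τ i))
  choose t ht using htv
  refine ⟨σ, U, hUlat, t, ?_⟩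
  intro i
  rw [hσapp]
  apply Set.Subset.antisymm
  · intro x hx
    obtain ⟨h2, h1⟩ := hτmem i x hx
    refine ⟨(T (x, cayleyHeight (k := m+1) i)).1, h1, ?_⟩
    have hTeq : T (x, cayleyHeight (k := m+1) i)
        = ((T (x, cayleyHeight (k := m+1) i)).1, cayleyHeight (τ i)) :=
      Prod.ext_iff.2 ⟨rfl, h2⟩
    have h4 : T.symm ((T (x, cayleyHeight (k := m+1) i)).1, cayleyHeight (τ i))
        = (x, cayleyHeight (k := m+1) i) := by
      rw [← hTeq, AffineEquiv.symm_apply_apply]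
    have h5 := congrArg Prod.fst h4
    rw [hdecomp] at h5
    rw [← ht i]
    exact h5
  · rintro - ⟨q, hq, rfl⟩
    obtain ⟨h2, h1⟩ := hτ'mem (τ i) q hq
    rw [hττ'] at h1
    have h3 := hdecomp q (τ i)
    show U q + (fun j => ((t i j : ℝ))) ∈ P i
    rw [← ht i, ← h3]
    exact h1

end CayleyAux

/-- If the tuple `P` admits no common lattice projection onto translates of `Δₖ₋₁`,
then the tuples `P` and `Q` are equivalent iff their Cayley sums are equivalent. -/
theorem tuple_equiv_iff_cayley_equiv (n k : ℕ) (hk : 1 ≤ k)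
    (P Q : Fin k → Set (Fin n → ℝ))
    (hP : ∀ i, IsLatticePolytope (P i) ∧ affineSpan ℝ (P i) = ⊤)
    (hQ : ∀ i, IsLatticePolytope (Q i) ∧ affineSpan ℝ (Q i) = ⊤)
    (hnoproj : ¬ ∃ φ : (Fin n → ℝ) →ᵃ[ℝ] (Fin (k - 1) → ℝ),
        Surjective φ ∧ φ '' intLat n = intLat (k - 1) ∧
        ∀ i, ∃ t : Fin (k - 1) → ℤ,
          φ '' P i = (fun x => x + fun j => ((t j : ℝ))) '' unimodSimplex (k - 1)) :
    TupleEquiv P Q ↔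
      ∃ T : ((Fin n → ℝ) × (Fin (k - 1) → ℝ)) ≃ᵃ[ℝ]
          ((Fin n → ℝ) × (Fin (k - 1) → ℝ)),
        (T : _ → _) '' prodLat n (k - 1) = prodLat n (k - 1) ∧
        (T : _ → _) '' cayley P = cayley Q := by
  obtain ⟨m, rfl⟩ : ∃ m, k = m + 1 := ⟨k - 1, by omega⟩
  constructor
  · intro h
    exact CayleyAux.forward_dir P Q h
  · rintro ⟨T, h1, h2⟩
    exact CayleyAux.backward_dir hP hQ hnoproj T h1 h2
end

section
/- Let P ⊂ ℝⁿ be an n-dimensional lattice polytope and φ: ℝⁿ → ℝⁿ⁻¹ a lattice projection with φ(P) = Δₙ₋₁. Then ker φ = ℝe where e is a vector parallel to an edge of P joining vertices v₁ ∈ F₁ and v₂ ∈ F₂ of two distinct unimodular facets F₁ ≠ F₂ of P. -/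
open Set Pointwise Function

/-- The copy of `Δₙ₋₁` embedded in a coordinate hyperplane of `ℝⁿ`:
`conv(0, e₀, …, e_{n-2})`. -/
def embeddedSimplex (n : ℕ) : Set (Fin n → ℝ) :=
  convexHull ℝ (insert 0 {x | ∃ i : Fin n, (i : ℕ) + 1 < n ∧ x = Pi.single i (1 : ℝ)})

/-- A (nonempty) face of a polytope: the set of maximizers of a linear functional. -/
def IsFaceOf {E : Type*} [AddCommGroup E] [Module ℝ E] (F P : Set E) : Prop :=
  ∃ f : E →ₗ[ℝ] ℝ, F = {x ∈ P | ∀ y ∈ P, f y ≤ f x}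

/-- The dimension of a set: the rank of the direction of its affine span. -/
noncomputable def dimOf {E : Type*} [AddCommGroup E] [Module ℝ E] (S : Set E) : ℕ :=
  Module.finrank ℝ (affineSpan ℝ S).direction

/-- A facet `F` of an `n`-dimensional lattice polytope is unimodular if some
affine lattice-preserving transformation of `ℝⁿ` maps it onto the standard
unimodular `(n-1)`-simplex embedded in a coordinate hyperplane. -/
def IsUnimodularFacet {n : ℕ} (F P : Set (Fin n → ℝ)) : Prop :=
  IsFaceOf F P ∧ dimOf F = n - 1 ∧
    ∃ T : (Fin n → ℝ) ≃ᵃ[ℝ] (Fin n → ℝ),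
      (T : (Fin n → ℝ) → (Fin n → ℝ)) '' intLat n = intLat n ∧
      (T : (Fin n → ℝ) → (Fin n → ℝ)) '' F = embeddedSimplex n

/-- integer points as an additive subgroup -/
def intLatGrp (N : ℕ) : AddSubgroup (Fin N → ℝ) where
  carrier := intLat N
  add_mem' := by
    rintro a b ha hb
    intro i
    obtain ⟨p, hp⟩ := ha i; obtain ⟨q, hq⟩ := hb i
    exact ⟨p + q, by simp [Pi.add_apply, hp, hq]⟩
  zero_mem' := fun i => ⟨0, by simp⟩
  neg_mem' := by
    rintro a ha i
    obtain ⟨p, hp⟩ := ha i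
    exact ⟨-p, by simp [hp]⟩

lemma intLat_smul {N : ℕ} {k : ℤ} {x : Fin N → ℝ} (hx : x ∈ intLat N) :
    (k : ℝ) • x ∈ intLat N := by
  rw [Int.cast_smul_eq_zsmul]
  exact (intLatGrp N).zsmul_mem hx k

lemma mem_unimodSimplex_iff {m : ℕ} {x : Fin m → ℝ} :
    x ∈ unimodSimplex m ↔ (∀ i, 0 ≤ x i) ∧ ∑ i, x i ≤ 1 := by
  constructor
  · intro hx
    have hconv : Convex ℝ {y : Fin m → ℝ | (∀ i, 0 ≤ y i) ∧ ∑ i, y i ≤ 1} := by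
      intro a ha b hb s t hs ht hst
      refine ⟨fun i => by have := ha.1 i; have := hb.1 i; dsimp; positivity, ?_⟩
      simp only [Pi.add_apply, Pi.smul_apply, smul_eq_mul, Finset.sum_add_distrib,
        ← Finset.mul_sum]
      nlinarith [ha.2, hb.2]
    refine convexHull_min ?_ hconv hx
    rintro y (rfl | ⟨i, rfl⟩)
    · exact ⟨fun i => le_refl 0, by simp⟩
    · refine ⟨fun j => by simp [Pi.single_apply]; positivity, by simp⟩
  · rintro ⟨h0, h1⟩
    have := Finset.centerMass_mem_convexHull (s := insert 0 (Set.range fun i : Fin m => Pi.single i (1 : ℝ)))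
      (t := (Finset.univ : Finset (Option (Fin m))))
      (w := fun o => Option.elim o (1 - ∑ i, x i) x)
      (z := fun o => Option.elim o 0 (fun i => Pi.single i (1:ℝ)))
      ?_ ?_ ?_
    · unfold unimodSimplex
      convert this using 1
      rw [Finset.centerMass_eq_of_sum_1]
      · rw [Fintype.sum_option]
        simp only [Option.elim]
        funext j
        simp only [smul_zero, zero_add, Finset.sum_apply, Pi.smul_apply, Pi.single_apply,
          smul_eq_mul, mul_ite, mul_one, mul_zero]
        simp
      · rw [Fintype.sum_option]; simp
    · rintro (_|i) _
      · simpa using h1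
      · exact h0 i
    · rw [Fintype.sum_option]; simp
    · rintro (_|i) _
      · simp
      · simp only [Option.elim]
        exact Set.mem_insert_of_mem _ ⟨i, rfl⟩

lemma intLat_mem_grp {N : ℕ} {x : Fin N → ℝ} : x ∈ intLatGrp N ↔ x ∈ intLat N := Iff.rfl

/-- the vertices of the unimodular simplex, indexed by `Fin (m+1)`; the last one is `0`. -/
def vert (m : ℕ) (j : Fin (m + 1)) : Fin m → ℝ :=
  if h : (j : ℕ) < m then Pi.single ⟨j, h⟩ (1 : ℝ) else 0

lemma vert_mem_unimodSimplex {m : ℕ} (j : Fin (m + 1)) : vert m j ∈ unimodSimplex m := by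
  rw [mem_unimodSimplex_iff]
  unfold vert
  split
  · refine ⟨fun i => by simp [Pi.single_apply]; positivity, by simp⟩
  · simp

lemma lattice_mem_unimodSimplex {m : ℕ} {x : Fin m → ℝ} (hx : x ∈ unimodSimplex m)
    (hl : x ∈ intLat m) : ∃ j : Fin (m + 1), x = vert m j := by
  rw [mem_unimodSimplex_iff] at hx
  obtain ⟨h0, h1⟩ := hx
  by_cases hz : ∀ i, x i = 0
  · exact ⟨Fin.last m, by funext i; simp [vert, hz i]⟩
  · push_neg at hz
    obtain ⟨i, hi⟩ := hz
    have hone : 1 ≤ x i := by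
      obtain ⟨k, hk⟩ := hl i
      have : 0 < (k:ℝ) := by rw [← hk]; exact lt_of_le_of_ne (h0 i) (Ne.symm hi)
      have : 1 ≤ k := by exact_mod_cast this
      rw [hk]; exact_mod_cast this
    have hsum : ∑ i' ∈ Finset.univ.erase i, x i' = (∑ i', x i') - x i := by
      rw [eq_sub_iff_add_eq, Finset.sum_erase_add _ _ (Finset.mem_univ i)]
    have hrest0 : ∀ i' ∈ Finset.univ.erase i, x i' = 0 := by
      have hle : ∑ i' ∈ Finset.univ.erase i, x i' ≤ 0 := by
        rw [hsum]; linarith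
      have hge : ∀ i' ∈ Finset.univ.erase i, 0 ≤ x i' := fun i' _ => h0 i'
      intro i' hi'
      exact le_antisymm (by
        have := Finset.sum_le_sum_of_subset_of_nonneg (Finset.singleton_subset_iff.2 hi')
          (fun j _ _ => h0 j)
        simp only [Finset.sum_singleton] at this
        linarith) (h0 i')
    have hxi : x i = 1 := by
      have : (∑ i', x i') - x i = 0 := by
        rw [← hsum]; exact Finset.sum_eq_zero hrest0
      have hxile : x i ≤ 1 := by linarith [h1]
      linarith [hone, hxile]
    refine ⟨i.castSucc, ?_⟩
    have hc : (↑(i.castSucc) : ℕ) < m := by simpa using i.is_lt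
    funext j
    have heq : (⟨(↑(i.castSucc) : ℕ), hc⟩ : Fin m) = i := Fin.ext (by simp)
    have hv : vert m i.castSucc = Pi.single i (1:ℝ) := by
      unfold vert
      rw [dif_pos hc, heq]
    rw [hv]
    rcases eq_or_ne j i with rfl | hne
    · simp [hxi]
    · rw [hrest0 j (Finset.mem_erase.2 ⟨hne, Finset.mem_univ j⟩)]
      simp [Pi.single_apply, hne]

/-- exposing functionals for the vertices -/
noncomputable def gfun (m : ℕ) (j : Fin (m+1)) : (Fin m → ℝ) →ₗ[ℝ] ℝ :=
  if h : (j : ℕ) < m then LinearMap.proj ⟨j, h⟩ else -(∑ i, LinearMap.proj i)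

lemma gfun_le {m : ℕ} (j : Fin (m+1)) {y : Fin m → ℝ} (hy : y ∈ unimodSimplex m) :
    gfun m j y ≤ gfun m j (vert m j) ∧ (gfun m j y = gfun m j (vert m j) → y = vert m j) := by
  rw [mem_unimodSimplex_iff] at hy
  obtain ⟨h0, h1⟩ := hy
  unfold gfun vert
  split
  · rename_i h
    simp only [LinearMap.proj_apply, Pi.single_eq_same]
    have hle : y ⟨j, h⟩ ≤ ∑ i, y i :=
      Finset.single_le_sum (fun i _ => h0 i) (Finset.mem_univ _)
    constructor
    · linarith
    · intro he
      funext i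
      rcases eq_or_ne i ⟨j, h⟩ with rfl | hne
      · simp [he]
      · simp only [Pi.single_apply, if_neg hne]
        have hsumle : ∑ i' ∈ Finset.univ.erase (⟨j, h⟩ : Fin m), y i' ≤ 0 := by
          have h2 := Finset.sum_erase_add Finset.univ y (Finset.mem_univ (⟨j, h⟩ : Fin m))
          rw [he] at h2
          linarith
        have hmem : i ∈ Finset.univ.erase (⟨j, h⟩ : Fin m) :=
          Finset.mem_erase.2 ⟨hne, Finset.mem_univ i⟩
        refine le_antisymm ?_ (h0 i)
        have h3 := Finset.sum_le_sum_of_subset_of_nonneg (Finset.singleton_subset_iff.2 hmem)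
          (fun k _ _ => h0 k)
        simp only [Finset.sum_singleton] at h3
        linarith
  · have hyval : (-(∑ i, LinearMap.proj i (R := ℝ) (φ := fun _ : Fin m => ℝ)) : (Fin m → ℝ) →ₗ[ℝ] ℝ) y = -(∑ i, y i) := by
      simp
    constructor
    · rw [map_zero, hyval]
      have : 0 ≤ ∑ i, y i := Finset.sum_nonneg fun i _ => h0 i
      linarith
    · intro he
      rw [map_zero, hyval] at he
      have hs : ∑ i, y i = 0 := by linarith
      funext i
      simp only [Pi.zero_apply]
      exact (Finset.sum_eq_zero_iff_of_nonneg (fun i _ => h0 i)).1 hs i (Finset.mem_univ i)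

lemma vert_injOn {m : ℕ} {j j' : Fin (m+1)} (h : vert m j = vert m j') : j = j' := by
  unfold vert at h
  split at h <;> split at h
  · rename_i h1 h2
    have hv := congrFun h ⟨j, h1⟩
    simp only [Pi.single_eq_same, Pi.single_apply] at hv
    refine Fin.ext ?_
    by_contra hne
    rw [if_neg ?_] at hv
    · norm_num at hv
    · intro hc
      exact hne (by simpa using congrArg Fin.val hc)
  · rename_i h1 h2
    have hv := congrFun h ⟨j, h1⟩
    simp at hv
  · rename_i h1 h2
    have hv := congrFun h.symm ⟨j', h2⟩
    simp at hv
  · rename_i h1 h2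
    refine Fin.ext ?_
    omega

lemma argmax_face {E : Type*} [AddCommGroup E] [Module ℝ E] (V : Finset E)
    (f : E →ₗ[ℝ] ℝ) (v₀ : E) (hv₀ : v₀ ∈ V) (hmax : ∀ w ∈ V, f w ≤ f v₀)
    [DecidablePred fun v => f v = f v₀] :
    {x ∈ convexHull ℝ (V : Set E) | ∀ y ∈ convexHull ℝ (V : Set E), f y ≤ f x}
      = convexHull ℝ ((V.filter fun v => f v = f v₀ : Finset E) : Set E) := by
  have hub : ∀ y ∈ convexHull ℝ (V : Set E), f y ≤ f v₀ :=
    fun y hy => convexHull_min hmax (convex_halfSpace_le f.isLinear _) hy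
  ext x
  constructor
  · rintro ⟨hxP, hxmax⟩
    have hfx : f x = f v₀ :=
      le_antisymm (hub x hxP) (hxmax v₀ (subset_convexHull ℝ _ hv₀))
    rw [Finset.convexHull_eq] at hxP
    obtain ⟨w, hw0, hw1, hwc⟩ := hxP
    have hzero : ∀ y ∈ V, ¬(f y = f v₀) → w y = 0 := by
      intro y hy hfy
      by_contra hwy
      have hwypos : 0 < w y := lt_of_le_of_ne (hw0 y hy) (Ne.symm hwy)
      have hlt : f y < f v₀ := lt_of_le_of_ne (hmax y hy) hfy
      -- f x = ∑ w y * f y < f v₀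
      have hx : x = ∑ y ∈ V, w y • y := by rw [← hwc, Finset.centerMass_eq_of_sum_1 _ _ hw1]; rfl
      have hfx2 : f x = ∑ y' ∈ V, w y' * f y' := by rw [hx, map_sum]; simp
      have hlt2 : ∑ y' ∈ V, w y' * f y' < ∑ y' ∈ V, w y' * f v₀ := by
        apply Finset.sum_lt_sum
        · intro i hi
          exact mul_le_mul_of_nonneg_left (hmax i hi) (hw0 i hi)
        · exact ⟨y, hy, by nlinarith⟩
      rw [← Finset.sum_mul, hw1, one_mul] at hlt2
      rw [hfx] at hfx2
      linarith
    -- x is centermass over the filtered set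
    have hsub : (V.filter fun v => f v = f v₀) ⊆ V := Finset.filter_subset _ _
    have hsum' : ∑ y ∈ V.filter fun v => f v = f v₀, w y = 1 := by
      rw [← hw1]
      apply Finset.sum_subset hsub
      intro y hy hny
      exact hzero y hy (by simpa [hy] using (Finset.mem_filter.not.1 hny))
    have hcm : (V.filter fun v => f v = f v₀).centerMass w id = x := by
      rw [Finset.centerMass_eq_of_sum_1 _ _ hsum']
      rw [← hwc, Finset.centerMass_eq_of_sum_1 _ _ hw1]
      apply Finset.sum_subset hsub
      intro y hy hny
      have := hzero y hy (by simpa [hy] using (Finset.mem_filter.not.1 hny))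
      simp [this]
    rw [← hcm]
    exact Finset.centerMass_mem_convexHull _ (fun i hi => hw0 i (hsub hi)) (by rw [hsum']; norm_num)
      (fun i hi => Finset.mem_coe.2 hi)
  · intro hx
    have hsubs : (↑(V.filter fun v => f v = f v₀) : Set E) ⊆ (V : Set E) := by
      intro y hy; exact Finset.mem_coe.2 (Finset.filter_subset _ _ (Finset.mem_coe.1 hy))
    have hxP : x ∈ convexHull ℝ (V : Set E) := convexHull_mono hsubs hx
    have hxval : f x = f v₀ := by
      have hle := hub x hxP
      have hge : f v₀ ≤ f x := by
        have : x ∈ {y | f v₀ ≤ f y} := by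
          apply convexHull_min ?_ (convex_halfSpace_ge f.isLinear _) hx
          intro y hy
          have := (Finset.mem_filter.1 (Finset.mem_coe.1 hy)).2
          exact le_of_eq this.symm
        exact this
      linarith
    exact ⟨hxP, fun y hy => by rw [hxval]; exact hub y hy⟩

lemma unimod_aux {m : ℕ} (φ : (Fin (m+1) → ℝ) →ᵃ[ℝ] (Fin m → ℝ))
    (e : Fin (m+1) → ℝ) (he0 : e ≠ 0) (heK : φ.linear e = 0) (heL : e ∈ intLat (m+1))
    (hgen : ∀ x, φ.linear x = 0 → x ∈ intLat (m+1) → ∃ k : ℤ, x = (k:ℝ) • e)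
    (hφlat : ∀ z ∈ intLat (m+1), φ z ∈ intLat m)
    (p : Fin (m+1) → (Fin (m+1) → ℝ))
    (hpl : ∀ j, p j ∈ intLat (m+1))
    (hpv : ∀ j, φ (p j) = vert m j) :
    AffineIndependent ℝ p ∧
    ∃ T : (Fin (m+1) → ℝ) ≃ᵃ[ℝ] (Fin (m+1) → ℝ),
      (T : _ → _) '' intLat (m+1) = intLat (m+1) ∧
      (T : _ → _) '' (convexHull ℝ (Set.range p)) = embeddedSimplex (m+1) := by
  classical
  set L := φ.linear with hLdef
  set q := p (Fin.last m) with hqdef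
  set bfam : Fin (m+1) → (Fin (m+1) → ℝ) :=
    fun i => if h : (i : ℕ) < m then p i - q else e with hbfam
  have hvlast : vert m (Fin.last m) = 0 := by unfold vert; rw [dif_neg (by simp)]
  have hLsub : ∀ x y, L (x - y) = φ x - φ y := by
    intro x y
    have := φ.linearMap_vsub x y
    simpa [vsub_eq_sub] using this
  have hLb : ∀ (i : Fin (m+1)) (h : (i:ℕ) < m), L (bfam i) = Pi.single (⟨i, h⟩ : Fin m) 1 := by
    intro i h
    rw [hbfam]
    simp only [dif_pos h]
    rw [hLsub, hpv, hpv, hvlast, sub_zero]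
    unfold vert
    rw [dif_pos h]
  have hblast : bfam (Fin.last m) = e := by rw [hbfam]; simp
  have hbK : L (bfam (Fin.last m)) = 0 := by rw [hblast]; exact heK
  have hblat : ∀ i, bfam i ∈ intLat (m+1) := by
    intro i
    rw [hbfam]
    dsimp only
    split
    · exact intLat_mem_grp.1 ((intLatGrp (m+1)).sub_mem (intLat_mem_grp.2 (hpl i)) (intLat_mem_grp.2 (hpl (Fin.last m))))
    · exact heL
  -- linear independence
  have hli : LinearIndependent ℝ bfam := by
    rw [Fintype.linearIndependent_iff]
    intro g hg
    have hgc : ∀ j : Fin m, g j.castSucc = 0 := by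
      intro j
      have h1 : L (∑ i, g i • bfam i) = 0 := by rw [hg, map_zero]
      rw [map_sum] at h1
      have h2 := congrFun h1 j
      simp only [map_smul] at h2
      have h3 : ∀ i : Fin (m+1), (g i • L (bfam i)) j = if i = j.castSucc then g i else 0 := by
        intro i
        by_cases h : (i : ℕ) < m
        · rw [hLb i h]
          simp only [Pi.smul_apply, Pi.single_apply, smul_eq_mul]
          by_cases he' : i = j.castSucc
          · subst he'
            rw [if_pos rfl, if_pos (Fin.ext (by simp)), mul_one]
          · rw [if_neg he', if_neg ?_, mul_zero]
            intro hc
            exact he' (Fin.ext (by simpa using (congrArg Fin.val hc).symm))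
        · have hil : i = Fin.last m := Fin.ext (by have := i.is_lt; simp only [Fin.val_last]; omega)
          subst hil
          rw [hbK]
          simp only [Pi.smul_apply, Pi.zero_apply, smul_eq_mul, mul_zero]
          rw [if_neg ?_]
          intro hc
          have h5 := congrArg Fin.val hc
          have h6 := j.is_lt
          simp only [Fin.val_last, Fin.coe_castSucc] at h5
          omega
      rw [Finset.sum_apply] at h2
      rw [Finset.sum_congr rfl (fun i _ => h3 i)] at h2
      rwa [Finset.sum_ite_eq' Finset.univ j.castSucc g, if_pos (Finset.mem_univ _)] at h2
    have hglast : g (Fin.last m) = 0 := by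
      have h4 : ∑ i, g i • bfam i = g (Fin.last m) • bfam (Fin.last m) := by
        rw [Finset.sum_eq_single (Fin.last m)]
        · intro i _ hne
          have hlt : (i : ℕ) < m := by
            have := i.is_lt
            rcases Nat.lt_or_ge (i : ℕ) m with h | h
            · exact h
            · exact absurd (Fin.ext (by simp only [Fin.val_last]; omega)) hne
          have : g i = 0 := by
            have : i = (⟨i, hlt⟩ : Fin m).castSucc := Fin.ext (by simp)
            rw [this]; exact hgc _
          rw [this, zero_smul]
        · intro h; exact absurd (Finset.mem_univ _) h
      rw [h4, hblast] at hg
      exact (smul_eq_zero.1 hg).resolve_right he0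
    intro i
    rcases Nat.lt_or_ge (i : ℕ) m with h | h
    · have : i = (⟨i, h⟩ : Fin m).castSucc := Fin.ext (by simp)
      rw [this]; exact hgc _
    · have : i = Fin.last m := Fin.ext (by have := i.is_lt; simp only [Fin.val_last]; omega)
      rw [this]; exact hglast
  have hcard : Fintype.card (Fin (m+1)) = Module.finrank ℝ (Fin (m+1) → ℝ) := by
    simp [Module.finrank_fintype_fun_eq_card]
  set B := basisOfLinearIndependentOfCardEqFinrank hli hcard with hBdef
  have hB : ∀ i, B i = bfam i := fun i => by
    rw [hBdef, coe_basisOfLinearIndependentOfCardEqFinrank]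
  set T : (Fin (m+1) → ℝ) ≃ᵃ[ℝ] (Fin (m+1) → ℝ) :=
    (AffineEquiv.constVAdd ℝ (Fin (m+1) → ℝ) (-q)).trans B.equivFun.toAffineEquiv with hTdef
  have hT : ∀ x, T x = B.equivFun (x - q) := by
    intro x
    rw [hTdef]
    simp [AffineEquiv.trans_apply, sub_eq_neg_add]
  have hTsymm : ∀ x, T.symm x = q + B.equivFun.symm x := by
    intro x
    apply T.injective
    rw [T.apply_symm_apply, hT, add_sub_cancel_left]
    exact (B.equivFun.apply_symm_apply x).symm
  -- integer coordinates of lattice points in the basis B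
  have hcoords : ∀ z ∈ intLat (m+1), ∀ i, ∃ k : ℤ, B.equivFun (z - q) i = (k : ℝ) := by
    intro z hz
    set y := z - q with hy
    have hylat : y ∈ intLat (m+1) :=
      intLat_mem_grp.1 ((intLatGrp (m+1)).sub_mem (intLat_mem_grp.2 hz)
        (intLat_mem_grp.2 (hpl (Fin.last m))))
    have hLylat : L y ∈ intLat m := by
      rw [hy, hLsub]
      exact intLat_mem_grp.1 ((intLatGrp m).sub_mem (intLat_mem_grp.2 (hφlat z hz))
        (intLat_mem_grp.2 (hφlat q (hpl (Fin.last m)))))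
    choose kv hkv using hLylat
    set r := y - ∑ j : Fin m, (kv j : ℝ) • bfam j.castSucc with hr
    have hrK : L r = 0 := by
      rw [hr, map_sub, map_sum]
      have hterm : ∀ j : Fin m, L ((kv j : ℝ) • bfam j.castSucc) = (kv j : ℝ) • (Pi.single j (1:ℝ) : Fin m → ℝ) := by
        intro j
        rw [map_smul, hLb j.castSucc (by simpa using j.is_lt)]
        congr 2
      rw [Finset.sum_congr rfl (fun j _ => hterm j)]
      funext j'
      simp only [Pi.sub_apply, Finset.sum_apply, Pi.smul_apply, Pi.single_apply, smul_eq_mul,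
        mul_ite, mul_one, mul_zero, Pi.zero_apply]
      rw [Finset.sum_ite_eq Finset.univ j' (fun j => (kv j : ℝ)), if_pos (Finset.mem_univ _)]
      rw [hkv j']
      ring
    have hrlat : r ∈ intLat (m+1) := by
      rw [hr]
      refine intLat_mem_grp.1 ((intLatGrp (m+1)).sub_mem (intLat_mem_grp.2 hylat) ?_)
      refine AddSubgroup.sum_mem _ fun j _ => ?_
      exact intLat_mem_grp.2 (intLat_smul (hblat j.castSucc))
    obtain ⟨k, hk⟩ := hgen r hrK hrlat
    set coef : Fin (m+1) → ℝ := fun i => if h : (i : ℕ) < m then (kv ⟨i, h⟩ : ℝ) else (k : ℝ)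
      with hcoef
    have hysum : y = ∑ i, coef i • bfam i := by
      rw [Fin.sum_univ_castSucc]
      have h1 : ∀ j : Fin m, coef j.castSucc • bfam j.castSucc = (kv j : ℝ) • bfam j.castSucc := by
        intro j
        congr 1
        rw [hcoef]
        dsimp only
        rw [dif_pos (by simpa using j.is_lt)]
        norm_cast
      rw [Finset.sum_congr rfl (fun j _ => h1 j)]
      have h2 : coef (Fin.last m) • bfam (Fin.last m) = (k : ℝ) • e := by
        rw [hblast, hcoef]
        dsimp only
        rw [dif_neg (by simp)]
      rw [h2, ← hk, hr]
      abel
    have hcoefval : ∀ i, B.equivFun y i = coef i := by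
      intro i
      rw [hysum]
      have h3 : B.equivFun (∑ i', coef i' • bfam i') = ∑ i', coef i' • B.equivFun (B i') := by
        rw [map_sum]
        congr 1
        funext i'
        rw [map_smul, hB]
      rw [h3]
      rw [Finset.sum_apply]
      have h4 : ∀ i', (coef i' • B.equivFun (B i')) i = if i' = i then coef i' else 0 := by
        intro i'
        simp only [Pi.smul_apply, Module.Basis.equivFun_self, smul_eq_mul, mul_ite, mul_one, mul_zero]
      rw [Finset.sum_congr rfl (fun i' _ => h4 i')]
      rw [Finset.sum_ite_eq' Finset.univ i coef, if_pos (Finset.mem_univ _)]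
    intro i
    rw [hcoefval i, hcoef]
    dsimp only
    split
    · exact ⟨kv _, rfl⟩
    · exact ⟨k, rfl⟩
  -- T maps the lattice onto the lattice
  have hfwd : ∀ z ∈ intLat (m+1), T z ∈ intLat (m+1) := by
    intro z hz
    rw [hT]
    intro i
    exact hcoords z hz i
  have hbwd : ∀ x ∈ intLat (m+1), T.symm x ∈ intLat (m+1) := by
    intro x hx
    rw [hTsymm, Module.Basis.equivFun_symm_apply]
    refine intLat_mem_grp.1 ((intLatGrp (m+1)).add_mem (intLat_mem_grp.2 (hpl (Fin.last m))) ?_)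
    refine AddSubgroup.sum_mem _ fun i _ => ?_
    obtain ⟨k, hk⟩ := hx i
    rw [hk, hB]
    exact intLat_mem_grp.2 (intLat_smul (hblat i))
  have hTlat : (T : _ → _) '' intLat (m+1) = intLat (m+1) := by
    ext x
    constructor
    · rintro ⟨z, hz, rfl⟩
      exact hfwd z hz
    · intro hx
      exact ⟨T.symm x, hbwd x hx, T.apply_symm_apply x⟩
  -- values of T on the p j
  have hTq : T q = 0 := by rw [hT, sub_self, map_zero]
  have hTp : ∀ (i : Fin (m+1)) (h : (i:ℕ) < m), T (p i) = Pi.single i (1:ℝ) := by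
    intro i h
    rw [hT]
    have : p i - q = bfam i := by rw [hbfam]; dsimp only; rw [dif_pos h]
    rw [this, ← hB]
    funext j
    rw [Module.Basis.equivFun_self]
    simp [Pi.single_apply, eq_comm]
  -- image of the simplex
  have hTsimplex : (T : _ → _) '' (convexHull ℝ (Set.range p)) = embeddedSimplex (m+1) := by
    have hTaff : (T : (Fin (m+1) → ℝ) → (Fin (m+1) → ℝ)) = ⇑T.toAffineMap := rfl
    rw [hTaff, AffineMap.image_convexHull]
    unfold embeddedSimplex
    congr 1
    ext x
    constructor
    · rintro ⟨_, ⟨j, rfl⟩, rfl⟩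
      rcases Nat.lt_or_ge (j : ℕ) m with h | h
      · right
        exact ⟨j, by omega, (hTp j h).symm ▸ rfl⟩
      · have : j = Fin.last m := Fin.ext (by have := j.is_lt; simp only [Fin.val_last]; omega)
        subst this
        left
        exact hTq ▸ rfl
    · rintro (rfl | ⟨i, hi, rfl⟩)
      · exact ⟨q, ⟨Fin.last m, rfl⟩, hTq⟩
      · exact ⟨p i, ⟨i, rfl⟩, hTp i (by omega)⟩
  -- affine independence of p
  have haff : AffineIndependent ℝ p := by
    rw [affineIndependent_iff_linearIndependent_vsub ℝ p (Fin.last m)]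
    have hfam : (fun i : {x : Fin (m+1) // x ≠ Fin.last m} => p ↑i -ᵥ p (Fin.last m))
        = fun i : {x : Fin (m+1) // x ≠ Fin.last m} => bfam (↑i : Fin (m+1)) := by
      funext i
      have h := Fin.val_lt_last i.2
      rw [hbfam]
      dsimp only
      rw [dif_pos h, vsub_eq_sub]
    rw [hfam]
    exact hli.comp Subtype.val Subtype.val_injective
  exact ⟨haff, T, hTlat, hTsimplex⟩

set_option maxHeartbeats 2000000 in
theorem main_aux (m : ℕ) (V : Finset (Fin (m+1) → ℝ))
    (hVlat : (V : Set (Fin (m+1) → ℝ)) ⊆ intLat (m+1))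
    (hdim : affineSpan ℝ (convexHull ℝ (V : Set (Fin (m+1) → ℝ))) = ⊤)
    (φ : (Fin (m+1) → ℝ) →ᵃ[ℝ] (Fin m → ℝ))
    (hsurj : Surjective φ)
    (hlat : ⇑φ '' intLat (m+1) = intLat m)
    (hproj : ⇑φ '' (convexHull ℝ (V : Set (Fin (m+1) → ℝ))) = unimodSimplex m) :
    ∃ v₁ v₂ : Fin (m+1) → ℝ, ∃ F₁ F₂ : Set (Fin (m+1) → ℝ),
      v₁ ≠ v₂ ∧
      IsFaceOf (segment ℝ v₁ v₂) (convexHull ℝ (V : Set (Fin (m+1) → ℝ))) ∧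
      IsUnimodularFacet F₁ (convexHull ℝ (V : Set (Fin (m+1) → ℝ))) ∧
      IsUnimodularFacet F₂ (convexHull ℝ (V : Set (Fin (m+1) → ℝ))) ∧ F₁ ≠ F₂ ∧
      v₁ ∈ F₁ ∧ v₂ ∈ F₂ ∧
      LinearMap.ker φ.linear = Submodule.span ℝ {v₂ - v₁} := by
  classical
  set L := φ.linear with hLdef
  have hLsub : ∀ x y, L (x - y) = φ x - φ y := by
    intro x y
    have h := φ.linearMap_vsub x y
    simpa [vsub_eq_sub] using h
  have hLsurj : Surjective L := by
    intro z
    obtain ⟨x, hx⟩ := hsurj (z + φ 0)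
    refine ⟨x, ?_⟩
    have h := hLsub x 0
    rw [sub_zero] at h
    rw [h, hx]
    abel
  have hrank : Module.finrank ℝ (Fin (m+1) → ℝ) = m + 1 := by
    simp [Module.finrank_fintype_fun_eq_card]
  have hrank' : Module.finrank ℝ (Fin m → ℝ) = m := by
    simp [Module.finrank_fintype_fun_eq_card]
  have hker1 : Module.finrank ℝ (LinearMap.ker L) = 1 := by
    have h1 := LinearMap.finrank_range_add_finrank_ker L
    rw [LinearMap.range_eq_top.2 hLsurj, finrank_top] at h1
    have h2 : Module.finrank ℝ (Fin (m+1-1) → ℝ) = m := hrank'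
    omega
  have hspan : ∀ u, L u = 0 → u ≠ 0 → Submodule.span ℝ {u} = LinearMap.ker L := by
    intro u hu hune
    refine Submodule.eq_of_le_of_finrank_eq ?_ ?_
    · rw [Submodule.span_le, Set.singleton_subset_iff]
      exact LinearMap.mem_ker.2 hu
    · rw [finrank_span_singleton hune, hker1]
  have hφl : ∀ z ∈ intLat (m+1), φ z ∈ intLat m := by
    intro z hz
    have : φ z ∈ φ '' intLat (m+1) := mem_image_of_mem φ hz
    rw [hlat] at this
    exact this
  have himg : convexHull ℝ (φ '' (V : Set (Fin (m+1) → ℝ))) = unimodSimplex m := by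
    rw [← AffineMap.image_convexHull]
    exact hproj
  -- classification of vertices into fibers
  have hclass : ∀ v ∈ V, ∃ j : Fin (m+1), φ v = vert m j := by
    intro v hv
    refine lattice_mem_unimodSimplex ?_ (hφl v (hVlat hv))
    rw [← hproj]
    exact mem_image_of_mem φ (subset_convexHull ℝ _ hv)
  choose jOf hjOf using hclass
  set Vj : Fin (m+1) → Finset (Fin (m+1) → ℝ) :=
    fun j => V.filter (fun v => φ v = vert m j) with hVjdef
  have hVjsub : ∀ j, ∀ v ∈ Vj j, v ∈ V := fun j v hv => (Finset.mem_filter.1 hv).1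
  have hVjval : ∀ j, ∀ v ∈ Vj j, φ v = vert m j := fun j v hv => (Finset.mem_filter.1 hv).2
  have hcover : ∀ (v) (hv : v ∈ V), v ∈ Vj (jOf v hv) := by
    intro v hv
    exact Finset.mem_filter.2 ⟨hv, hjOf v hv⟩
  -- each fiber is nonempty
  have hVjne : ∀ j, (Vj j).Nonempty := by
    intro j
    have hne : (V.image φ).Nonempty := by
      rcases Finset.eq_empty_or_nonempty V with rfl | h
      · exfalso
        have h0 : (0 : Fin m → ℝ) ∈ unimodSimplex m := subset_convexHull ℝ _ (mem_insert _ _)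
        rw [← himg] at h0
        simp at h0
      · exact h.image φ
    obtain ⟨y₀, hy₀, hy₀max⟩ := (V.image φ).exists_max_image (gfun m j) hne
    have hy₀Δ : y₀ ∈ unimodSimplex m := by
      rw [← himg]
      exact subset_convexHull ℝ _ (by simpa using hy₀)
    have hverth : vert m j ∈ convexHull ℝ ((V.image φ : Finset (Fin m → ℝ)) : Set (Fin m → ℝ)) := by
      have := vert_mem_unimodSimplex (m := m) j
      rw [← himg] at this
      simpa [Finset.coe_image] using this
    have hub : gfun m j (vert m j) ≤ gfun m j y₀ := by
      have hhalf : Convex ℝ {x : Fin m → ℝ | gfun m j x ≤ gfun m j y₀} :=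
        convex_halfSpace_le (gfun m j).isLinear _
      exact convexHull_min (fun w hw => hy₀max w (by simpa using hw)) hhalf hverth
    have hlb := (gfun_le j hy₀Δ).1
    have heq : gfun m j y₀ = gfun m j (vert m j) := le_antisymm hlb hub
    have hy₀v := (gfun_le j hy₀Δ).2 heq
    obtain ⟨v, hv, hφv⟩ := Finset.mem_image.1 hy₀
    exact ⟨v, Finset.mem_filter.2 ⟨hv, by rw [hφv, hy₀v]⟩⟩
  -- a coordinate functional injective on fibers
  obtain ⟨w₀, hw₀ker, hw₀ne⟩ : ∃ w₀, w₀ ∈ LinearMap.ker L ∧ w₀ ≠ 0 := by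
    by_contra hc
    push_neg at hc
    have : LinearMap.ker L = ⊥ := (Submodule.eq_bot_iff _).2 hc
    rw [this, finrank_bot] at hker1
    omega
  obtain ⟨k0, hk0⟩ : ∃ k0, w₀ k0 ≠ 0 := by
    by_contra hc
    push_neg at hc
    exact hw₀ne (funext hc)
  set c : (Fin (m+1) → ℝ) →ₗ[ℝ] ℝ := LinearMap.proj k0 with hcdef
  have hcinj : ∀ x, L x = 0 → c x = 0 → x = 0 := by
    intro x hx hcx
    have hx' : x ∈ Submodule.span ℝ {w₀} := by
      rw [hspan w₀ hw₀ker hw₀ne]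
      exact LinearMap.mem_ker.2 hx
    obtain ⟨t, rfl⟩ := Submodule.mem_span_singleton.1 hx'
    have : t * w₀ k0 = 0 := hcx
    rcases mul_eq_zero.1 this with h | h
    · rw [h, zero_smul]
    · exact absurd h hk0
  have hfib : ∀ (x y : Fin (m+1) → ℝ), φ x = φ y → c x = c y → x = y := by
    intro x y hφ hc
    have h1 : L (x - y) = 0 := by rw [hLsub, hφ, sub_self]
    have h2 : c (x - y) = 0 := by rw [map_sub, hc, sub_self]
    have := hcinj _ h1 h2
    exact sub_eq_zero.1 this
  -- minima and maxima along fibers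
  have hminex : ∀ j, ∃ v ∈ Vj j, ∀ v' ∈ Vj j, c v ≤ c v' :=
    fun j => (Vj j).exists_min_image c (hVjne j)
  have hmaxex : ∀ j, ∃ v ∈ Vj j, ∀ v' ∈ Vj j, c v' ≤ c v :=
    fun j => (Vj j).exists_max_image c (hVjne j)
  choose a ha hamin using hminex
  choose b hb hbmax using hmaxex
  -- some fiber is nondegenerate
  have hedge : ∃ j, a j ≠ b j := by
    by_contra hc
    push_neg at hc
    have hdeg : ∀ j, ∀ v ∈ Vj j, v = a j := by
      intro j v hv
      refine hfib v (a j) ?_ ?_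
      · rw [hVjval j v hv, hVjval j (a j) (ha j)]
      · refine le_antisymm ?_ (hamin j v hv)
        rw [hc j]
        exact hbmax j v hv
    have hVsub : (V : Set (Fin (m+1) → ℝ)) ⊆ Set.range a := by
      intro v hv
      have hv' : v ∈ V := hv
      exact ⟨jOf v hv', (hdeg _ v (hcover v hv')).symm⟩
    have h1 : affineSpan ℝ (V : Set (Fin (m+1) → ℝ)) = ⊤ := by
      rw [affineSpan_convexHull] at hdim
      exact hdim
    have h2 : (⊤ : AffineSubspace ℝ (Fin (m+1) → ℝ)) ≤ affineSpan ℝ (Set.range a) := by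
      rw [← h1]
      exact affineSpan_mono ℝ hVsub
    have h3 : (⊤ : AffineSubspace ℝ (Fin (m+1) → ℝ)).direction ≤
        (affineSpan ℝ (Set.range a)).direction := AffineSubspace.direction_le h2
    have h4 : Module.finrank ℝ (⊤ : AffineSubspace ℝ (Fin (m+1) → ℝ)).direction ≤
        Module.finrank ℝ (affineSpan ℝ (Set.range a)).direction :=
      Submodule.finrank_mono h3
    rw [AffineSubspace.direction_top] at h4
    have h5 := finrank_vectorSpan_range_le ℝ a (n := m) (by simp)
    rw [direction_affineSpan] at h4
    rw [finrank_top, hrank] at h4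
    omega
  obtain ⟨js, hjs⟩ := hedge
  set v₁ := a js with hv₁def
  set v₂ := b js with hv₂def
  set w : Fin (m+1) → ℝ := v₂ - v₁ with hwdef
  have hwne : w ≠ 0 := sub_ne_zero.2 (Ne.symm hjs)
  have hwker : L w = 0 := by
    rw [hwdef, hLsub, hVjval js _ (hb js), hVjval js _ (ha js), sub_self]
  have hwlat : w ∈ intLat (m+1) :=
    intLat_mem_grp.1 ((intLatGrp (m+1)).sub_mem
      (intLat_mem_grp.2 (hVlat (hVjsub js _ (hb js))))
      (intLat_mem_grp.2 (hVlat (hVjsub js _ (ha js)))))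
  have hkerspan : LinearMap.ker L = Submodule.span ℝ {w} := (hspan w hwker hwne).symm
  have hcab : c v₁ < c v₂ := by
    refine lt_of_le_of_ne (hamin js _ (hb js)) ?_
    intro hceq
    exact hjs (hfib v₁ v₂ (by rw [hVjval js _ (ha js), hVjval js _ (hb js)]) hceq)
  -- construct a generator e of ker L ∩ ℤ^{m+1}
  obtain ⟨k0w, hk0w⟩ : ∃ k, w k ≠ 0 := by
    by_contra hc
    push_neg at hc
    exact hwne (funext hc)
  obtain ⟨N, hN⟩ := hwlat k0w
  have hNne : (N : ℝ) ≠ 0 := by rw [← hN]; exact hk0w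
  have hNne' : N ≠ 0 := by exact_mod_cast hNne
  set H : AddSubgroup ℤ :=
    { carrier := {k : ℤ | ((k : ℝ) / N) • w ∈ intLat (m+1)},
      add_mem' := by
        intro x y hx hy
        have : ((((x + y) : ℤ) : ℝ) / N) • w = ((x : ℝ)/N) • w + ((y : ℝ)/N) • w := by
          push_cast
          rw [add_div, add_smul]
        rw [Set.mem_setOf_eq, this]
        exact intLat_mem_grp.1 ((intLatGrp (m+1)).add_mem (intLat_mem_grp.2 hx) (intLat_mem_grp.2 hy))
      zero_mem' := by
        simp only [Set.mem_setOf_eq, Int.cast_zero, zero_div, zero_smul]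
        exact intLat_mem_grp.1 (intLatGrp (m+1)).zero_mem
      neg_mem' := by
        intro x hx
        have : (((-x : ℤ) : ℝ) / N) • w = -(((x : ℝ)/N) • w) := by
          push_cast
          rw [neg_div, neg_smul]
        rw [Set.mem_setOf_eq, this]
        exact intLat_mem_grp.1 ((intLatGrp (m+1)).neg_mem (intLat_mem_grp.2 hx)) } with hHdef
  have hHmem : ∀ k : ℤ, k ∈ H ↔ ((k : ℝ) / N) • w ∈ intLat (m+1) := fun k => Iff.rfl
  have hNH : N ∈ H := by
    rw [hHmem, div_self hNne, one_smul]
    exact hwlat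
  obtain ⟨g, hg⟩ := Int.subgroup_cyclic H
  have hgH : g ∈ H := by
    rw [hg]
    exact AddSubgroup.subset_closure (Set.mem_singleton g)
  have hgne : g ≠ 0 := by
    intro hg0
    rw [hg, hg0] at hNH
    obtain ⟨k, hk⟩ := AddSubgroup.mem_closure_singleton.1 hNH
    rw [smul_zero] at hk
    exact hNne' hk.symm
  set e : Fin (m+1) → ℝ := ((g : ℝ) / N) • w with hedef
  have heLat : e ∈ intLat (m+1) := (hHmem g).1 hgH
  have heK : L e = 0 := by rw [hedef, map_smul, hwker, smul_zero]
  have hene : e ≠ 0 := by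
    rw [hedef]
    exact smul_ne_zero (div_ne_zero (by exact_mod_cast hgne) hNne) hwne
  have hgen : ∀ x, L x = 0 → x ∈ intLat (m+1) → ∃ k : ℤ, x = (k : ℝ) • e := by
    intro x hx hxlat
    have hx' : x ∈ Submodule.span ℝ {w} := by
      rw [hspan w hwker hwne]
      exact LinearMap.mem_ker.2 hx
    obtain ⟨t, rfl⟩ := Submodule.mem_span_singleton.1 hx'
    obtain ⟨K, hK⟩ := hxlat k0w
    have htK : t = (K : ℝ) / N := by
      have h' : t * w k0w = K := hK
      rw [← hN]
      field_simp [hk0w] at h' ⊢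
      linarith
    have hKH : K ∈ H := by
      rw [hHmem, ← htK]
      exact hxlat
    rw [hg] at hKH
    obtain ⟨cc, hcc⟩ := AddSubgroup.mem_closure_singleton.1 hKH
    refine ⟨cc, ?_⟩
    rw [hedef, htK, ← hcc, smul_smul]
    congr 1
    rw [zsmul_eq_mul]
    push_cast
    ring
  -- generic construction of the bottom facet w.r.t. a functional c'
  have faceOf : ∀ (c' : (Fin (m+1) → ℝ) →ₗ[ℝ] ℝ) (fam : Fin (m+1) → (Fin (m+1) → ℝ)),
      (∀ j, fam j ∈ Vj j) → (∀ j, ∀ v ∈ Vj j, c' (fam j) ≤ c' v) →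
      (∀ x, L x = 0 → c' x = 0 → x = 0) →
      ∃ f : (Fin (m+1) → ℝ) →ₗ[ℝ] ℝ,
        {x ∈ convexHull ℝ (V : Set (Fin (m+1) → ℝ)) |
            ∀ y ∈ convexHull ℝ (V : Set (Fin (m+1) → ℝ)), f y ≤ f x}
          = convexHull ℝ (Set.range fam) ∧
        (∀ j, ∀ v ∈ Vj j, f v = f (fam (Fin.last m)) + (c' (fam j) - c' v)) ∧
        (∀ x ∈ convexHull ℝ (Set.range fam), f x = f (fam (Fin.last m))) := by
    intro c' fam hfamV hfammin hc'inj
    set κ : ℝ := c' (fam (Fin.last m)) with hκ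
    set hh : (Fin m → ℝ) →ₗ[ℝ] ℝ :=
      ∑ i : Fin m, (c' (fam i.castSucc) - κ) • LinearMap.proj i with hhdef
    have hhvert : ∀ j, hh (vert m j) = c' (fam j) - κ := by
      intro j
      unfold vert
      split
      · rename_i h
        rw [hhdef]
        simp only [LinearMap.coe_sum, Finset.sum_apply, LinearMap.smul_apply,
          LinearMap.proj_apply, smul_eq_mul, Pi.single_apply, mul_ite, mul_one, mul_zero]
        rw [Finset.sum_ite_eq' Finset.univ (⟨j, h⟩ : Fin m)
          (fun i => c' (fam i.castSucc) - κ), if_pos (Finset.mem_univ _)]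
        congr 2
      · rename_i h
        have hj : j = Fin.last m := Fin.ext (by have := j.is_lt; simp only [Fin.val_last]; omega)
        rw [map_zero, hj, ← hκ, sub_self]
    set C : ℝ := hh (φ 0) with hC
    set f : (Fin (m+1) → ℝ) →ₗ[ℝ] ℝ := hh.comp L - c' with hf
    have hform : ∀ j, ∀ v ∈ Vj j, f v = c' (fam j) - κ - C - c' v := by
      intro j v hv
      rw [hf]
      simp only [LinearMap.sub_apply, LinearMap.comp_apply]
      have h1 : L v = φ v - φ 0 := by rw [← hLsub v 0, sub_zero]
      rw [h1, map_sub, hVjval j v hv, hhvert j, ← hC]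
      try ring
    have hfamlastVj : fam (Fin.last m) ∈ Vj (Fin.last m) := hfamV _
    have hflast : f (fam (Fin.last m)) = -κ - C := by
      rw [hform _ _ hfamlastVj, ← hκ]; ring
    have hvals : ∀ j, ∀ v ∈ Vj j, f v = f (fam (Fin.last m)) + (c' (fam j) - c' v) := by
      intro j v hv; rw [hform j v hv, hflast]; ring
    have hv₀V : fam (Fin.last m) ∈ V := hVjsub _ _ hfamlastVj
    have hmaxf : ∀ u ∈ V, f u ≤ f (fam (Fin.last m)) := by
      intro u hu
      rw [hvals (jOf u hu) u (hcover u hu)]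
      have := hfammin (jOf u hu) u (hcover u hu)
      linarith
    have hface := argmax_face V f (fam (Fin.last m)) hv₀V hmaxf
    have hsets : ((V.filter fun v => f v = f (fam (Fin.last m))) : Set (Fin (m+1) → ℝ))
        = Set.range fam := by
      ext v
      simp only [Finset.coe_filter, Set.mem_setOf_eq, Set.mem_range]
      constructor
      · rintro ⟨hvV, hfv⟩
        refine ⟨jOf v hvV, ?_⟩
        have h2 := hvals (jOf v hvV) v (hcover v hvV)
        have h3 : c' (fam (jOf v hvV)) = c' v := by rw [hfv] at h2; linarith
        have h4 : φ (fam (jOf v hvV)) = φ v := by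
          rw [hVjval _ _ (hfamV (jOf v hvV)), hVjval _ _ (hcover v hvV)]
        have h5 : L (fam (jOf v hvV) - v) = 0 := by rw [hLsub, h4, sub_self]
        have h6 : c' (fam (jOf v hvV) - v) = 0 := by rw [map_sub, h3, sub_self]
        exact sub_eq_zero.1 (hc'inj _ h5 h6)
      · rintro ⟨j, rfl⟩
        exact ⟨hVjsub _ _ (hfamV j), by rw [hvals j _ (hfamV j)]; ring⟩
    have hconst : ∀ x ∈ convexHull ℝ (Set.range fam), f x = f (fam (Fin.last m)) := by
      intro x hx
      have hcv : Convex ℝ {y : Fin (m+1) → ℝ | f y = f (fam (Fin.last m))} := by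
        have hseteq : {y : Fin (m+1) → ℝ | f y = f (fam (Fin.last m))}
            = {y | f y ≤ f (fam (Fin.last m))} ∩ {y | f (fam (Fin.last m)) ≤ f y} := by
          ext y
          simp only [Set.mem_setOf_eq, Set.mem_inter_iff]
          constructor
          · intro h; exact ⟨le_of_eq h, le_of_eq h.symm⟩
          · intro h; exact le_antisymm h.1 h.2
        rw [hseteq]
        exact (convex_halfSpace_le f.isLinear _).inter (convex_halfSpace_ge f.isLinear _)
      refine convexHull_min ?_ hcv hx
      rintro y ⟨j, rfl⟩
      simp only [Set.mem_setOf_eq]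
      rw [hvals j _ (hfamV j)]
      ring
    refine ⟨f, ?_, hvals, hconst⟩
    rw [hface, hsets]
  obtain ⟨f₁, hface₁, hvals₁, hconst₁⟩ := faceOf c a ha hamin hcinj
  obtain ⟨f₂, hface₂, hvals₂, hconst₂⟩ := faceOf (-c) b hb
    (fun j v hv => by
      simp only [LinearMap.neg_apply, neg_le_neg_iff]
      exact hbmax j v hv)
    (fun x h1 h2 => hcinj x h1 (by simpa using h2))
  -- unimodularity data for the two facets
  have hφa : ∀ j, φ (a j) = vert m j := fun j => hVjval j _ (ha j)
  have hφb : ∀ j, φ (b j) = vert m j := fun j => hVjval j _ (hb j)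
  have hal : ∀ j, a j ∈ intLat (m+1) := fun j => hVlat (hVjsub j _ (ha j))
  have hbl : ∀ j, b j ∈ intLat (m+1) := fun j => hVlat (hVjsub j _ (hb j))
  obtain ⟨haffA, TA, hTAlat, hTAimg⟩ := unimod_aux φ e hene heK heLat hgen hφl a hal hφa
  obtain ⟨haffB, TB, hTBlat, hTBimg⟩ := unimod_aux φ e hene heK heLat hgen hφl b hbl hφb
  have hdimA : dimOf (convexHull ℝ (Set.range a)) = m := by
    unfold dimOf
    rw [affineSpan_convexHull, direction_affineSpan]
    exact haffA.finrank_vectorSpan (by simp)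
  have hdimB : dimOf (convexHull ℝ (Set.range b)) = m := by
    unfold dimOf
    rw [affineSpan_convexHull, direction_affineSpan]
    exact haffB.finrank_vectorSpan (by simp)
  -- the edge is a face
  have hedgeface : IsFaceOf (segment ℝ v₁ v₂) (convexHull ℝ (V : Set (Fin (m+1) → ℝ))) := by
    refine ⟨(gfun m js).comp L, ?_⟩
    have hmax : ∀ u ∈ V, ((gfun m js).comp L) u ≤ ((gfun m js).comp L) v₁ := by
      intro u hu
      simp only [LinearMap.comp_apply]
      have h1 : L u = φ u - φ 0 := by rw [← hLsub u 0, sub_zero]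
      have h1' : L v₁ = φ v₁ - φ 0 := by rw [← hLsub v₁ 0, sub_zero]
      rw [h1, h1', map_sub, map_sub]
      have h2 : gfun m js (φ u) ≤ gfun m js (φ v₁) := by
        rw [hjOf u hu, hVjval js _ (ha js)]
        exact (gfun_le js (vert_mem_unimodSimplex _)).1
      linarith
    have hface := argmax_face V ((gfun m js).comp L) v₁ (hVjsub js _ (ha js)) hmax
    have hfeq : (V.filter fun v => ((gfun m js).comp L) v = ((gfun m js).comp L) v₁) = Vj js := by
      apply Finset.filter_congr
      intro v hv
      simp only [LinearMap.comp_apply]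
      have h1 : L v = φ v - φ 0 := by rw [← hLsub v 0, sub_zero]
      have h1' : L v₁ = φ v₁ - φ 0 := by rw [← hLsub v₁ 0, sub_zero]
      rw [h1, h1', map_sub, map_sub, hVjval js _ (ha js)]
      constructor
      · intro hvv
        have h3 : gfun m js (φ v) = gfun m js (vert m js) := by linarith
        exact (gfun_le js (by rw [← hproj]; exact mem_image_of_mem φ (subset_convexHull ℝ _ hv))).2 h3
      · intro hvv
        rw [hvv]
    rw [hface, hfeq]
    apply Set.Subset.antisymm
    · rw [← convexHull_pair]
      apply convexHull_mono
      intro x hx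
      rcases hx with rfl | hx
      · exact ha js
      · rw [Set.mem_singleton_iff] at hx
        subst hx
        exact hb js
    · refine convexHull_min ?_ (convex_segment v₁ v₂)
      intro v hv
      have hv' : v ∈ Vj js := hv
      have h5 : L (v - v₁) = 0 := by
        rw [hLsub, hVjval js _ hv', hVjval js _ (ha js), sub_self]
      have h6 : v - v₁ ∈ Submodule.span ℝ {w} := by
        rw [← hkerspan]
        exact LinearMap.mem_ker.2 h5
      obtain ⟨t, ht⟩ := Submodule.mem_span_singleton.1 h6
      have hcw : c w = c v₂ - c v₁ := by rw [hwdef, map_sub]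
      have hcwpos : 0 < c w := by rw [hcw]; linarith
      have htval : t * c w = c v - c v₁ := by
        have h7 := congrArg c ht
        simpa only [map_smul, map_sub, smul_eq_mul] using h7
      have hvlow := hamin js v hv'
      have hvhigh := hbmax js v hv'
      have ht0 : 0 ≤ t := by nlinarith
      have ht1 : t ≤ 1 := by nlinarith
      rw [segment_eq_image']
      refine ⟨t, ⟨ht0, ht1⟩, ?_⟩
      show v₁ + t • (v₂ - v₁) = v
      rw [← hwdef, ht]
      abel
  -- the two facets are distinct
  have hFne : convexHull ℝ (Set.range a) ≠ convexHull ℝ (Set.range b) := by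
    intro heq
    have hv₂mem : v₂ ∈ convexHull ℝ (Set.range a) := by
      rw [heq]
      exact subset_convexHull ℝ _ ⟨js, rfl⟩
    have h1 := hconst₁ v₂ hv₂mem
    have h2 := hvals₁ js v₂ (hb js)
    rw [h1] at h2
    have h3 : c (a js) = c v₂ := by linarith
    have h4 : c v₁ = c (a js) := by rw [hv₁def]
    linarith
  exact ⟨v₁, v₂, convexHull ℝ (Set.range a), convexHull ℝ (Set.range b), hjs, hedgeface,
    ⟨⟨f₁, hface₁.symm⟩, hdimA, TA, hTAlat, hTAimg⟩,
    ⟨⟨f₂, hface₂.symm⟩, hdimB, TB, hTBlat, hTBimg⟩,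
    hFne,
    subset_convexHull ℝ _ ⟨js, rfl⟩,
    subset_convexHull ℝ _ ⟨js, rfl⟩,
    hkerspan⟩

/-- If a lattice projection maps an `n`-dimensional lattice polytope `P` onto
`Δₙ₋₁`, then its kernel is spanned by an edge of `P` joining two distinct
unimodular facets. -/
theorem kernel_is_edge_direction (n : ℕ) (hn : 1 ≤ n) (P : Set (Fin n → ℝ))
    (hP : IsLatticePolytope P) (hdim : affineSpan ℝ P = ⊤)
    (φ : (Fin n → ℝ) →ᵃ[ℝ] (Fin (n - 1) → ℝ))
    (hsurj : Surjective φ)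
    (hlat : φ '' intLat n = intLat (n - 1))
    (hproj : φ '' P = unimodSimplex (n - 1)) :
    ∃ v₁ v₂ : Fin n → ℝ, ∃ F₁ F₂ : Set (Fin n → ℝ),
      v₁ ≠ v₂ ∧
      IsFaceOf (segment ℝ v₁ v₂) P ∧
      IsUnimodularFacet F₁ P ∧ IsUnimodularFacet F₂ P ∧ F₁ ≠ F₂ ∧
      v₁ ∈ F₁ ∧ v₂ ∈ F₂ ∧
      LinearMap.ker φ.linear = Submodule.span ℝ {v₂ - v₁} := by
  obtain ⟨m, rfl⟩ : ∃ m, n = m + 1 := ⟨n - 1, by omega⟩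
  obtain ⟨V, hVlat, rfl⟩ := hP
  exact main_aux m V hVlat hdim φ hsurj hlat hproj
end

section
/- Let P ⊂ ℝⁿ be an n-dimensional lattice polytope admitting two distinct lattice projections φ₁, φ₂: ℝⁿ → ℝⁿ⁻¹, each mapping P onto Δₙ₋₁. Then P is equivalent either to the unimodular simplex Δₙ or to the (n−2)-fold lattice pyramid 𝒫^{n−2}(□₂) over the unit square □₂. -/
open Set Pointwise Function

/-- The `(n-2)`-fold lattice pyramid over the unit square `□₂`, realized as
`conv(0, e₁, …, eₙ, e₁ + e₂) ⊂ ℝⁿ`. -/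
def sqPyr (n : ℕ) (hn : 2 ≤ n) : Set (Fin n → ℝ) :=
  convexHull ℝ
    (insert (Pi.single (⟨0, by omega⟩ : Fin n) (1 : ℝ) +
        Pi.single (⟨1, by omega⟩ : Fin n) (1 : ℝ))
      (insert 0 (Set.range fun i : Fin n => Pi.single i (1 : ℝ))))

/-- Equivalence of lattice polytopes: an affine lattice-preserving transformation
maps one onto the other. -/
def PolyEquiv {n : ℕ} (P Q : Set (Fin n → ℝ)) : Prop :=
  ∃ T : (Fin n → ℝ) ≃ᵃ[ℝ] (Fin n → ℝ),
    (T : (Fin n → ℝ) → (Fin n → ℝ)) '' intLat n = intLat n ∧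
    (T : (Fin n → ℝ) → (Fin n → ℝ)) '' P = Q

namespace TwoProj

-- === from a.lean ===


lemma intLat_zero {k : ℕ} : (0 : Fin k → ℝ) ∈ intLat k := fun i => ⟨0, by simp⟩

lemma intLat_add {k : ℕ} {x y : Fin k → ℝ} (hx : x ∈ intLat k) (hy : y ∈ intLat k) :
    x + y ∈ intLat k := fun i => by
  obtain ⟨a, ha⟩ := hx i; obtain ⟨b, hb⟩ := hy i
  exact ⟨a + b, by simp [ha, hb]⟩

lemma intLat_neg {k : ℕ} {x : Fin k → ℝ} (hx : x ∈ intLat k) : -x ∈ intLat k := fun i => by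
  obtain ⟨a, ha⟩ := hx i; exact ⟨-a, by simp [ha]⟩

lemma intLat_sub {k : ℕ} {x y : Fin k → ℝ} (hx : x ∈ intLat k) (hy : y ∈ intLat k) :
    x - y ∈ intLat k := by
  rw [sub_eq_add_neg]; exact intLat_add hx (intLat_neg hy)

lemma intLat_zsmul {k : ℕ} {x : Fin k → ℝ} (hx : x ∈ intLat k) (c : ℤ) :
    (c : ℝ) • x ∈ intLat k := fun i => by
  obtain ⟨a, ha⟩ := hx i; exact ⟨c * a, by simp [ha]⟩

lemma intLat_single {k : ℕ} (i : Fin k) : Pi.single i (1 : ℝ) ∈ intLat k := fun j => by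
  classical
  by_cases h : j = i
  · subst h; exact ⟨1, by simp⟩
  · exact ⟨0, by simp [Pi.single_apply, h]⟩



-- === from b.lean ===


def vtx (m : ℕ) : Fin (m + 1) → (Fin m → ℝ) := Fin.cases 0 fun i => Pi.single i 1

variable {m : ℕ}

lemma range_vtx : Set.range (vtx m) = insert 0 (Set.range fun i : Fin m => Pi.single i (1 : ℝ)) := by
  ext x
  simp only [Set.mem_range, Set.mem_insert_iff]
  constructor
  · rintro ⟨j, rfl⟩
    refine Fin.cases (Or.inl rfl) (fun i => Or.inr ⟨i, rfl⟩) j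
  · rintro (rfl | ⟨i, rfl⟩)
    · exact ⟨0, rfl⟩
    · exact ⟨i.succ, rfl⟩

lemma unimodSimplex_eq : unimodSimplex m = convexHull ℝ (Set.range (vtx m)) := by
  rw [unimodSimplex, range_vtx]

lemma sum_single (i : Fin m) : ∑ j, Pi.single i (1 : ℝ) j = 1 := by
  classical
  simp [Pi.single_apply]

lemma simplex_subset :
    unimodSimplex m ⊆ {x | (∀ i, 0 ≤ x i) ∧ ∑ i, x i ≤ 1} := by
  apply convexHull_min
  · rintro x (rfl | ⟨i, rfl⟩)
    · constructor
      · intro i; simp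
      · simp
    · constructor
      · intro j; classical simp [Pi.single_apply]; positivity
      · rw [sum_single]
  · intro x hx y hy a b ha hb hab
    constructor
    · intro i
      have := hx.1 i; have := hy.1 i
      simp only [Pi.add_apply, Pi.smul_apply, smul_eq_mul]
      nlinarith
    · have hx2 := hx.2; have hy2 := hy.2
      simp only [Pi.add_apply, Pi.smul_apply, smul_eq_mul, Finset.sum_add_distrib,
        ← Finset.mul_sum]
      nlinarith

lemma vtx_mem_simplex (j : Fin (m + 1)) : vtx m j ∈ unimodSimplex m := by
  rw [unimodSimplex_eq]
  exact subset_convexHull ℝ _ ⟨j, rfl⟩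

lemma lattice_mem_simplex {x : Fin m → ℝ} (hx : x ∈ unimodSimplex m)
    (hl : x ∈ intLat m) : ∃ j, x = vtx m j := by
  classical
  obtain ⟨hnn, hsum⟩ := simplex_subset hx
  by_cases h0 : ∀ i, x i = 0
  · exact ⟨0, funext fun i => h0 i⟩
  · push_neg at h0
    obtain ⟨i, hi⟩ := h0
    obtain ⟨k, hk⟩ := hl i
    have hk1 : (1 : ℝ) ≤ x i := by
      rw [hk]
      have : 0 < (k : ℝ) := lt_of_le_of_ne (hk ▸ hnn i) (by simpa [eq_comm, hk] using hi)
      exact_mod_cast this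
    have hrest : ∑ j ∈ Finset.univ.erase i, x j ≤ 0 := by
      have : x i + ∑ j ∈ Finset.univ.erase i, x j = ∑ j, x j := by
        rw [Finset.add_sum_erase _ _ (Finset.mem_univ i)]
      linarith
    have hzero : ∀ j ∈ Finset.univ.erase i, x j = 0 := by
      intro j hj
      by_contra hne
      have hpos : 0 < x j := lt_of_le_of_ne (hnn j) (Ne.symm hne)
      have : 0 < ∑ j ∈ Finset.univ.erase i, x j :=
        Finset.sum_pos' (fun l _ => hnn l) ⟨j, hj, hpos⟩
      linarith
    have hxi : x i = 1 := by
      have : x i + ∑ j ∈ Finset.univ.erase i, x j = ∑ j, x j := by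
        rw [Finset.add_sum_erase _ _ (Finset.mem_univ i)]
      have hr0 : ∑ j ∈ Finset.univ.erase i, x j = 0 :=
        le_antisymm hrest (Finset.sum_nonneg fun l _ => hnn l)
      nlinarith [hsum, this]
    refine ⟨i.succ, funext fun j => ?_⟩
    by_cases hji : j = i
    · subst hji; simp [vtx, hxi]
    · have : x j = 0 := hzero j (by simp [hji])
      simp [vtx, this, Pi.single_apply, hji]



-- === from c.lean ===


variable {m : ℕ}

lemma sum_single' (i : Fin m) : ∑ j, Pi.single i (1 : ℝ) j = 1 := by
  classical
  simp [Pi.single_apply]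

/-- Vertices of the simplex contain no 3-term arithmetic progression. -/
lemma no_threeAP {a b c : Fin m → ℝ}
    (ha : a = 0 ∨ ∃ i, a = Pi.single i 1) (hb : b = 0 ∨ ∃ i, b = Pi.single i 1)
    (hc : c = 0 ∨ ∃ i, c = Pi.single i 1)
    (heq : a + c = b + b) (hne : a ≠ b) : False := by
  classical
  rcases ha with rfl | ⟨i1, rfl⟩
  · rcases hb with rfl | ⟨i2, rfl⟩
    · exact hne rfl
    · rcases hc with rfl | ⟨i3, rfl⟩
      · have := congrFun heq i2; simp [Pi.single_apply] at this; linarith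
      · have := congrFun heq i2
        simp only [Pi.add_apply, Pi.zero_apply, Pi.single_apply, if_pos rfl] at this
        split_ifs at this <;> linarith
  · rcases hb with rfl | ⟨i2, rfl⟩
    · rcases hc with rfl | ⟨i3, rfl⟩
      · have := congrFun heq i1; simp [Pi.single_apply] at this
      · have := congrFun heq i1
        simp only [Pi.add_apply, Pi.zero_apply, Pi.single_apply, if_pos rfl] at this
        split_ifs at this <;> linarith
    · have hi12 : i1 ≠ i2 := by rintro rfl; exact hne rfl
      rcases hc with rfl | ⟨i3, rfl⟩
      · have := congrFun heq i1
        simp only [Pi.add_apply, Pi.zero_apply, Pi.single_apply, if_pos rfl, if_true,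
          if_neg (show ¬ i1 = i2 from hi12)] at this
        linarith
      · have := congrFun heq i1
        simp only [Pi.add_apply, Pi.single_apply, if_pos rfl, if_true,
          if_neg (show ¬ i1 = i2 from hi12)] at this
        split_ifs at this <;> linarith

/-- Two parallel lattice segments inside the simplex vertex set must share their base. -/
lemma parallelogram {a b d : Fin m → ℝ}
    (ha : a = 0 ∨ ∃ i, a = Pi.single i 1) (hb : b = 0 ∨ ∃ i, b = Pi.single i 1)
    (ha' : a + d = 0 ∨ ∃ i, a + d = Pi.single i 1)
    (hb' : b + d = 0 ∨ ∃ i, b + d = Pi.single i 1)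
    (hd : d ≠ 0) : a = b := by
  classical
  have sumsingle : ∀ i : Fin m, ∑ j, Pi.single i (1 : ℝ) j = 1 := sum_single'
  rcases ha with rfl | ⟨i, rfl⟩
  · rcases ha' with h | ⟨k, hk⟩
    · exact absurd (by simpa using h) hd
    rw [zero_add] at hk; subst hk
    rcases hb with rfl | ⟨j, rfl⟩
    · rfl
    · exfalso
      rcases hb' with h | ⟨l, hl⟩
      · have := congrFun h j
        simp only [Pi.add_apply, Pi.single_apply, if_pos rfl, if_true, Pi.zero_apply] at this
        split_ifs at this <;> linarith
      · have h1 := congrArg (fun x => ∑ r, x r) hl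
        simp only [Pi.add_apply, Finset.sum_add_distrib, sumsingle] at h1
        linarith
  · rcases ha' with h | ⟨k, hk⟩
    · have hd' : d = -Pi.single i 1 := by
        have := congrArg (fun x => -Pi.single i (1:ℝ) + x) h
        simpa [← add_assoc] using this
      subst hd'
      rcases hb with rfl | ⟨j, rfl⟩
      · exfalso
        rcases hb' with h' | ⟨l, hl⟩
        · have := congrFun h' i; simp [Pi.single_apply] at this
        · have h1 := congrArg (fun x => ∑ r, x r) hl
          simp only [Pi.add_apply, Pi.neg_apply, Pi.zero_apply, zero_add,
            Finset.sum_neg_distrib, sumsingle] at h1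
          linarith
      · rcases hb' with h' | ⟨l, hl⟩
        · have := congrFun h' i
          simp only [Pi.add_apply, Pi.single_apply, Pi.neg_apply, if_pos rfl, if_true,
            Pi.zero_apply] at this
          split_ifs at this with hji
          · rw [hji]
          · linarith
        · exfalso
          have h1 := congrArg (fun x => ∑ r, x r) hl
          simp only [Pi.add_apply, Pi.neg_apply, Finset.sum_add_distrib,
            Finset.sum_neg_distrib, sumsingle] at h1
          linarith
    · have hki : k ≠ i := by
        rintro rfl
        apply hd
        have := congrArg (fun x => x - Pi.single k (1:ℝ)) hk
        simpa using this
      have hd' : d = Pi.single k 1 - Pi.single i 1 := by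
        have := congrArg (fun x => x - Pi.single i (1:ℝ)) hk
        simpa [add_sub_cancel_left] using this
      subst hd'
      rcases hb with rfl | ⟨j, rfl⟩
      · exfalso
        rcases hb' with h' | ⟨l, hl⟩
        · have := congrFun h' k
          simp only [Pi.add_apply, Pi.sub_apply, Pi.single_apply, if_pos rfl, if_true,
            Pi.zero_apply, if_neg (show ¬ k = i from hki)] at this
          linarith
        · have h1 := congrArg (fun x => ∑ r, x r) hl
          simp only [Pi.add_apply, Pi.sub_apply, Pi.zero_apply, zero_add,
            Finset.sum_sub_distrib, sumsingle] at h1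
          linarith
      · rcases hb' with h' | ⟨l, hl⟩
        · exfalso
          have h1 := congrArg (fun x => ∑ r, x r) h'
          simp only [Pi.add_apply, Pi.sub_apply, Finset.sum_add_distrib,
            Finset.sum_sub_distrib, sumsingle] at h1
          simp at h1
        · have := congrFun hl i
          simp only [Pi.add_apply, Pi.sub_apply, Pi.single_apply, if_pos rfl, if_true] at this
          have hji : j = i := by
            by_contra hji
            rw [if_neg (fun h => hji h.symm), if_neg (fun h => hki h.symm)] at this
            split_ifs at this <;> linarith
          rw [hji]



-- === from d.lean ===


variable {m : ℕ}

/-- The linear part of a lattice-preserving affine map preserves the lattice. -/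
lemma linear_lattice (φ : (Fin (m+1) → ℝ) →ᵃ[ℝ] (Fin m → ℝ))
    (hl : φ '' intLat (m+1) = intLat m) {x : Fin (m+1) → ℝ} (hx : x ∈ intLat (m+1)) :
    φ.linear x ∈ intLat m := by
  have h0 : φ 0 ∈ intLat m := hl ▸ ⟨0, intLat_zero, rfl⟩
  have hx' : φ x ∈ intLat m := hl ▸ ⟨x, hx, rfl⟩
  have : φ.linear x = φ x - φ 0 := by
    have := φ.linearMap_vsub x 0
    simpa [vsub_eq_sub] using this
  rw [this]; exact intLat_sub hx' h0

/-- There is a nonzero lattice vector in the kernel of the linear part. -/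
lemma exists_lattice_kernel (φ : (Fin (m+1) → ℝ) →ᵃ[ℝ] (Fin m → ℝ))
    (hl : φ '' intLat (m+1) = intLat m) :
    ∃ v : Fin (m+1) → ℝ, v ∈ intLat (m+1) ∧ φ.linear v = 0 ∧ v ≠ 0 := by
  classical
  -- build an integer matrix representing φ.linear
  have hA : ∀ j : Fin (m+1), ∀ i : Fin m, ∃ a : ℤ, φ.linear (Pi.single j 1) i = a :=
    fun j i => linear_lattice φ hl (intLat_single j) i
  choose A hA using fun i (j : Fin (m+1)) => hA j i
  -- key compatibility
  have key : ∀ x : Fin (m+1) → ℤ, ∀ i : Fin m,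
      φ.linear (fun j => (x j : ℝ)) i = (((Matrix.of A).mulVec x) i : ℝ) := by
    intro x i
    have hx : (fun j => (x j : ℝ)) = ∑ j : Fin (m+1), (x j : ℝ) • (Pi.single j 1 : Fin (m+1) → ℝ) := by
      funext c
      rw [Finset.sum_apply]
      simp [Pi.single_apply]
    rw [hx, map_sum]
    simp only [map_smul]
    rw [Finset.sum_apply]
    simp only [Pi.smul_apply, smul_eq_mul]
    rw [Matrix.mulVec]
    push_cast
    simp only [dotProduct, Matrix.of_apply]
    push_cast
    refine Finset.sum_congr rfl fun j _ => ?_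
    rw [hA i j]
    ring
  -- the integer linear map is not injective
  have hnotinj : ¬ Injective ((Matrix.of A).mulVecLin) := by
    intro hinj
    have h1 := LinearMap.rank_le_of_injective _ hinj
    rw [rank_fun', rank_fun'] at h1
    simp only [Fintype.card_fin] at h1
    have : (m + 1 : ℕ) ≤ m := by exact_mod_cast h1
    omega
  rw [Injective] at hnotinj
  push_neg at hnotinj
  obtain ⟨x, y, hxy, hne⟩ := hnotinj
  refine ⟨fun j => ((x j - y j : ℤ) : ℝ), fun j => ⟨x j - y j, rfl⟩, ?_, ?_⟩
  · funext i
    have h1 := key (x - y) i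
    have h2 : ((Matrix.of A).mulVec (x - y)) = 0 := by
      have : (Matrix.of A).mulVecLin (x - y) = 0 := by
        rw [map_sub, hxy, sub_self]
      simpa [Matrix.mulVecLin] using this
    rw [show (fun j => ((x j - y j : ℤ) : ℝ)) = (fun j => (((x - y) j : ℤ) : ℝ)) from rfl] at *
    rw [h1, h2]
    simp
  · intro h
    apply hne
    funext j
    have := congrFun h j
    simp only [Pi.zero_apply, Int.cast_eq_zero, sub_eq_zero] at this
    exact this

-- === from e.lean ===


variable {m : ℕ}

lemma linear_surj (φ : (Fin (m+1) → ℝ) →ᵃ[ℝ] (Fin m → ℝ)) (hs : Surjective φ) :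
    Surjective φ.linear := by
  intro y
  obtain ⟨x, hx⟩ := hs (y + φ 0)
  refine ⟨x, ?_⟩
  have := φ.linearMap_vsub x 0
  simp only [vsub_eq_sub, sub_zero] at this
  rw [this, hx]; abel

lemma ker_finrank_one (φ : (Fin (m+1) → ℝ) →ᵃ[ℝ] (Fin m → ℝ)) (hs : Surjective φ) :
    Module.finrank ℝ (LinearMap.ker φ.linear) = 1 := by
  have h := LinearMap.finrank_range_add_finrank_ker φ.linear
  rw [LinearMap.range_eq_top.mpr (linear_surj φ hs)] at h
  rw [finrank_top, Module.finrank_fin_fun, Module.finrank_fin_fun] at h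
  omega

lemma ker_eq_span (φ : (Fin (m+1) → ℝ) →ᵃ[ℝ] (Fin m → ℝ)) (hs : Surjective φ)
    {v : Fin (m+1) → ℝ} (hv : φ.linear v = 0) (hv0 : v ≠ 0) :
    LinearMap.ker φ.linear = Submodule.span ℝ {v} := by
  refine (Submodule.eq_of_le_of_finrank_le ?_ ?_).symm
  · rw [Submodule.span_le, Set.singleton_subset_iff]; exact hv
  · rw [ker_finrank_one φ hs, finrank_span_singleton hv0]

/-- Primitive generator of the kernel lattice. -/
lemma exists_primitive (φ : (Fin (m+1) → ℝ) →ᵃ[ℝ] (Fin m → ℝ))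
    (hl : φ '' intLat (m+1) = intLat m) (hs : Surjective φ)
    (v : Fin (m+1) → ℝ) (hv : v ∈ intLat (m+1)) (hvk : φ.linear v = 0) (hv0 : v ≠ 0) :
    ∃ u : Fin (m+1) → ℝ, u ∈ intLat (m+1) ∧ φ.linear u = 0 ∧ u ≠ 0 ∧
      (∀ x, x ∈ intLat (m+1) → φ.linear x = 0 → ∃ k : ℤ, x = (k : ℝ) • u) := by
  classical
  obtain ⟨j, hj⟩ : ∃ j, v j ≠ 0 := by
    by_contra h; push_neg at h; exact hv0 (funext h)
  -- the subgroup of scalars t with t • v in the lattice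
  let T : AddSubgroup ℝ :=
    { carrier := {t : ℝ | t • v ∈ intLat (m+1)},
      zero_mem' := by intro i; exact ⟨0, by simp⟩,
      add_mem' := by
        intro a b ha hb i
        obtain ⟨p, hp⟩ := ha i; obtain ⟨q, hq⟩ := hb i
        exact ⟨p + q, by push_cast; simp only [Pi.smul_apply, smul_eq_mul] at *; nlinarith [hp, hq]⟩,
      neg_mem' := by
        intro a ha i
        obtain ⟨p, hp⟩ := ha i
        exact ⟨-p, by push_cast; simp only [Pi.smul_apply, smul_eq_mul] at *; nlinarith [hp]⟩ }
  have h1T : (1 : ℝ) ∈ T := by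
    show (1:ℝ) • v ∈ intLat (m+1); simpa using hv
  rcases AddSubgroup.dense_or_cyclic T with hdense | ⟨g, hg⟩
  · exfalso
    obtain ⟨t, htT, ht⟩ : ∃ t ∈ T, t ∈ Ioo (0 : ℝ) (1 / (2 * |v j|)) := by
      have := dense_iff_exists_between.mp hdense 0 (1 / (2 * |v j|))
        (by positivity)
      obtain ⟨t, ht1, ht2, ht3⟩ := this
      exact ⟨t, ht1, ht2, ht3⟩
    have htv : t • v ∈ intLat (m+1) := htT
    obtain ⟨k, hk⟩ := htv j
    simp only [Pi.smul_apply, smul_eq_mul] at hk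
    have habs : |t * v j| < 1 / 2 := by
      rw [abs_mul]
      have h2 : 0 < |v j| := abs_pos.mpr hj
      have := ht.2
      rw [abs_of_pos ht.1]
      calc t * |v j| < (1 / (2 * |v j|)) * |v j| := by nlinarith
        _ = 1 / 2 := by field_simp
    have hk0 : k = 0 := by
      by_contra h
      have : (1 : ℝ) ≤ |(k : ℝ)| := by exact_mod_cast Int.one_le_abs (by exact_mod_cast h)
      rw [← hk] at this; linarith
    rw [hk0] at hk
    simp only [Int.cast_zero] at hk
    have : t = 0 := by
      rcases mul_eq_zero.mp hk with h | h
      · exact h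
      · exact absurd h hj
    linarith [ht.1]
  · refine ⟨g • v, ?_, ?_, ?_, ?_⟩
    · have : g ∈ T := hg ▸ AddSubgroup.subset_closure rfl
      exact this
    · rw [map_smul, hvk, smul_zero]
    · have hg0 : g ≠ 0 := by
        rintro rfl
        have := hg ▸ h1T
        rw [AddSubgroup.mem_closure_singleton] at this
        obtain ⟨k, hk⟩ := this
        simp at hk
      exact smul_ne_zero hg0 hv0
    · intro x hx hxk
      have hker : x ∈ LinearMap.ker φ.linear := hxk
      rw [ker_eq_span φ hs hvk hv0, Submodule.mem_span_singleton] at hker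
      obtain ⟨t, ht⟩ := hker
      have htT : t ∈ T := by
        show t • v ∈ intLat (m+1); rw [ht]; exact hx
      rw [hg, AddSubgroup.mem_closure_singleton] at htT
      obtain ⟨k, hk⟩ := htT
      refine ⟨k, ?_⟩
      rw [← ht, ← hk]
      rw [smul_smul]
      congr 1
      rw [zsmul_eq_mul]

end TwoProj
section
variable {m : ℕ}
namespace TwoProj

lemma vtx_inj : Function.Injective (vtx m) := by
  intro j j' h
  rcases Fin.eq_zero_or_eq_succ j with rfl | ⟨i, rfl⟩ <;>
    rcases Fin.eq_zero_or_eq_succ j' with rfl | ⟨i', rfl⟩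
  · rfl
  · exfalso; have := congrFun h i'; simp [vtx, Pi.single_apply] at this
  · exfalso; have := congrFun h i; simp [vtx, Pi.single_apply] at this
  · have := congrFun h i
    simp only [vtx, Fin.cases_succ, Pi.single_apply, if_pos rfl] at this
    by_cases hii : i = i'
    · rw [hii]
    · rw [if_neg hii] at this; norm_num at this

lemma vtx_form {p : Fin m → ℝ} (h : ∃ j, p = vtx m j) :
    p = 0 ∨ ∃ i, p = Pi.single i 1 := by
  obtain ⟨j, rfl⟩ := h
  rcases Fin.eq_zero_or_eq_succ j with rfl | ⟨i, rfl⟩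
  · exact Or.inl rfl
  · exact Or.inr ⟨i, rfl⟩

lemma affine_add (φ : (Fin (m+1) → ℝ) →ᵃ[ℝ] (Fin m → ℝ)) (x w : Fin (m+1) → ℝ) :
    φ (x + w) = φ x + φ.linear w := by
  have := φ.map_vadd x w
  rw [vadd_eq_add, vadd_eq_add] at this
  rw [add_comm x w, this, add_comm]

lemma vertex_attained (φ : (Fin (m+1) → ℝ) →ᵃ[ℝ] (Fin m → ℝ))
    (V : Finset (Fin (m+1) → ℝ)) (hV : (V : Set (Fin (m+1) → ℝ)) ⊆ intLat (m+1))
    (hl : φ '' intLat (m+1) = intLat m)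
    (hp : φ '' (convexHull ℝ (V : Set (Fin (m+1) → ℝ))) = unimodSimplex m) :
    ∀ j, ∃ x ∈ (V : Set (Fin (m+1) → ℝ)), φ x = vtx m j := by
  classical
  have himg : φ '' (convexHull ℝ (V : Set (Fin (m+1) → ℝ)))
      = convexHull ℝ (φ '' (V : Set (Fin (m+1) → ℝ))) := AffineMap.image_convexHull φ _
  have hconv : convexHull ℝ (φ '' (V : Set (Fin (m+1) → ℝ))) = unimodSimplex m := by
    rw [← himg, hp]
  have hSsub : ∀ y ∈ φ '' (V : Set (Fin (m+1) → ℝ)), ∃ j', y = vtx m j' := by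
    rintro y ⟨x, hx, rfl⟩
    apply lattice_mem_simplex
    · rw [← hp]; exact ⟨x, subset_convexHull ℝ _ hx, rfl⟩
    · rw [← hl]; exact ⟨x, hV hx, rfl⟩
  intro j
  by_contra hc
  push_neg at hc
  rcases Fin.eq_zero_or_eq_succ j with rfl | ⟨i, rfl⟩
  · have hsub : φ '' (V : Set (Fin (m+1) → ℝ)) ⊆ {x : Fin m → ℝ | ∑ i, x i = 1} := by
      rintro y hy
      obtain ⟨j', rfl⟩ := hSsub y hy
      rcases Fin.eq_zero_or_eq_succ j' with rfl | ⟨i', rfl⟩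
      · exfalso
        obtain ⟨x, hx, hφx⟩ := hy
        exact hc x hx hφx
      · exact sum_single' i'
    have hcvx : Convex ℝ {x : Fin m → ℝ | ∑ i, x i = 1} := by
      intro x hx y hy a b ha hb hab
      simp only [Set.mem_setOf_eq] at *
      simp only [Pi.add_apply, Pi.smul_apply, smul_eq_mul, Finset.sum_add_distrib,
        ← Finset.mul_sum, hx, hy]
      linarith
    have h0 : vtx m 0 ∈ convexHull ℝ (φ '' (V : Set (Fin (m+1) → ℝ))) := by
      rw [hconv]; exact vtx_mem_simplex 0
    have := convexHull_min hsub hcvx h0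
    simp [vtx] at this
  · have hsub : φ '' (V : Set (Fin (m+1) → ℝ)) ⊆ {x : Fin m → ℝ | x i = 0} := by
      rintro y hy
      obtain ⟨j', rfl⟩ := hSsub y hy
      rcases Fin.eq_zero_or_eq_succ j' with rfl | ⟨i', rfl⟩
      · simp [vtx]
      · have hii : i' ≠ i := by
          rintro rfl
          obtain ⟨x, hx, hφx⟩ := hy
          exact hc x hx hφx
        simp [vtx, Pi.single_apply, hii]
    have hcvx : Convex ℝ {x : Fin m → ℝ | x i = 0} := by
      intro x hx y hy a b ha hb hab
      simp only [Set.mem_setOf_eq] at *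
      simp [hx, hy]
    have h0 : vtx m i.succ ∈ convexHull ℝ (φ '' (V : Set (Fin (m+1) → ℝ))) := by
      rw [hconv]; exact vtx_mem_simplex i.succ
    have := convexHull_min hsub hcvx h0
    simp [vtx] at this

end TwoProj
end
section
open Set Function
variable {m : ℕ}
namespace TwoProj

lemma structure_lemma
    (V : Finset (Fin (m+1) → ℝ)) (hV : (V : Set (Fin (m+1) → ℝ)) ⊆ intLat (m+1))
    (hdim : affineSpan ℝ (convexHull ℝ (V : Set (Fin (m+1) → ℝ))) = ⊤)
    (φ₁ φ₂ : (Fin (m+1) → ℝ) →ᵃ[ℝ] (Fin m → ℝ))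
    (hs₁ : Surjective φ₁) (hs₂ : Surjective φ₂)
    (hl₁ : φ₁ '' intLat (m+1) = intLat m) (hl₂ : φ₂ '' intLat (m+1) = intLat m)
    (hp₁ : φ₁ '' (convexHull ℝ (V : Set (Fin (m+1) → ℝ))) = unimodSimplex m)
    (hp₂ : φ₂ '' (convexHull ℝ (V : Set (Fin (m+1) → ℝ))) = unimodSimplex m)
    (hdiff : LinearMap.ker φ₁.linear ≠ LinearMap.ker φ₂.linear) :
    ∃ (q : Fin (m+1) → (Fin (m+1) → ℝ)) (u : Fin (m+1) → ℝ) (L : Set (Fin (m+1))),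
      (∀ j, q j ∈ intLat (m+1)) ∧ (∀ j, φ₁ (q j) = vtx m j) ∧
      u ∈ intLat (m+1) ∧ φ₁.linear u = 0 ∧ u ≠ 0 ∧
      (∀ x, x ∈ intLat (m+1) → φ₁.linear x = 0 → ∃ k : ℤ, x = (k:ℝ) • u) ∧
      (V : Set (Fin (m+1) → ℝ)) = Set.range q ∪ ((fun j => q j + u) '' L) ∧
      L.Nonempty ∧
      ∀ j₁ ∈ L, ∀ j₂ ∈ L, ∀ j₃ ∈ L, j₁ = j₂ ∨ j₁ = j₃ ∨ j₂ = j₃ := by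
  classical
  obtain ⟨v, hv, hvk, hv0⟩ := exists_lattice_kernel φ₁ hl₁
  obtain ⟨u, hu, huk, hu0, huprim⟩ := exists_primitive φ₁ hl₁ hs₁ v hv hvk hv0
  have hw2 : φ₂.linear u ≠ 0 := by
    intro h
    apply hdiff
    rw [ker_eq_span φ₁ hs₁ huk hu0, ker_eq_span φ₂ hs₂ h hu0]
  set w₂ := φ₂.linear u with hw₂def
  obtain ⟨xp, hxpV, hxpφ⟩ : ∃ xp : Fin (m+1) → (Fin (m+1) → ℝ),
      (∀ j, xp j ∈ (V : Set (Fin (m+1) → ℝ))) ∧ (∀ j, φ₁ (xp j) = vtx m j) := by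
    choose xp h1 h2 using vertex_attained φ₁ V hV hl₁ hp₁
    exact ⟨xp, h1, h2⟩
  have hfin : ∀ j, Set.Finite {k : ℤ | xp j + (k:ℝ) • u ∈ (V : Set (Fin (m+1) → ℝ))} := by
    intro j
    apply Set.Finite.preimage _ V.finite_toSet
    intro k _ k' _ h
    simp only [add_right_inj] at h
    have h' : ((k:ℝ) - k') • u = 0 := by rw [sub_smul, h, sub_self]
    rcases smul_eq_zero.mp h' with h'' | h''
    · have : (k:ℝ) = k' := by linarith [sub_eq_zero.mp h'']
      exact_mod_cast this
    · exact absurd h'' hu0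
  have h0mem : ∀ j, (0:ℤ) ∈ {k : ℤ | xp j + (k:ℝ) • u ∈ (V : Set (Fin (m+1) → ℝ))} := by
    intro j; simp only [Set.mem_setOf_eq, Int.cast_zero, zero_smul, add_zero]; exact hxpV j
  have hmin : ∀ j, ∃ mnj : ℤ, (xp j + (mnj:ℝ) • u ∈ (V : Set (Fin (m+1) → ℝ))) ∧
      ∀ k : ℤ, xp j + (k:ℝ) • u ∈ (V : Set (Fin (m+1) → ℝ)) → mnj ≤ k := by
    intro j
    have hne : ((hfin j).toFinset).Nonempty := ⟨0, (hfin j).mem_toFinset.mpr (h0mem j)⟩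
    refine ⟨(hfin j).toFinset.min' hne, ?_, ?_⟩
    · have := (hfin j).toFinset.min'_mem hne
      rwa [Set.Finite.mem_toFinset] at this
    · intro k hk
      exact Finset.min'_le _ _ ((hfin j).mem_toFinset.mpr hk)
  choose mn hmnV hmnle using hmin
  set q : Fin (m+1) → (Fin (m+1) → ℝ) := fun j => xp j + (mn j : ℝ) • u with hqdef
  have hqV : ∀ j, q j ∈ (V : Set (Fin (m+1) → ℝ)) := hmnV
  have hqφ : ∀ j, φ₁ (q j) = vtx m j := by
    intro j
    show φ₁ (xp j + (mn j : ℝ) • u) = vtx m j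
    rw [affine_add, map_smul, huk, smul_zero, add_zero, hxpφ j]
  have hqlat : ∀ j, q j ∈ intLat (m+1) :=
    fun j => intLat_add (hV (hxpV j)) (intLat_zsmul hu _)
  -- fibers
  have hfiber : ∀ y ∈ (V : Set (Fin (m+1) → ℝ)),
      ∃ j : Fin (m+1), ∃ k : ℤ, 0 ≤ k ∧ y = q j + (k:ℝ) • u := by
    intro y hy
    have hyP : y ∈ convexHull ℝ (V : Set (Fin (m+1) → ℝ)) := subset_convexHull ℝ _ hy
    have hylat : y ∈ intLat (m+1) := hV hy
    obtain ⟨j, hj⟩ := lattice_mem_simplex (x := φ₁ y)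
      (by rw [← hp₁]; exact ⟨y, hyP, rfl⟩) (by rw [← hl₁]; exact ⟨y, hylat, rfl⟩)
    have hdiff0 : φ₁.linear (y - xp j) = 0 := by
      have := φ₁.linearMap_vsub y (xp j)
      rw [vsub_eq_sub, vsub_eq_sub] at this
      rw [this, hj, hxpφ j, sub_self]
    obtain ⟨k', hk'⟩ := huprim (y - xp j) (intLat_sub hylat (hV (hxpV j))) hdiff0
    have hy' : y = xp j + (k':ℝ) • u := by
      rw [← hk']; abel
    have hk'mem : xp j + (k':ℝ) • u ∈ (V : Set (Fin (m+1) → ℝ)) := hy' ▸ hy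
    refine ⟨j, k' - mn j, by linarith [hmnle j k' hk'mem], ?_⟩
    show y = xp j + (mn j : ℝ) • u + _
    rw [hy']
    have hcast : ((k' - mn j : ℤ):ℝ) = (k':ℝ) - (mn j : ℝ) := by push_cast; ring
    rw [hcast, sub_smul]; abel
  -- heights are at most 1
  have hφ₂form : ∀ y, y ∈ intLat (m+1) → y ∈ convexHull ℝ (V : Set (Fin (m+1) → ℝ)) →
      (φ₂ y = 0 ∨ ∃ i, φ₂ y = Pi.single i 1) := by
    intro y hyl hyP
    apply vtx_form
    apply lattice_mem_simplex
    · rw [← hp₂]; exact ⟨y, hyP, rfl⟩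
    · rw [← hl₂]; exact ⟨y, hyl, rfl⟩
  have hheight : ∀ (j : Fin (m+1)) (k:ℤ),
      q j + (k:ℝ) • u ∈ (V : Set (Fin (m+1) → ℝ)) → k ≤ 1 := by
    intro j k hk
    by_contra hgt
    push_neg at hgt
    have h2k : (2:ℝ) ≤ (k:ℝ) := by exact_mod_cast hgt
    have hqP : q j ∈ convexHull ℝ (V : Set (Fin (m+1) → ℝ)) := subset_convexHull ℝ _ (hqV j)
    have hyP : q j + (k:ℝ) • u ∈ convexHull ℝ (V : Set (Fin (m+1) → ℝ)) :=
      subset_convexHull ℝ _ hk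
    have hPconv : Convex ℝ (convexHull ℝ (V : Set (Fin (m+1) → ℝ))) := convex_convexHull ℝ _
    have hmem : ∀ t : ℝ, 0 ≤ t → t ≤ (k:ℝ) →
        q j + t • u ∈ convexHull ℝ (V : Set (Fin (m+1) → ℝ)) := by
      intro t ht0 htk
      have hk0 : (0:ℝ) < (k:ℝ) := by linarith
      have hck : (t / (k:ℝ)) * (k:ℝ) = t := div_mul_cancel₀ t (by linarith)
      have hcomb := hPconv hqP hyP (a := 1 - t/(k:ℝ)) (b := t/(k:ℝ))
        (by rw [sub_nonneg]; exact div_le_one_of_le₀ htk (le_of_lt hk0))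
        (by positivity) (by ring)
      have heqc : ∀ p w : Fin (m+1) → ℝ,
          (1 - t/(k:ℝ)) • p + (t/(k:ℝ)) • (p + (k:ℝ) • w) = p + t • w := by
        intro p w
        rw [smul_add, smul_smul, hck, sub_smul, one_smul]; abel
      rwa [heqc] at hcomb
    have hz : ∀ t : ℤ, 0 ≤ t → t ≤ k →
        (φ₂ (q j) + (t:ℝ) • w₂ = 0 ∨ ∃ i, φ₂ (q j) + (t:ℝ) • w₂ = Pi.single i 1) := by
      intro t ht0 htk
      have hφ : φ₂ (q j + (t:ℝ) • u) = φ₂ (q j) + (t:ℝ) • w₂ := by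
        have h := affine_add φ₂ (q j) ((t:ℝ) • u)
        rw [map_smul] at h
        exact h
      rw [← hφ]
      apply hφ₂form
      · exact intLat_add (hqlat j) (intLat_zsmul hu t)
      · exact hmem t (by exact_mod_cast ht0) (by exact_mod_cast htk)
    have h0f := hz 0 le_rfl (by omega)
    have h1f := hz 1 (by omega) (by omega)
    have h2f := hz 2 (by omega) (by omega)
    simp only [Int.cast_zero, zero_smul, add_zero] at h0f
    simp only [Int.cast_one, one_smul] at h1f
    have h2c : ((2:ℤ):ℝ) = 2 := by norm_num
    rw [h2c] at h2f
    refine no_threeAP h0f h1f h2f ?_ ?_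
    · rw [two_smul]; abel
    · intro h
      exact hw2 (by
        have := congrArg (fun x => x - φ₂ (q j)) h
        simpa using this.symm)
  set L : Set (Fin (m+1)) := {j | q j + u ∈ (V : Set (Fin (m+1) → ℝ))} with hLdef
  have hVeq : (V : Set (Fin (m+1) → ℝ)) = Set.range q ∪ ((fun j => q j + u) '' L) := by
    apply Set.Subset.antisymm
    · intro y hy
      obtain ⟨j, k, hk0, rfl⟩ := hfiber y hy
      have hk1 : k ≤ 1 := hheight j k hy
      interval_cases k
      · left; exact ⟨j, by simp⟩
      · right
        refine ⟨j, ?_, by simp⟩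
        show q j + u ∈ (V : Set (Fin (m+1) → ℝ))
        simpa using hy
    · rintro y (⟨j, rfl⟩ | ⟨j, hjL, rfl⟩)
      · exact hqV j
      · exact hjL
  have hcollapse : ∀ j₁ ∈ L, ∀ j₂ ∈ L, φ₂ (q j₁) = φ₂ (q j₂) := by
    intro j₁ h₁ j₂ h₂
    have haddφ : ∀ j : Fin (m+1), φ₂ (q j + u) = φ₂ (q j) + w₂ :=
      fun j => affine_add φ₂ (q j) u
    apply parallelogram (d := w₂) ?_ ?_ ?_ ?_ hw2
    · exact hφ₂form (q j₁) (hqlat j₁) (subset_convexHull ℝ _ (hqV j₁))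
    · exact hφ₂form (q j₂) (hqlat j₂) (subset_convexHull ℝ _ (hqV j₂))
    · rw [← haddφ j₁]
      exact hφ₂form _ (intLat_add (hqlat j₁) hu) (subset_convexHull ℝ _ h₁)
    · rw [← haddφ j₂]
      exact hφ₂form _ (intLat_add (hqlat j₂) hu) (subset_convexHull ℝ _ h₂)
  have h3dist : ∀ j₁ ∈ L, ∀ j₂ ∈ L, ∀ j₃ ∈ L, j₁ = j₂ ∨ j₁ = j₃ ∨ j₂ = j₃ := by
    intro j₁ h₁ j₂ h₂ j₃ h₃
    by_contra hcon
    push_neg at hcon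
    obtain ⟨h12, h13, h23⟩ := hcon
    rcases Nat.eq_zero_or_pos m with rfl | hm
    · have h2 := j₂.isLt
      have h3 := j₃.isLt
      exact h23 (Fin.ext (by omega))
    set A : Finset (Fin m → ℝ) :=
      ((Finset.univ \ {j₂, j₃}).image (fun j => φ₂ (q j))) ∪ {φ₂ (q j₁) + w₂} with hA
    have hvtxA : ∀ j', vtx m j' ∈ A := by
      intro j'
      obtain ⟨y, hyV, hyφ⟩ := vertex_attained φ₂ V hV hl₂ hp₂ j'
      rw [hVeq] at hyV
      rcases hyV with ⟨j, rfl⟩ | ⟨j, hjL, rfl⟩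
      · rw [← hyφ]
        by_cases hj : j ∈ ({j₂, j₃} : Finset (Fin (m+1)))
        · have hjL' : j ∈ L := by
            rcases Finset.mem_insert.mp hj with rfl | hj'
            · exact h₂
            · rw [Finset.mem_singleton] at hj'; rw [hj']; exact h₃
          have : φ₂ (q j) = φ₂ (q j₁) := hcollapse j hjL' j₁ h₁
          rw [this]
          apply Finset.mem_union_left
          apply Finset.mem_image.mpr
          exact ⟨j₁, by simp [Finset.mem_sdiff, h12, h13], rfl⟩
        · apply Finset.mem_union_left
          apply Finset.mem_image.mpr
          exact ⟨j, by simp only [Finset.mem_sdiff, Finset.mem_univ, true_and]; exact hj, rfl⟩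
      · have haddφ : φ₂ (q j + u) = φ₂ (q j) + w₂ := affine_add φ₂ (q j) u
        rw [← hyφ, haddφ, hcollapse j hjL j₁ h₁]
        exact Finset.mem_union_right _ (by simp)
    have hcard := Finset.card_le_card_of_injOn (s := (Finset.univ : Finset (Fin (m+1))))
      (vtx m) (fun j' _ => hvtxA j') (vtx_inj.injOn)
    have hAcard : A.card ≤ m := by
      have c1 : A.card ≤ ((Finset.univ \ ({j₂, j₃} : Finset (Fin (m+1)))).image
          (fun j => φ₂ (q j))).card + 1 := by
        refine (Finset.card_union_le _ _).trans ?_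
        simp
      have c2 : ((Finset.univ \ ({j₂, j₃} : Finset (Fin (m+1)))).image
          (fun j => φ₂ (q j))).card ≤ (Finset.univ \ ({j₂, j₃} : Finset (Fin (m+1)))).card :=
        Finset.card_image_le
      have c3 : (Finset.univ \ ({j₂, j₃} : Finset (Fin (m+1)))).card = (m+1) - 2 := by
        rw [Finset.card_sdiff_of_subset (Finset.subset_univ _), Finset.card_univ, Fintype.card_fin,
          Finset.card_pair h23]
      omega
    rw [Finset.card_univ, Fintype.card_fin] at hcard
    omega
  refine ⟨q, u, L, hqlat, hqφ, hu, huk, hu0, huprim, hVeq, ?_, h3dist⟩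
  by_contra hL
  rw [Set.not_nonempty_iff_eq_empty] at hL
  rw [hL] at hVeq
  simp only [Set.image_empty, Set.union_empty] at hVeq
  have hspan : affineSpan ℝ (V : Set (Fin (m+1) → ℝ)) = ⊤ := by
    rw [← affineSpan_convexHull]; exact hdim
  have hle : (⊤ : AffineSubspace ℝ (Fin (m+1) → ℝ)) ≤ affineSpan ℝ (Set.range q) := by
    rw [← hspan]
    apply affineSpan_mono
    rw [hVeq]
  have htop : affineSpan ℝ (Set.range q) = ⊤ := le_antisymm le_top hle
  have hrank := finrank_vectorSpan_range_le (k := ℝ) q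
    (by simp : Fintype.card (Fin (m+1)) = m + 1)
  have hvs : vectorSpan ℝ (Set.range q) = ⊤ := by
    rw [← direction_affineSpan, htop]
    exact AffineSubspace.direction_top ℝ _ _
  rw [hvs] at hrank
  rw [finrank_top, Module.finrank_fin_fun] at hrank
  omega

end TwoProj
end
section
open Set Function
variable {m : ℕ}
namespace TwoProj

lemma intLat_sum {k : ℕ} {ι : Type*} (s : Finset ι) (f : ι → (Fin k → ℝ))
    (hf : ∀ i ∈ s, f i ∈ intLat k) : ∑ i ∈ s, f i ∈ intLat k := by
  classical
  intro j
  have : ∀ i ∈ s, ∃ a : ℤ, f i j = a := fun i hi => hf i hi j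
  choose a ha using this
  refine ⟨∑ i ∈ s.attach, a i i.2, ?_⟩
  rw [Finset.sum_apply]
  rw [← Finset.sum_attach s (fun i => f i j)]
  push_cast
  exact Finset.sum_congr rfl fun i _ => ha i i.2

lemma lin_lat_map (f : (Fin (m+1) → ℝ) →ₗ[ℝ] (Fin (m+1) → ℝ))
    (h : ∀ j, f (Pi.single j 1) ∈ intLat (m+1)) {x : Fin (m+1) → ℝ}
    (hx : x ∈ intLat (m+1)) : f x ∈ intLat (m+1) := by
  classical
  choose a ha using hx
  have hxe : x = ∑ j, ((a j : ℝ) • (Pi.single j 1 : Fin (m+1) → ℝ)) := by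
    funext c
    rw [Finset.sum_apply]
    simp only [Pi.smul_apply, smul_eq_mul, Pi.single_apply, mul_ite, mul_one, mul_zero]
    rw [Finset.sum_ite_eq Finset.univ c (fun j => (a j : ℝ))]
    simp [ha c]
  rw [hxe, map_sum]
  apply intLat_sum
  intro j _
  rw [map_smul]
  exact intLat_zsmul (h j) (a j)

/-- The normalizing affine-lattice transformation built from fiber base points. -/
lemma exists_T₁ (φ₁ : (Fin (m+1) → ℝ) →ᵃ[ℝ] (Fin m → ℝ))
    (hl₁ : φ₁ '' intLat (m+1) = intLat m)
    (q : Fin (m+1) → (Fin (m+1) → ℝ)) (u : Fin (m+1) → ℝ)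
    (hqlat : ∀ j, q j ∈ intLat (m+1)) (hqφ : ∀ j, φ₁ (q j) = vtx m j)
    (hu : u ∈ intLat (m+1)) (huk : φ₁.linear u = 0) (hu0 : u ≠ 0)
    (huprim : ∀ x, x ∈ intLat (m+1) → φ₁.linear x = 0 → ∃ k : ℤ, x = (k:ℝ) • u) :
    ∃ T : (Fin (m+1) → ℝ) ≃ᵃ[ℝ] (Fin (m+1) → ℝ),
      ((T : (Fin (m+1) → ℝ) → (Fin (m+1) → ℝ)) '' intLat (m+1) = intLat (m+1)) ∧
      (∀ i : Fin m, T (q i.succ) = Pi.single i.castSucc 1) ∧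
      T (q 0) = 0 ∧
      (∀ x, T (x + u) = T x + Pi.single (Fin.last m) 1) := by
  classical
  set d : Fin m → (Fin (m+1) → ℝ) := fun i => q i.succ - q 0 with hd
  have hdlat : ∀ i, d i ∈ intLat (m+1) := fun i => intLat_sub (hqlat i.succ) (hqlat 0)
  set b : Fin (m+1) → (Fin (m+1) → ℝ) := Fin.snoc d u with hb
  have hφd : ∀ i, φ₁.linear (d i) = Pi.single i 1 := by
    intro i
    have hv := φ₁.linearMap_vsub (q i.succ) (q 0)
    rw [vsub_eq_sub, vsub_eq_sub] at hv
    show φ₁.linear (q i.succ - q 0) = _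
    rw [hv, hqφ, hqφ]
    show vtx m i.succ - vtx m 0 = _
    simp [vtx]
  have hsingli : LinearIndependent ℝ (fun i : Fin m => (Pi.single i 1 : Fin m → ℝ)) := by
    have h := (Pi.basisFun ℝ (Fin m)).linearIndependent
    convert h using 1
    funext i
    rw [Pi.basisFun_apply]
  have hdli : LinearIndependent ℝ d := by
    apply LinearIndependent.of_comp φ₁.linear
    have : (φ₁.linear ∘ d) = fun i : Fin m => (Pi.single i 1 : Fin m → ℝ) := by
      funext i; exact hφd i
    rw [this]
    exact hsingli
  have hunotin : u ∉ Submodule.span ℝ (Set.range d) := by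
    intro hmem
    rw [Submodule.mem_span_range_iff_exists_fun] at hmem
    obtain ⟨c, hc⟩ := hmem
    have h0 : ∑ i, c i • (Pi.single i 1 : Fin m → ℝ) = 0 := by
      have h := congrArg φ₁.linear hc
      rw [map_sum, huk] at h
      simpa only [map_smul, hφd] using h
    have hc0 : ∀ i, c i = 0 := by
      have h := linearIndependent_iff'.mp hsingli Finset.univ c (by simpa using h0)
      intro i; exact h i (Finset.mem_univ i)
    apply hu0
    rw [← hc]
    apply Finset.sum_eq_zero
    intro i _
    rw [hc0 i, zero_smul]
  have hbli : LinearIndependent ℝ b := by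
    rw [hb, linearIndependent_fin_snoc]
    exact ⟨hdli, hunotin⟩
  have hcard : Fintype.card (Fin (m+1)) = Module.finrank ℝ (Fin (m+1) → ℝ) := by
    rw [Module.finrank_fin_fun, Fintype.card_fin]
  set B : Module.Basis (Fin (m+1)) ℝ (Fin (m+1) → ℝ) :=
    basisOfLinearIndependentOfCardEqFinrank hbli hcard with hB
  set G : (Fin (m+1) → ℝ) ≃ₗ[ℝ] (Fin (m+1) → ℝ) :=
    B.equiv (Pi.basisFun ℝ (Fin (m+1))) (Equiv.refl _) with hG
  have hGb : ∀ i, G (b i) = Pi.single i 1 := by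
    intro i
    have h1 : B i = b i := congrFun (coe_basisOfLinearIndependentOfCardEqFinrank hbli hcard) i
    rw [← h1, hG, Module.Basis.equiv_apply]
    simp
  have hGd : ∀ i : Fin m, G (d i) = Pi.single i.castSucc 1 := by
    intro i
    have h2 : b i.castSucc = d i := by simp [hb]
    rw [← h2, hGb]
  have hGu : G u = Pi.single (Fin.last m) 1 := by
    have h2 : b (Fin.last m) = u := by simp [hb]
    rw [← h2, hGb]
  have claimC : ∀ x, x ∈ intLat (m+1) →
      ∃ (c : Fin m → ℤ) (k : ℤ), x = (∑ i, (c i : ℝ) • d i) + (k:ℝ) • u := by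
    intro x hx
    have hy : φ₁.linear x ∈ intLat m := linear_lattice φ₁ hl₁ hx
    choose c hc using hy
    have hsum : φ₁.linear (∑ i, (c i:ℝ) • d i) = φ₁.linear x := by
      rw [map_sum]
      simp only [map_smul, hφd]
      funext j
      rw [Finset.sum_apply]
      simp only [Pi.smul_apply, smul_eq_mul, Pi.single_apply, mul_ite, mul_one, mul_zero]
      rw [Finset.sum_ite_eq Finset.univ j (fun i => (c i : ℝ))]
      simp [hc j]
    have hrk : φ₁.linear (x - ∑ i, (c i:ℝ) • d i) = 0 := by
      rw [map_sub, hsum, sub_self]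
    have hrl : (x - ∑ i, (c i:ℝ) • d i) ∈ intLat (m+1) :=
      intLat_sub hx (intLat_sum _ _ (fun i _ => intLat_zsmul (hdlat i) (c i)))
    obtain ⟨k, hk⟩ := huprim _ hrl hrk
    refine ⟨c, k, ?_⟩
    rw [← hk]
    abel
  have hGlatf : ∀ x ∈ intLat (m+1), G x ∈ intLat (m+1) := by
    intro x hx
    obtain ⟨c, k, rfl⟩ := claimC x hx
    rw [map_add, map_sum, map_smul, hGu]
    simp only [map_smul, hGd]
    exact intLat_add
      (intLat_sum _ _ (fun i _ => intLat_zsmul (intLat_single _) (c i)))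
      (intLat_zsmul (intLat_single _) k)
  have hGlatb : ∀ y, y ∈ intLat (m+1) → G.symm y ∈ intLat (m+1) := by
    intro y hy
    apply lin_lat_map (G.symm : (Fin (m+1) → ℝ) →ₗ[ℝ] (Fin (m+1) → ℝ)) _ hy
    intro j
    have h2 : G.symm (Pi.single j 1) = b j := by
      rw [← hGb j, LinearEquiv.symm_apply_apply]
    rw [LinearEquiv.coe_coe, h2]
    refine Fin.lastCases ?_ ?_ j
    · show b (Fin.last m) ∈ _
      have h3 : b (Fin.last m) = u := by simp [hb]
      rw [h3]; exact hu
    · intro i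
      show b i.castSucc ∈ _
      have h3 : b i.castSucc = d i := by simp [hb]
      rw [h3]; exact hdlat i
  set T := (AffineEquiv.constVAdd ℝ (Fin (m+1) → ℝ) (-(q 0))).trans G.toAffineEquiv with hT
  have key : ∀ x, T x = G (x - q 0) := by
    intro x
    rw [hT]
    simp only [AffineEquiv.trans_apply, AffineEquiv.constVAdd_apply,
      LinearEquiv.coe_toAffineEquiv]
    rw [vadd_eq_add, neg_add_eq_sub]
  refine ⟨T, ?_, ?_, ?_, ?_⟩
  · ext y
    constructor
    · rintro ⟨x, hx, rfl⟩
      rw [key]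
      exact hGlatf _ (intLat_sub hx (hqlat 0))
    · intro hy
      refine ⟨G.symm y + q 0, intLat_add (hGlatb y hy) (hqlat 0), ?_⟩
      rw [key, add_sub_cancel_right, LinearEquiv.apply_symm_apply]
  · intro i
    rw [key]
    exact hGd i
  · rw [key, sub_self, map_zero]
  · intro x
    rw [key, key]
    have h3 : x + u - q 0 = (x - q 0) + u := by abel
    rw [h3, map_add, hGu]
end TwoProj
end
section
open Set Function
variable {m : ℕ}
namespace TwoProj

lemma img_lat {k : ℕ} (T : (Fin k → ℝ) ≃ᵃ[ℝ] (Fin k → ℝ))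
    (hf : ∀ x ∈ intLat k, T x ∈ intLat k) (hb : ∀ x ∈ intLat k, T.symm x ∈ intLat k) :
    (T : (Fin k → ℝ) → (Fin k → ℝ)) '' intLat k = intLat k := by
  ext y
  constructor
  · rintro ⟨x, hx, rfl⟩; exact hf x hx
  · intro hy; exact ⟨T.symm y, hb y hy, T.apply_symm_apply y⟩

noncomputable def permMap (k : ℕ) (π : Equiv.Perm (Fin k)) :
    (Fin k → ℝ) ≃ₗ[ℝ] (Fin k → ℝ) := LinearEquiv.funCongrLeft ℝ ℝ π.symm

lemma permMap_apply {k : ℕ} (π : Equiv.Perm (Fin k)) (x : Fin k → ℝ) (j : Fin k) :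
    permMap k π x j = x (π.symm j) := rfl

lemma permMap_symm_apply {k : ℕ} (π : Equiv.Perm (Fin k)) (x : Fin k → ℝ) (j : Fin k) :
    (permMap k π).symm x j = x (π j) := rfl

lemma permMap_single {k : ℕ} (π : Equiv.Perm (Fin k)) (i : Fin k) :
    permMap k π (Pi.single i 1) = Pi.single (π i) 1 := by
  classical
  funext j
  rw [permMap_apply]
  simp only [Pi.single_apply]
  by_cases h : j = π i
  · rw [if_pos h, if_pos (by rw [h]; exact π.symm_apply_apply i)]
  · rw [if_neg h, if_neg (fun hc => h (by rw [← hc, Equiv.apply_symm_apply]))]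

lemma permMap_lat {k : ℕ} (π : Equiv.Perm (Fin k)) {x : Fin k → ℝ} (hx : x ∈ intLat k) :
    permMap k π x ∈ intLat k := fun j => hx (π.symm j)

lemma permMap_symm_lat {k : ℕ} (π : Equiv.Perm (Fin k)) {x : Fin k → ℝ} (hx : x ∈ intLat k) :
    (permMap k π).symm x ∈ intLat k := fun j => hx (π j)

lemma exists_perm {α : Type*} [DecidableEq α] {a b c d : α} (hab : a ≠ b) (hcd : c ≠ d) :
    ∃ π : Equiv.Perm α, π a = c ∧ π b = d := by
  refine ⟨(Equiv.swap a c).trans (Equiv.swap ((Equiv.swap a c) b) d), ?_, ?_⟩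
  · rw [Equiv.trans_apply, Equiv.swap_apply_left]
    apply Equiv.swap_apply_of_ne_of_ne
    · intro hc
      have h2 : (Equiv.swap a c) c = (Equiv.swap a c) ((Equiv.swap a c) b) := congrArg _ hc
      rw [Equiv.swap_apply_right, Equiv.swap_apply_self] at h2
      exact hab h2
    · exact hcd
  · rw [Equiv.trans_apply, Equiv.swap_apply_left]

/-- The shear `x ↦ x - x(last) • e_a`. -/
noncomputable def shearMap (m : ℕ) (a : Fin (m+1)) (ha : a ≠ Fin.last m) :
    (Fin (m+1) → ℝ) ≃ₗ[ℝ] (Fin (m+1) → ℝ) where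
  toFun x := x - x (Fin.last m) • (Pi.single a 1 : Fin (m+1) → ℝ)
  invFun x := x + x (Fin.last m) • (Pi.single a 1 : Fin (m+1) → ℝ)
  map_add' x y := by
    funext j
    simp only [Pi.add_apply, Pi.sub_apply, Pi.smul_apply, smul_eq_mul]
    ring
  map_smul' c x := by
    funext j
    simp only [Pi.sub_apply, Pi.smul_apply, smul_eq_mul, RingHom.id_apply]
    ring
  left_inv x := by
    have hl : (Pi.single a 1 : Fin (m+1) → ℝ) (Fin.last m) = 0 := by
      rw [Pi.single_eq_of_ne (Ne.symm ha)]
    funext j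
    simp only [Pi.add_apply, Pi.sub_apply, Pi.smul_apply, smul_eq_mul, hl, mul_zero, sub_zero]
    ring
  right_inv x := by
    have hl : (Pi.single a 1 : Fin (m+1) → ℝ) (Fin.last m) = 0 := by
      rw [Pi.single_eq_of_ne (Ne.symm ha)]
    funext j
    simp only [Pi.add_apply, Pi.sub_apply, Pi.smul_apply, smul_eq_mul, hl, mul_zero, add_zero]
    ring

lemma shearMap_apply {a : Fin (m+1)} (ha : a ≠ Fin.last m) (x : Fin (m+1) → ℝ) (j : Fin (m+1)) :
    shearMap m a ha x j = x j - x (Fin.last m) * (Pi.single a 1 : Fin (m+1) → ℝ) j := rfl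

lemma shearMap_symm_apply {a : Fin (m+1)} (ha : a ≠ Fin.last m) (x : Fin (m+1) → ℝ)
    (j : Fin (m+1)) :
    (shearMap m a ha).symm x j = x j + x (Fin.last m) * (Pi.single a 1 : Fin (m+1) → ℝ) j := rfl

lemma shearMap_lat {a : Fin (m+1)} (ha : a ≠ Fin.last m) {x : Fin (m+1) → ℝ}
    (hx : x ∈ intLat (m+1)) : shearMap m a ha x ∈ intLat (m+1) := by
  classical
  intro j
  obtain ⟨p, hp⟩ := hx j
  obtain ⟨l, hl⟩ := hx (Fin.last m)
  rw [shearMap_apply]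
  by_cases hj : j = a
  · subst hj
    rw [Pi.single_eq_same, mul_one, hp, hl]
    exact ⟨p - l, by push_cast; ring⟩
  · rw [Pi.single_eq_of_ne hj, mul_zero, sub_zero, hp]
    exact ⟨p, rfl⟩

lemma shearMap_symm_lat {a : Fin (m+1)} (ha : a ≠ Fin.last m) {x : Fin (m+1) → ℝ}
    (hx : x ∈ intLat (m+1)) : (shearMap m a ha).symm x ∈ intLat (m+1) := by
  classical
  intro j
  obtain ⟨p, hp⟩ := hx j
  obtain ⟨l, hl⟩ := hx (Fin.last m)
  rw [shearMap_symm_apply]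
  by_cases hj : j = a
  · subst hj
    rw [Pi.single_eq_same, mul_one, hp, hl]
    exact ⟨p + l, by push_cast; ring⟩
  · rw [Pi.single_eq_of_ne hj, mul_zero, add_zero, hp]
    exact ⟨p, rfl⟩

lemma shearMap_single_castSucc {a : Fin (m+1)} (ha : a ≠ Fin.last m) (i : Fin m) :
    shearMap m a ha (Pi.single i.castSucc 1) = Pi.single i.castSucc 1 := by
  funext j
  rw [shearMap_apply]
  rw [Pi.single_eq_of_ne (Fin.castSucc_lt_last i).ne', zero_mul, sub_zero]

lemma shearMap_zero {a : Fin (m+1)} (ha : a ≠ Fin.last m) :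
    shearMap m a ha 0 = 0 := map_zero _

lemma shearMap_top {a : Fin (m+1)} (ha : a ≠ Fin.last m) :
    shearMap m a ha (Pi.single a 1 + Pi.single (Fin.last m) 1) = Pi.single (Fin.last m) 1 := by
  funext j
  rw [shearMap_apply]
  simp only [Pi.add_apply]
  rw [Pi.single_eq_of_ne (Ne.symm ha), Pi.single_eq_same, zero_add, one_mul]
  ring

lemma range_single_split :
    Set.range (fun j : Fin (m+1) => (Pi.single j 1 : Fin (m+1) → ℝ)) =
      (Set.range fun i : Fin m => (Pi.single i.castSucc 1 : Fin (m+1) → ℝ))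
        ∪ {Pi.single (Fin.last m) 1} := by
  ext x
  constructor
  · rintro ⟨j, rfl⟩
    rcases Fin.eq_castSucc_or_eq_last j with ⟨i, rfl⟩ | rfl
    · exact Or.inl ⟨i, rfl⟩
    · exact Or.inr rfl
  · rintro (⟨i, rfl⟩ | rfl)
    · exact ⟨i.castSucc, rfl⟩
    · exact ⟨Fin.last m, rfl⟩

end TwoProj
end
section
open Set Function
variable {m : ℕ}
namespace TwoProj

/-- The unimodular involution used to move the square into standard position. -/
noncomputable def nMap (m : ℕ) (a : Fin (m+1)) :
    (Fin (m+1) → ℝ) →ₗ[ℝ] (Fin (m+1) → ℝ) where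
  toFun x := fun j => if j = a then -∑ j' ∈ Finset.univ.erase (Fin.last m), x j' else x j
  map_add' x y := by
    classical
    funext j
    by_cases hj : j = a
    · simp only [hj, if_pos rfl, Pi.add_apply, Finset.sum_add_distrib, if_true]
      ring
    · simp only [Pi.add_apply, if_neg hj]
  map_smul' c x := by
    classical
    funext j
    by_cases hj : j = a
    · simp only [hj, if_pos rfl, Pi.smul_apply, smul_eq_mul, RingHom.id_apply,
        ← Finset.mul_sum, if_true]
      ring
    · simp only [Pi.smul_apply, if_neg hj, smul_eq_mul, RingHom.id_apply]

lemma nMap_apply (a : Fin (m+1)) (x : Fin (m+1) → ℝ) (j : Fin (m+1)) :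
    nMap m a x j = if j = a then -∑ j' ∈ Finset.univ.erase (Fin.last m), x j' else x j := rfl

lemma nMap_invol {a : Fin (m+1)} (ha : a ≠ Fin.last m) (x : Fin (m+1) → ℝ) :
    nMap m a (nMap m a x) = x := by
  classical
  have haen : a ∈ Finset.univ.erase (Fin.last m) := Finset.mem_erase.mpr ⟨ha, Finset.mem_univ a⟩
  funext j
  rw [nMap_apply]
  by_cases hj : j = a
  · rw [if_pos hj, hj]
    have hsplit : ∑ j' ∈ Finset.univ.erase (Fin.last m), nMap m a x j'
        = nMap m a x a + ∑ j' ∈ (Finset.univ.erase (Fin.last m)).erase a, nMap m a x j' :=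
      (Finset.add_sum_erase _ _ haen).symm
    have hrest : ∑ j' ∈ (Finset.univ.erase (Fin.last m)).erase a, nMap m a x j'
        = ∑ j' ∈ (Finset.univ.erase (Fin.last m)).erase a, x j' := by
      apply Finset.sum_congr rfl
      intro j' hj'
      rw [nMap_apply, if_neg (Finset.ne_of_mem_erase hj')]
    have hxsplit : ∑ j' ∈ Finset.univ.erase (Fin.last m), x j'
        = x a + ∑ j' ∈ (Finset.univ.erase (Fin.last m)).erase a, x j' :=
      (Finset.add_sum_erase _ _ haen).symm
    rw [hsplit, hrest, nMap_apply, if_pos rfl, hxsplit]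
    ring
  · rw [if_neg hj, nMap_apply, if_neg hj]

noncomputable def nEquiv (m : ℕ) (a : Fin (m+1)) (ha : a ≠ Fin.last m) :
    (Fin (m+1) → ℝ) ≃ₗ[ℝ] (Fin (m+1) → ℝ) :=
  LinearEquiv.ofLinear (nMap m a) (nMap m a)
    (LinearMap.ext fun x => nMap_invol ha x) (LinearMap.ext fun x => nMap_invol ha x)

lemma nEquiv_apply {a : Fin (m+1)} (ha : a ≠ Fin.last m) (x : Fin (m+1) → ℝ) :
    nEquiv m a ha x = nMap m a x := rfl

lemma nEquiv_symm_apply {a : Fin (m+1)} (ha : a ≠ Fin.last m) (x : Fin (m+1) → ℝ) :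
    (nEquiv m a ha).symm x = nMap m a x := rfl

lemma nMap_lat {a : Fin (m+1)} {x : Fin (m+1) → ℝ} (hx : x ∈ intLat (m+1)) :
    nMap m a x ∈ intLat (m+1) := by
  classical
  intro j
  rw [nMap_apply]
  by_cases hj : j = a
  · rw [if_pos hj]
    choose b hb using hx
    refine ⟨-∑ j' ∈ Finset.univ.erase (Fin.last m), b j', ?_⟩
    push_cast
    rw [neg_inj]
    exact Finset.sum_congr rfl fun j' _ => hb j'
  · rw [if_neg hj]; exact hx j

lemma nMap_zero (a : Fin (m+1)) : nMap m a 0 = 0 := map_zero _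

lemma nMap_single_self {a : Fin (m+1)} (ha : a ≠ Fin.last m) :
    nMap m a (Pi.single a 1) = -Pi.single a 1 := by
  classical
  have haen : a ∈ Finset.univ.erase (Fin.last m) := Finset.mem_erase.mpr ⟨ha, Finset.mem_univ a⟩
  funext j
  rw [nMap_apply]
  by_cases hj : j = a
  · rw [if_pos hj, hj]
    rw [Finset.sum_eq_single a (fun j' _ hne => Pi.single_eq_of_ne hne 1)
      (fun h => absurd haen h)]
    simp
  · rw [if_neg hj]
    rw [Pi.single_eq_of_ne hj, Pi.neg_apply, Pi.single_eq_of_ne hj, neg_zero]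

lemma nMap_single_other {a c : Fin (m+1)} (ha : a ≠ Fin.last m) (hc1 : c ≠ Fin.last m)
    (hc2 : c ≠ a) : nMap m a (Pi.single c 1) = Pi.single c 1 - Pi.single a 1 := by
  classical
  have hcen : c ∈ Finset.univ.erase (Fin.last m) := Finset.mem_erase.mpr ⟨hc1, Finset.mem_univ c⟩
  funext j
  rw [nMap_apply]
  by_cases hj : j = a
  · rw [if_pos hj, hj]
    rw [Finset.sum_eq_single c (fun j' _ hne => Pi.single_eq_of_ne hne 1)
      (fun h => absurd hcen h)]
    rw [Pi.single_eq_same, Pi.sub_apply, Pi.single_eq_of_ne (Ne.symm hc2), Pi.single_eq_same]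
    ring
  · rw [if_neg hj, Pi.sub_apply, Pi.single_eq_of_ne hj, sub_zero]

lemma nMap_single_last {a : Fin (m+1)} (ha : a ≠ Fin.last m) :
    nMap m a (Pi.single (Fin.last m) 1) = Pi.single (Fin.last m) 1 := by
  classical
  funext j
  rw [nMap_apply]
  by_cases hj : j = a
  · rw [if_pos hj, hj]
    rw [Finset.sum_eq_zero, neg_zero, Pi.single_eq_of_ne ha]
    intro j' hj'
    exact Pi.single_eq_of_ne (Finset.mem_erase.mp hj').1 1
  · rw [if_neg hj]

end TwoProj
end
section
open Set Function
variable {m : ℕ}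
namespace TwoProj

lemma coe_convexHull_img (E : (Fin (m+1) → ℝ) ≃ᵃ[ℝ] (Fin (m+1) → ℝ))
    (S : Set (Fin (m+1) → ℝ)) :
    (E : (Fin (m+1) → ℝ) → (Fin (m+1) → ℝ)) '' convexHull ℝ S
      = convexHull ℝ ((E : (Fin (m+1) → ℝ) → (Fin (m+1) → ℝ)) '' S) := by
  have h := E.toAffineMap.image_convexHull S
  simpa using h

lemma finish_simplex (W : Set (Fin (m+1) → ℝ))
    (T : (Fin (m+1) → ℝ) ≃ᵃ[ℝ] (Fin (m+1) → ℝ))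
    (hTlat : (T : (Fin (m+1) → ℝ) → (Fin (m+1) → ℝ)) '' intLat (m+1) = intLat (m+1))
    (him : (T : (Fin (m+1) → ℝ) → (Fin (m+1) → ℝ)) '' W
      = insert 0 (Set.range fun i : Fin m => (Pi.single i.castSucc 1 : Fin (m+1) → ℝ))
        ∪ {Pi.single (Fin.last m) 1}) :
    PolyEquiv (convexHull ℝ W) (unimodSimplex (m+1)) := by
  refine ⟨T, hTlat, ?_⟩
  rw [coe_convexHull_img, him, unimodSimplex]
  congr 1
  rw [Set.insert_union, ← range_single_split]

lemma perm_finish (hn : 2 ≤ m + 1) {b : Fin (m+1)} (hb : b ≠ Fin.last m)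
    (W : Set (Fin (m+1) → ℝ))
    (T : (Fin (m+1) → ℝ) ≃ᵃ[ℝ] (Fin (m+1) → ℝ))
    (hTlat : (T : (Fin (m+1) → ℝ) → (Fin (m+1) → ℝ)) '' intLat (m+1) = intLat (m+1))
    (him : (T : (Fin (m+1) → ℝ) → (Fin (m+1) → ℝ)) '' W
      = (insert 0 (Set.range fun j : Fin (m+1) => (Pi.single j 1 : Fin (m+1) → ℝ)))
        ∪ {Pi.single b 1 + Pi.single (Fin.last m) 1}) :
    PolyEquiv (convexHull ℝ W) (sqPyr (m+1) hn) := by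
  classical
  have h01 : (⟨0, by omega⟩ : Fin (m+1)) ≠ ⟨1, by omega⟩ := by
    simp [Fin.ext_iff]
  obtain ⟨π, hπb, hπl⟩ := exists_perm hb h01
  set E : (Fin (m+1) → ℝ) ≃ᵃ[ℝ] (Fin (m+1) → ℝ) := (permMap (m+1) π).toAffineEquiv with hE
  have hEapp : ∀ x, E x = permMap (m+1) π x := fun x => rfl
  have hEsymm : ∀ x, E.symm x = (permMap (m+1) π).symm x := fun x => rfl
  have hElat : (E : (Fin (m+1) → ℝ) → (Fin (m+1) → ℝ)) '' intLat (m+1) = intLat (m+1) := by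
    apply img_lat
    · intro x hx; rw [hEapp]; exact permMap_lat π hx
    · intro x hx; rw [hEsymm]; exact permMap_symm_lat π hx
  refine ⟨T.trans E, ?_, ?_⟩
  · rw [AffineEquiv.coe_trans, Set.image_comp, hTlat, hElat]
  · have hTE : (⇑(T.trans E)) '' (convexHull ℝ W)
        = (E : (Fin (m+1) → ℝ) → (Fin (m+1) → ℝ)) '' ((T : (Fin (m+1) → ℝ) → (Fin (m+1) → ℝ))
          '' (convexHull ℝ W)) := by
      rw [AffineEquiv.coe_trans, Set.image_comp]
    rw [hTE, coe_convexHull_img T, him, coe_convexHull_img E, sqPyr]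
    congr 1
    rw [Set.image_union, Set.image_insert_eq, Set.image_singleton]
    have h0 : E 0 = 0 := by rw [hEapp]; exact map_zero _
    have hrange : (E : (Fin (m+1) → ℝ) → (Fin (m+1) → ℝ))
        '' (Set.range fun j : Fin (m+1) => (Pi.single j 1 : Fin (m+1) → ℝ))
        = Set.range fun j : Fin (m+1) => (Pi.single j 1 : Fin (m+1) → ℝ) := by
      ext y
      constructor
      · rintro ⟨x, ⟨j, rfl⟩, rfl⟩
        rw [hEapp, permMap_single]
        exact ⟨π j, rfl⟩
      · rintro ⟨j, rfl⟩
        refine ⟨Pi.single (π.symm j) 1, ⟨π.symm j, rfl⟩, ?_⟩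
        rw [hEapp, permMap_single, Equiv.apply_symm_apply]
    have htop : E (Pi.single b 1 + Pi.single (Fin.last m) 1)
        = Pi.single (⟨0, by omega⟩ : Fin (m+1)) 1 + Pi.single (⟨1, by omega⟩ : Fin (m+1)) 1 := by
      rw [hEapp, map_add, permMap_single, permMap_single, hπb, hπl]
    rw [h0, hrange, htop, Set.union_singleton]
end TwoProj
end
section
open Set Function
namespace TwoProj

lemma pair_split {α : Type*} (A : Set α) (p t : α) : A ∪ {p, t} = (A ∪ {p}) ∪ {t} := by
  rw [Set.insert_eq, ← Set.union_assoc]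

lemma union_sl_eq {m : ℕ} :
    (insert 0 (Set.range fun i : Fin m => (Pi.single i.castSucc 1 : Fin (m+1) → ℝ)))
      ∪ {Pi.single (Fin.last m) 1}
    = insert 0 (Set.range fun j : Fin (m+1) => (Pi.single j 1 : Fin (m+1) → ℝ)) := by
  rw [Set.insert_union, ← range_single_split]

end TwoProj
end

open Set Pointwise Function

/-- A lattice polytope with two distinct lattice projections onto `Δₙ₋₁` is
equivalent to `Δₙ` or to the `(n-2)`-fold pyramid over the unit square. -/
theorem two_projections (n : ℕ) (hn : 2 ≤ n) (P : Set (Fin n → ℝ))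
    (hP : IsLatticePolytope P) (hdim : affineSpan ℝ P = ⊤)
    (φ₁ φ₂ : (Fin n → ℝ) →ᵃ[ℝ] (Fin (n - 1) → ℝ))
    (hs₁ : Surjective φ₁) (hs₂ : Surjective φ₂)
    (hl₁ : φ₁ '' intLat n = intLat (n - 1))
    (hl₂ : φ₂ '' intLat n = intLat (n - 1))
    (hp₁ : φ₁ '' P = unimodSimplex (n - 1))
    (hp₂ : φ₂ '' P = unimodSimplex (n - 1))
    (hdiff : LinearMap.ker φ₁.linear ≠ LinearMap.ker φ₂.linear) :
    PolyEquiv P (unimodSimplex n) ∨ PolyEquiv P (sqPyr n hn) := by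
  classical
  open TwoProj in
  obtain ⟨m, rfl⟩ : ∃ m, n = m + 1 := ⟨n - 1, by omega⟩
  obtain ⟨V, hV, rfl⟩ := hP
  obtain ⟨q, u, L, hqlat, hqφ, hu, huk, hu0, huprim, hVeq, hLne, h3⟩ :=
    TwoProj.structure_lemma (m := m) V hV hdim φ₁ φ₂ hs₁ hs₂ hl₁ hl₂ hp₁ hp₂ hdiff
  obtain ⟨T₁, hT₁lat, hT₁succ, hT₁zero, hT₁add⟩ :=
    TwoProj.exists_T₁ (m := m) φ₁ hl₁ q u hqlat hqφ hu huk hu0 huprim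
  have hTq : Set.range (fun j => T₁ (q j))
      = insert 0 (Set.range fun i : Fin m => (Pi.single i.castSucc 1 : Fin (m+1) → ℝ)) := by
    ext y
    constructor
    · rintro ⟨j, rfl⟩
      show T₁ (q j) ∈ _
      rcases Fin.eq_zero_or_eq_succ j with rfl | ⟨i, rfl⟩
      · rw [hT₁zero]; exact Set.mem_insert 0 _
      · rw [hT₁succ]; exact Set.mem_insert_of_mem _ ⟨i, rfl⟩
    · rintro (rfl | ⟨i, rfl⟩)
      · exact ⟨0, hT₁zero⟩
      · exact ⟨i.succ, hT₁succ i⟩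
  have himgV : (T₁ : (Fin (m+1) → ℝ) → (Fin (m+1) → ℝ)) '' (V : Set (Fin (m+1) → ℝ))
      = insert 0 (Set.range fun i : Fin m => (Pi.single i.castSucc 1 : Fin (m+1) → ℝ))
        ∪ ((fun j : Fin (m+1) => T₁ (q j) + Pi.single (Fin.last m) 1) '' L) := by
    rw [hVeq, Set.image_union]
    congr 1
    · rw [← Set.range_comp]
      exact hTq
    · rw [Set.image_image]
      apply Set.image_congr
      intro j _
      exact hT₁add (q j)
  obtain ⟨j₀, hj₀⟩ := hLne
  by_cases hsing : ∀ j ∈ L, j = j₀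
  · -- one lifted vertex : unimodular simplex
    have hLeq : L = {j₀} := Set.eq_singleton_iff_unique_mem.mpr ⟨hj₀, hsing⟩
    rw [hLeq, Set.image_singleton] at himgV
    left
    rcases Fin.eq_zero_or_eq_succ j₀ with rfl | ⟨i₀, rfl⟩
    · apply TwoProj.finish_simplex _ T₁ hT₁lat
      rw [himgV, hT₁zero, zero_add]
    · have ha : i₀.castSucc ≠ Fin.last m := (Fin.castSucc_lt_last i₀).ne
      set E := (TwoProj.shearMap m i₀.castSucc ha).toAffineEquiv with hE
      have hEapp : ∀ x, E x = TwoProj.shearMap m i₀.castSucc ha x := fun _ => rfl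
      have hEsymm : ∀ x, E.symm x = (TwoProj.shearMap m i₀.castSucc ha).symm x := fun _ => rfl
      refine TwoProj.finish_simplex _ (T₁.trans E) ?_ ?_
      · rw [AffineEquiv.coe_trans, Set.image_comp, hT₁lat]
        apply TwoProj.img_lat
        · intro x hx; rw [hEapp]; exact TwoProj.shearMap_lat ha hx
        · intro x hx; rw [hEsymm]; exact TwoProj.shearMap_symm_lat ha hx
      · rw [AffineEquiv.coe_trans, Set.image_comp, himgV, hT₁succ]
        rw [Set.image_union, Set.image_singleton, Set.image_insert_eq]
        have h1 : E 0 = 0 := by rw [hEapp]; exact map_zero _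
        have h2 : (E : (Fin (m+1) → ℝ) → (Fin (m+1) → ℝ))
            '' (Set.range fun i : Fin m => (Pi.single i.castSucc 1 : Fin (m+1) → ℝ))
            = Set.range fun i : Fin m => (Pi.single i.castSucc 1 : Fin (m+1) → ℝ) := by
          have heq : Set.EqOn (E : (Fin (m+1) → ℝ) → (Fin (m+1) → ℝ)) id
              (Set.range fun i : Fin m => (Pi.single i.castSucc 1 : Fin (m+1) → ℝ)) := by
            rintro y ⟨i, rfl⟩
            rw [hEapp]
            exact TwoProj.shearMap_single_castSucc ha i
          rw [heq.image_eq, Set.image_id]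
        have h3 : E (Pi.single i₀.castSucc 1 + Pi.single (Fin.last m) 1)
            = Pi.single (Fin.last m) 1 := by
          rw [hEapp]; exact TwoProj.shearMap_top ha
        rw [h1, h2, h3]
  · -- two lifted vertices : pyramid over the square
    push_neg at hsing
    obtain ⟨j₁, hj₁L, hj₁ne⟩ := hsing
    have hLeq : L = {j₀, j₁} := by
      ext j
      constructor
      · intro hj
        rcases h3 j hj j₀ hj₀ j₁ hj₁L with h | h | h
        · exact Or.inl h
        · exact Or.inr h
        · exact absurd h.symm hj₁ne
      · rintro (rfl | rfl)
        · exact hj₀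
        · exact hj₁L
    rw [hLeq, Set.image_pair] at himgV
    right
    rcases Fin.eq_zero_or_eq_succ j₀ with rfl | ⟨i₁, rfl⟩ <;>
      rcases Fin.eq_zero_or_eq_succ j₁ with rfl | ⟨i₂, rfl⟩
    · exact absurd rfl hj₁ne
    · -- j₀ = 0, j₁ = i₂.succ
      rw [hT₁zero, zero_add, hT₁succ] at himgV
      have hb : i₂.castSucc ≠ Fin.last m := (Fin.castSucc_lt_last i₂).ne
      apply TwoProj.perm_finish hn hb _ T₁ hT₁lat
      rw [himgV, TwoProj.pair_split, TwoProj.union_sl_eq]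
    · -- j₀ = i₁.succ, j₁ = 0
      rw [hT₁zero, zero_add, hT₁succ, Set.pair_comm] at himgV
      have hb : i₁.castSucc ≠ Fin.last m := (Fin.castSucc_lt_last i₁).ne
      apply TwoProj.perm_finish hn hb _ T₁ hT₁lat
      rw [himgV, TwoProj.pair_split, TwoProj.union_sl_eq]
    · -- j₀ = i₁.succ, j₁ = i₂.succ
      rw [hT₁succ, hT₁succ] at himgV
      have ha : i₁.castSucc ≠ Fin.last m := (Fin.castSucc_lt_last i₁).ne
      have hb : i₂.castSucc ≠ Fin.last m := (Fin.castSucc_lt_last i₂).ne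
      have hi12 : i₁ ≠ i₂ := by
        intro h
        exact hj₁ne (by rw [h])
      set A₂ := (TwoProj.nEquiv m i₁.castSucc ha).toAffineEquiv.trans
        (AffineEquiv.constVAdd ℝ (Fin (m+1) → ℝ) (Pi.single i₁.castSucc 1)) with hA₂
      have hA₂app : ∀ x, A₂ x = Pi.single i₁.castSucc 1 + TwoProj.nMap m i₁.castSucc x :=
        fun _ => rfl
      have hA₂inv : ∀ x, A₂ (TwoProj.nMap m i₁.castSucc (-Pi.single i₁.castSucc 1 + x)) = x := by
        intro x
        rw [hA₂app, TwoProj.nMap_invol ha]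
        abel
      have hA₂symm : ∀ x, A₂.symm x
          = TwoProj.nMap m i₁.castSucc (-Pi.single i₁.castSucc 1 + x) := by
        intro x
        rw [← hA₂inv x, AffineEquiv.symm_apply_apply, hA₂inv x]
      have hA₂lat : (A₂ : (Fin (m+1) → ℝ) → (Fin (m+1) → ℝ)) '' intLat (m+1)
          = intLat (m+1) := by
        apply TwoProj.img_lat
        · intro x hx
          rw [hA₂app]
          exact TwoProj.intLat_add (TwoProj.intLat_single _) (TwoProj.nMap_lat hx)
        · intro x hx
          rw [hA₂symm]
          exact TwoProj.nMap_lat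
            (TwoProj.intLat_add (TwoProj.intLat_neg (TwoProj.intLat_single _)) hx)
      have hA0 : A₂ 0 = Pi.single i₁.castSucc 1 := by
        rw [hA₂app, map_zero, add_zero]
      have hAa : A₂ (Pi.single i₁.castSucc 1) = 0 := by
        rw [hA₂app, TwoProj.nMap_single_self ha]
        abel
      have hAc : ∀ i : Fin m, i ≠ i₁ → A₂ (Pi.single i.castSucc 1) = Pi.single i.castSucc 1 := by
        intro i hi
        rw [hA₂app, TwoProj.nMap_single_other ha (Fin.castSucc_lt_last i).ne
          (fun h => hi (Fin.castSucc_injective m h))]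
        abel
      have hAta : A₂ (Pi.single i₁.castSucc 1 + Pi.single (Fin.last m) 1)
          = Pi.single (Fin.last m) 1 := by
        rw [hA₂app, map_add, TwoProj.nMap_single_self ha, TwoProj.nMap_single_last ha]
        abel
      have hAtb : A₂ (Pi.single i₂.castSucc 1 + Pi.single (Fin.last m) 1)
          = Pi.single i₂.castSucc 1 + Pi.single (Fin.last m) 1 := by
        rw [hA₂app, map_add, TwoProj.nMap_single_last ha,
          TwoProj.nMap_single_other ha (Fin.castSucc_lt_last i₂).ne
            (fun h => hi12 (Fin.castSucc_injective m h).symm)]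
        abel
      have hAB : (A₂ : (Fin (m+1) → ℝ) → (Fin (m+1) → ℝ))
          '' (insert 0 (Set.range fun i : Fin m => (Pi.single i.castSucc 1 : Fin (m+1) → ℝ)))
          = insert 0 (Set.range fun i : Fin m => (Pi.single i.castSucc 1 : Fin (m+1) → ℝ)) := by
        ext y
        constructor
        · rintro ⟨x, hx, rfl⟩
          rcases hx with rfl | ⟨i, rfl⟩
          · rw [hA0]
            exact Set.mem_insert_of_mem _ ⟨i₁, rfl⟩
          · by_cases hia : i = i₁
            · subst hia
              rw [hAa]
              exact Set.mem_insert 0 _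
            · rw [hAc i hia]
              exact Set.mem_insert_of_mem _ ⟨i, rfl⟩
        · intro hy
          rcases hy with rfl | ⟨i, rfl⟩
          · exact ⟨Pi.single i₁.castSucc 1, Set.mem_insert_of_mem _ ⟨i₁, rfl⟩, hAa⟩
          · by_cases hia : i = i₁
            · subst hia
              exact ⟨0, Set.mem_insert 0 _, hA0⟩
            · exact ⟨Pi.single i.castSucc 1, Set.mem_insert_of_mem _ ⟨i, rfl⟩, hAc i hia⟩
      apply TwoProj.perm_finish hn hb _ (T₁.trans A₂) ?_
      · -- image identity
        rw [AffineEquiv.coe_trans, Set.image_comp, himgV]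
        rw [Set.image_union, Set.image_pair, hAB, hAta, hAtb]
        rw [TwoProj.pair_split, TwoProj.union_sl_eq]
      · rw [AffineEquiv.coe_trans, Set.image_comp, hT₁lat, hA₂lat]
end
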